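/- arXiv:2308.11540 — 9 statements merged into one kernel-verified Lean document; each statement's English description precedes it below -/
import Mathlib

section
/- For all integers n > d ≥ 1, n^d / binom(n, d) ≤ (d+1)^{d-1}. -/
lemma bern_aux (n d : ℕ) : ((n:ℝ) + 1 - d) * ((n:ℝ) + 1) ^ d ≤ ((n:ℝ) + 1) * (n:ℝ) ^ d := by
  have hn1 : (0:ℝ) < (n:ℝ) + 1 := by positivity
  have h1 : (1:ℝ) + d * (-(1/((n:ℝ)+1))) ≤ (1 + (-(1/((n:ℝ)+1)))) ^ d := by
    apply one_add_mul_le_pow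
    have : (1:ℝ)/((n:ℝ)+1) ≤ 1 := by
      rw [div_le_one hn1]; linarith
    linarith
  have h2 : (1:ℝ) + (-(1/((n:ℝ)+1))) = (n:ℝ)/((n:ℝ)+1) := by field_simp; ring
  rw [h2] at h1
  have h3 : ((n:ℝ)/((n:ℝ)+1))^d = (n:ℝ)^d / ((n:ℝ)+1)^d := div_pow _ _ _
  rw [h3] at h1
  have hpow : (0:ℝ) < ((n:ℝ)+1)^d := by positivity
  have := mul_le_mul_of_nonneg_right h1 (le_of_lt (mul_pos hpow hn1))
  calc ((n:ℝ) + 1 - d) * ((n:ℝ) + 1) ^ d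
      = (1 + ↑d * -(1 / ((n:ℝ) + 1))) * (((n:ℝ)+1)^d * ((n:ℝ)+1)) := by
        field_simp; ring
    _ ≤ ((n:ℝ)^d / ((n:ℝ)+1)^d) * (((n:ℝ)+1)^d * ((n:ℝ)+1)) := this
    _ = ((n:ℝ) + 1) * (n:ℝ) ^ d := by field_simp

lemma main_aux (d : ℕ) (hd : 1 ≤ d) : ∀ n, d + 1 ≤ n →
    (n:ℝ) ^ d * ((d:ℝ) + 1) ≤ ((d:ℝ) + 1) ^ d * (n.choose d : ℝ) := by
  intro n hn
  induction n, hn using Nat.le_induction with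
  | base =>
    rw [Nat.choose_succ_self_right]
    push_cast
    rw [mul_comm]
  | succ n hn ih =>
    have hdn : d ≤ n := by omega
    have hC : (n.choose d : ℝ) * ((n:ℝ) + 1) = ((n+1).choose d : ℝ) * ((n:ℝ) + 1 - d) := by
      have h := Nat.choose_mul_succ_eq n d
      have h2 : ((n.choose d * (n+1) : ℕ) : ℝ) = (((n+1).choose d * (n+1-d) : ℕ) : ℝ) := by
        rw [h]
      push_cast at h2
      rw [Nat.cast_sub (show d ≤ n+1 by omega)] at h2
      push_cast at h2
      push_cast
      linarith
    have hb := bern_aux n d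
    have hpos : (0:ℝ) < (n:ℝ) + 1 - d := by
      have : (d:ℝ) ≤ n := by exact_mod_cast hdn
      linarith
    have hd1 : (0:ℝ) ≤ (d:ℝ) + 1 := by positivity
    -- multiply goal by (n+1-d) > 0
    rw [← mul_le_mul_iff_left₀ hpos]
    push_cast
    calc ((n:ℝ)+1)^d * ((d:ℝ)+1) * ((n:ℝ)+1-d)
        = (((n:ℝ)+1-d) * ((n:ℝ)+1)^d) * ((d:ℝ)+1) := by ring
      _ ≤ (((n:ℝ)+1) * (n:ℝ)^d) * ((d:ℝ)+1) := by
          exact mul_le_mul_of_nonneg_right hb hd1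
      _ = ((n:ℝ)^d * ((d:ℝ)+1)) * ((n:ℝ)+1) := by ring
      _ ≤ (((d:ℝ)+1)^d * (n.choose d : ℝ)) * ((n:ℝ)+1) := by
          apply mul_le_mul_of_nonneg_right ih; positivity
      _ = ((d:ℝ)+1)^d * ((n.choose d : ℝ) * ((n:ℝ)+1)) := by ring
      _ = ((d:ℝ)+1)^d * (((n+1).choose d : ℝ)) * ((n:ℝ)+1-d) := by rw [hC]; ring

theorem stmt3 (n d : ℕ) (hd : 1 ≤ d) (hdn : d < n) :
    (n : ℝ) ^ d / (n.choose d : ℝ) ≤ (d + 1 : ℝ) ^ (d - 1) := by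
  have hchoose : 0 < n.choose d := Nat.choose_pos (le_of_lt hdn)
  have hC : (0:ℝ) < (n.choose d : ℝ) := by exact_mod_cast hchoose
  have hmain := main_aux d hd n hdn
  rw [div_le_iff₀ hC]
  have hpow : ((d:ℝ) + 1) ^ (d - 1) * ((d:ℝ) + 1) = ((d:ℝ) + 1) ^ d := by
    rw [← pow_succ]
    congr 1
    omega
  have hd1 : (0:ℝ) < (d:ℝ) + 1 := by positivity
  rw [← mul_le_mul_iff_left₀ hd1]
  calc (n:ℝ)^d * ((d:ℝ)+1) ≤ ((d:ℝ)+1)^d * (n.choose d : ℝ) := hmain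
    _ = ((d:ℝ)+1)^(d-1) * (n.choose d : ℝ) * ((d:ℝ)+1) := by rw [← hpow]; ring
end

section
/- Let X be a pure d-dimensional simplicial complex. Then f_0(X) ≤ f_d(X) + d·c̄(X), where f_k(X) is the number of k-simplices of X and c̄(X) is the number of strongly connected components of X. Moreover, equality holds if and only if every strongly connected component of X is a connected component that is a d-tree. -/
open Finset

/-- A (finite abstract) simplicial complex, represented by its finite set of faces,
which is closed under taking subsets. -/
def IsComplex {V : Type*} [DecidableEq V] (X : Finset (Finset V)) : Prop :=
  ∀ σ ∈ X, ∀ τ ⊆ σ, τ ∈ X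

/-- `X` is pure `d`-dimensional: every face is contained in a `d`-simplex
(a face with `d+1` vertices). -/
def IsPure {V : Type*} [DecidableEq V] (d : ℕ) (X : Finset (Finset V)) : Prop :=
  ∀ σ ∈ X, ∃ τ ∈ X, σ ⊆ τ ∧ τ.card = d + 1

/-- `fk k X` is the number of `k`-simplices (faces with `k+1` vertices) of `X`. -/
def fk {V : Type*} [DecidableEq V] (k : ℕ) (X : Finset (Finset V)) : ℕ :=
  (X.filter fun σ => σ.card = k + 1).card

/-- Two `(d-1)`-simplices are adjacent in `X` if their union is a `d`-simplex of `X`. -/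
def DAdj {V : Type*} [DecidableEq V] (d : ℕ) (X : Finset (Finset V))
    (σ σ' : Finset V) : Prop :=
  σ ∈ X ∧ σ' ∈ X ∧ σ.card = d ∧ σ'.card = d ∧ σ ∪ σ' ∈ X ∧ (σ ∪ σ').card = d + 1

/-- A pure `d`-dimensional complex is strongly connected if any two `(d-1)`-simplices
are joined by a chain of `(d-1)`-simplices with consecutive unions `d`-simplices of `X`. -/
def StronglyConnected {V : Type*} [DecidableEq V] (d : ℕ) (X : Finset (Finset V)) : Prop :=
  ∀ σ ∈ X, σ.card = d → ∀ σ' ∈ X, σ'.card = d →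
    Relation.ReflTransGen (DAdj d X) σ σ'

/-- A `d`-tree: built from a single `(d-1)`-simplex (the trivial `d`-tree) by repeatedly
attaching a `d`-simplex along an existing `(d-1)`-simplex together with one new vertex. -/
inductive IsDTree {V : Type*} [DecidableEq V] (d : ℕ) : Finset (Finset V) → Prop
  | trivial (σ : Finset V) (h : σ.card = d) : IsDTree d σ.powerset
  | step (X : Finset (Finset V)) (σ : Finset V) (v : V) (hX : IsDTree d X)
      (hσ : σ ∈ X) (hcard : σ.card = d) (hv : ∀ ρ ∈ X, v ∉ ρ) :
      IsDTree d (X ∪ (insert v σ).powerset)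


/-- A strongly connected component of `X`: an inclusionwise maximal strongly connected
pure `d`-dimensional subcomplex of `X`. -/
def IsSCComponent {V : Type*} [DecidableEq V] (d : ℕ) (X Y : Finset (Finset V)) : Prop :=
  Y ⊆ X ∧ IsComplex Y ∧ IsPure d Y ∧ StronglyConnected d Y ∧
    ∀ Z, Z ⊆ X → IsComplex Z → IsPure d Z → StronglyConnected d Z → Y ⊆ Z → Z = Y

/-- The number of strongly connected components of `X`. -/
noncomputable def numSCC {V : Type*} [DecidableEq V] (d : ℕ) (X : Finset (Finset V)) : ℕ :=
  {Y : Finset (Finset V) | IsSCComponent d X Y}.ncard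

/-- A complex is (vertex-)connected: any two vertices are joined by a path of edges. -/
def VertexConnected {V : Type*} [DecidableEq V] (X : Finset (Finset V)) : Prop :=
  ∀ u, ({u} : Finset V) ∈ X → ∀ v, ({v} : Finset V) ∈ X →
    Relation.ReflTransGen (fun a b => ({a, b} : Finset V) ∈ X) u v

/-- A connected component of `X`: an inclusionwise maximal connected subcomplex of `X`. -/
def IsConnComponent {V : Type*} [DecidableEq V] (X Y : Finset (Finset V)) : Prop :=
  Y ⊆ X ∧ IsComplex Y ∧ VertexConnected Y ∧
    ∀ Z, Z ⊆ X → IsComplex Z → VertexConnected Z → Y ⊆ Z → Z = Y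

section Aux
variable {V : Type*} [DecidableEq V]

/-- The vertex set of a complex. -/
def cverts (Y : Finset (Finset V)) : Finset V := Y.sup id

lemma mem_cverts {Y : Finset (Finset V)} {v : V} :
    v ∈ cverts Y ↔ ∃ ρ ∈ Y, v ∈ ρ := by
  simp [cverts, Finset.mem_sup]

lemma singleton_mem_iff {Y : Finset (Finset V)} (hY : IsComplex Y) {v : V} :
    ({v} : Finset V) ∈ Y ↔ v ∈ cverts Y := by
  constructor
  · intro h; exact mem_cverts.2 ⟨{v}, h, Finset.mem_singleton_self v⟩
  · intro h
    obtain ⟨ρ, hρ, hv⟩ := mem_cverts.1 h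
    exact hY ρ hρ {v} (Finset.singleton_subset_iff.2 hv)

lemma subset_cverts {Y : Finset (Finset V)} {ρ : Finset V} (h : ρ ∈ Y) : ρ ⊆ cverts Y :=
  fun v hv => mem_cverts.2 ⟨ρ, h, hv⟩

lemma fk_zero_eq {Y : Finset (Finset V)} (hY : IsComplex Y) :
    fk 0 Y = (cverts Y).card := by
  have himg : Y.filter (fun σ => σ.card = 0 + 1) = (cverts Y).image (fun v => ({v} : Finset V)) := by
    ext σ
    simp only [Finset.mem_filter, Finset.mem_image]
    constructor
    · rintro ⟨hσ, hc⟩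
      obtain ⟨v, rfl⟩ := Finset.card_eq_one.1 hc
      exact ⟨v, (singleton_mem_iff hY).1 hσ, rfl⟩
    · rintro ⟨v, hv, rfl⟩
      exact ⟨(singleton_mem_iff hY).2 hv, rfl⟩
  rw [fk, himg, Finset.card_image_of_injective]
  intro a b hab
  simpa using hab

lemma cverts_union {A B : Finset (Finset V)} : cverts (A ∪ B) = cverts A ∪ cverts B := by
  simp [cverts, Finset.sup_union]

lemma cverts_powerset {σ : Finset V} : cverts σ.powerset = σ := by
  ext v
  simp only [mem_cverts, Finset.mem_powerset]
  exact ⟨fun ⟨ρ, h1, h2⟩ => h1 h2, fun h => ⟨σ, subset_rfl, h⟩⟩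

lemma dtree_complex {d : ℕ} {Y : Finset (Finset V)} (h : IsDTree d Y) : IsComplex Y := by
  induction h with
  | @trivial σ h =>
      intro ρ hρ τ hτ
      exact Finset.mem_powerset.2 (hτ.trans (Finset.mem_powerset.1 hρ))
  | @step X σ v hX hσ hcard hv ih =>
      intro ρ hρ τ hτ
      rcases Finset.mem_union.1 hρ with h | h
      · exact Finset.mem_union_left _ (ih ρ h τ hτ)
      · exact Finset.mem_union_right _ (Finset.mem_powerset.2 (hτ.trans (Finset.mem_powerset.1 h)))

lemma dtree_count {d : ℕ} {Y : Finset (Finset V)} (h : IsDTree d Y) :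
    (cverts Y).card = fk d Y + d := by
  induction h with
  | @trivial σ hc =>
      rw [cverts_powerset, hc]
      have : (σ.powerset.filter fun ρ => ρ.card = d + 1) = ∅ := by
        apply Finset.filter_false_of_mem
        intro ρ hρ
        have := Finset.card_le_card (Finset.mem_powerset.1 hρ)
        omega
      rw [fk, this]
      simp
  | @step X σ v hX hσ hcard hv ih =>
      have hvσ : v ∉ σ := hv σ hσ
      have hvX : v ∉ cverts X := by
        intro hv'
        obtain ⟨ρ, hρ, hvρ⟩ := mem_cverts.1 hv'
        exact hv ρ hρ hvρ
      have hverts : cverts (X ∪ (insert v σ).powerset) = insert v (cverts X) := by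
        rw [cverts_union, cverts_powerset]
        have hσsub : σ ⊆ cverts X := subset_cverts hσ
        ext u
        simp only [Finset.mem_union, Finset.mem_insert]
        constructor
        · rintro (h | h | h)
          · exact Or.inr h
          · exact Or.inl h
          · exact Or.inr (hσsub h)
        · rintro (rfl | h)
          · exact Or.inr (Or.inl rfl)
          · exact Or.inl h
      have hfilter : ((X ∪ (insert v σ).powerset).filter fun ρ => ρ.card = d + 1)
          = (X.filter fun ρ => ρ.card = d + 1) ∪ {insert v σ} := by
        rw [Finset.filter_union]
        congr 1
        ext ρ
        simp only [Finset.mem_filter, Finset.mem_powerset, Finset.mem_singleton]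
        constructor
        · rintro ⟨h1, h2⟩
          apply Finset.eq_of_subset_of_card_le h1
          rw [h2, Finset.card_insert_of_notMem hvσ, hcard]
        · rintro rfl
          exact ⟨subset_rfl, by rw [Finset.card_insert_of_notMem hvσ, hcard]⟩
      have hnotmem : insert v σ ∉ X.filter fun ρ => ρ.card = d + 1 := by
        intro hmem
        exact hv _ (Finset.mem_filter.1 hmem).1 (Finset.mem_insert_self _ _)
      rw [fk, hfilter]
      rw [show (X.filter fun ρ => ρ.card = d + 1) ∪ {insert v σ} = insert (insert v σ) (X.filter fun ρ => ρ.card = d + 1) from by ext x; simp [or_comm], Finset.card_insert_of_notMem hnotmem]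
      rw [hverts, Finset.card_insert_of_notMem hvX]
      rw [fk] at ih
      omega

end Aux
section Build
variable {V : Type*} [DecidableEq V]

/-- A set of `d`-simplices buildable by repeatedly attaching along shared `(d-1)`-faces. -/
inductive Buildable (d : ℕ) : Finset (Finset V) → Prop
  | single (τ : Finset V) (h : τ.card = d + 1) : Buildable d {τ}
  | step (G : Finset (Finset V)) (τ τ' σ : Finset V) (hG : Buildable d G)
      (hτ' : τ' ∈ G) (hτG : τ ∉ G) (hτ : τ.card = d + 1)
      (hσ : σ.card = d) (h1 : σ ⊆ τ) (h2 : σ ⊆ τ') : Buildable d (insert τ G)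

lemma dtree_powerset {d : ℕ} {τ : Finset V} (h : τ.card = d + 1) :
    IsDTree d τ.powerset := by
  have hne : τ.Nonempty := Finset.card_pos.1 (by omega)
  obtain ⟨v, hv⟩ := hne
  have hσ : (τ.erase v).card = d := by
    rw [Finset.card_erase_of_mem hv, h]; omega
  have htree := IsDTree.step (τ.erase v).powerset (τ.erase v) v (IsDTree.trivial _ hσ)
    (Finset.mem_powerset.2 subset_rfl) hσ
    (fun ρ hρ hvρ => Finset.notMem_erase v τ (Finset.mem_powerset.1 hρ hvρ))
  have heq : (τ.erase v).powerset ∪ (insert v (τ.erase v)).powerset = τ.powerset := by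
    rw [Finset.insert_erase hv]
    apply Finset.union_eq_right.2
    exact Finset.powerset_mono.2 (Finset.erase_subset v τ)
  rwa [heq] at htree

lemma cverts_sup_powerset {G : Finset (Finset V)} :
    cverts (G.sup Finset.powerset) = G.sup id := by
  ext v
  simp only [mem_cverts, Finset.mem_sup, Finset.mem_powerset, id]
  constructor
  · rintro ⟨ρ, ⟨τ, hτ, hρτ⟩, hv⟩
    exact ⟨τ, hτ, hρτ hv⟩
  · rintro ⟨τ, hτ, hv⟩
    exact ⟨τ, ⟨τ, hτ, subset_rfl⟩, hv⟩

lemma buildable_key {d : ℕ} {G : Finset (Finset V)} (h : Buildable d G) :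
    (G.sup id).card ≤ d + G.card ∧
      ((G.sup id).card = d + G.card → IsDTree d (G.sup Finset.powerset)) := by
  induction h with
  | single τ hc =>
      constructor
      · simp [hc]
      · intro _
        simpa using dtree_powerset hc
  | step G τ τ' σ hG hτ' hτG hτ hσ h1 h2 ih =>
      obtain ⟨ih1, ih2⟩ := ih
      have hσW : σ ⊆ G.sup id := h2.trans (Finset.le_sup (f := id) hτ')
      have hsupid : (insert τ G).sup id = τ ∪ G.sup id := by
        rw [Finset.sup_insert]; rfl
      have hcardG' : (insert τ G).card = G.card + 1 := Finset.card_insert_of_notMem hτG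
      have hτdiff : τ \ G.sup id ⊆ τ \ σ := Finset.sdiff_subset_sdiff subset_rfl hσW
      have hτσcard : (τ \ σ).card = 1 := by
        rw [Finset.card_sdiff_of_subset h1, hτ, hσ]; omega
      have hkey : (τ ∪ G.sup id).card ≤ (G.sup id).card + 1 := by
        have h3 : τ ∪ G.sup id = G.sup id ∪ (τ \ G.sup id) := by
          rw [Finset.union_comm]; exact (Finset.union_sdiff_self_eq_union).symm
        rw [h3]
        calc (G.sup id ∪ (τ \ G.sup id)).card ≤ (G.sup id).card + (τ \ G.sup id).card :=
              Finset.card_union_le _ _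
          _ ≤ (G.sup id).card + (τ \ σ).card := by
              have := Finset.card_le_card hτdiff; omega
          _ = (G.sup id).card + 1 := by rw [hτσcard]
      constructor
      · rw [hsupid, hcardG']; omega
      · intro heq
        rw [hsupid, hcardG'] at heq
        -- forces the old count to be exactly d + G.card
        have hub : (G.sup id).card = d + G.card := by
          have hle : (G.sup id).card ≤ (τ ∪ G.sup id).card :=
            Finset.card_le_card Finset.subset_union_right
          omega
        have htree := ih2 hub
        -- exactly one new vertex
        have hdiffne : (τ \ G.sup id).Nonempty := by
          rw [← Finset.card_pos]
          by_contra hcon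
          have h0 : (τ \ G.sup id).card = 0 := by omega
          have : τ ⊆ G.sup id :=
            Finset.sdiff_eq_empty_iff_subset.1 (Finset.card_eq_zero.1 h0)
          have : τ ∪ G.sup id = G.sup id := Finset.union_eq_right.2 this
          rw [this] at heq; omega
        obtain ⟨v, hv⟩ := hdiffne
        have hvτ : v ∈ τ := (Finset.mem_sdiff.1 hv).1
        have hvW : v ∉ G.sup id := (Finset.mem_sdiff.1 hv).2
        -- τ \ σ = {v}
        have hτσ : τ \ σ = {v} :=
          (Finset.eq_of_subset_of_card_le (Finset.singleton_subset_iff.2 (hτdiff hv))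
            (by rw [hτσcard]; simp)).symm
        have hvσ : v ∉ σ := fun hc => by
          have := Finset.mem_sdiff.1 (hτσ ▸ Finset.mem_singleton_self v)
          exact this.2 hc
        have hτeq : τ = insert v σ := by
          apply Finset.Subset.antisymm
          · intro x hx
            by_cases hxσ : x ∈ σ
            · exact Finset.mem_insert_of_mem hxσ
            · have : x ∈ τ \ σ := Finset.mem_sdiff.2 ⟨hx, hxσ⟩
              rw [hτσ, Finset.mem_singleton] at this
              exact this ▸ Finset.mem_insert_self _ _
          · intro x hx
            rcases Finset.mem_insert.1 hx with rfl | hx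
            · exact hvτ
            · exact h1 hx
        have hσY : σ ∈ G.sup Finset.powerset := by
          rw [Finset.mem_sup]
          exact ⟨τ', hτ', Finset.mem_powerset.2 h2⟩
        have hvY : ∀ ρ ∈ G.sup Finset.powerset, v ∉ ρ := by
          intro ρ hρ hvρ
          apply hvW
          have := subset_cverts hρ hvρ
          rwa [cverts_sup_powerset] at this
        have htree' := IsDTree.step _ σ v htree hσY hσ hvY
        have : (insert τ G).sup Finset.powerset = G.sup Finset.powerset ∪ (insert v σ).powerset := by
          rw [Finset.sup_insert, hτeq]
          exact Finset.union_comm _ _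
        rwa [this]

end Build
section Component
variable {V : Type*} [DecidableEq V]

lemma buildable_nonempty {d : ℕ} {G : Finset (Finset V)} (h : Buildable d G) : G.Nonempty := by
  induction h with
  | single τ h => exact ⟨τ, Finset.mem_singleton_self τ⟩
  | step G τ τ' σ hG hτ' hτG hτ hσ h1 h2 ih => exact ⟨τ, Finset.mem_insert_self _ _⟩

lemma buildable_card {d : ℕ} {G : Finset (Finset V)} (h : Buildable d G) :
    ∀ τ ∈ G, τ.card = d + 1 := by
  induction h with
  | single τ h => intro ρ hρ; rwa [Finset.mem_singleton.1 hρ]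
  | step G τ τ' σ hG hτ' hτG hτ hσ h1 h2 ih =>
      intro ρ hρ
      rcases Finset.mem_insert.1 hρ with rfl | hρ
      · exact hτ
      · exact ih ρ hρ

lemma exists_attach {d : ℕ} {Y : Finset (Finset V)} (hc : IsComplex Y)
    (hsc : StronglyConnected d Y) {G : Finset (Finset V)}
    (hGF : G ⊆ Y.filter fun ρ => ρ.card = d + 1) (hGne : G.Nonempty)
    (hne : G ≠ Y.filter fun ρ => ρ.card = d + 1) :
    ∃ τ ∈ Y.filter fun ρ => ρ.card = d + 1, τ ∉ G ∧
      ∃ τ' ∈ G, ∃ σ : Finset V, σ.card = d ∧ σ ⊆ τ ∧ σ ⊆ τ' := by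
  set F := Y.filter fun ρ => ρ.card = d + 1 with hF
  obtain ⟨τ, hτF, hτG⟩ : ∃ τ ∈ F, τ ∉ G := by
    by_contra hcon
    push_neg at hcon
    exact hne (Finset.Subset.antisymm hGF hcon)
  obtain ⟨τ'', hτ''⟩ := hGne
  have hτY : τ ∈ Y := (Finset.mem_filter.1 hτF).1
  have hτcard : τ.card = d + 1 := (Finset.mem_filter.1 hτF).2
  have hτ''Y : τ'' ∈ Y := (Finset.mem_filter.1 (hGF hτ'')).1
  have hτ''card : τ''.card = d + 1 := (Finset.mem_filter.1 (hGF hτ'')).2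
  obtain ⟨σ₁, hσ₁sub, hσ₁card⟩ := Finset.exists_subset_card_eq (show d ≤ τ.card by omega)
  obtain ⟨σ₀, hσ₀sub, hσ₀card⟩ := Finset.exists_subset_card_eq (show d ≤ τ''.card by omega)
  have hσ₁Y : σ₁ ∈ Y := hc τ hτY σ₁ hσ₁sub
  have hσ₀Y : σ₀ ∈ Y := hc τ'' hτ''Y σ₀ hσ₀sub
  have hpath := hsc σ₀ hσ₀Y hσ₀card σ₁ hσ₁Y hσ₁card
  -- head induction with invariant "current simplex lies in a member of G"
  have main : ∀ a : Finset V, Relation.ReflTransGen (DAdj d Y) a σ₁ →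
      (∃ τ₂ ∈ G, a ⊆ τ₂) →
      ∃ τ₃ ∈ F, τ₃ ∉ G ∧ ∃ τ' ∈ G, ∃ σ : Finset V, σ.card = d ∧ σ ⊆ τ₃ ∧ σ ⊆ τ' := by
    intro a hpath
    induction hpath using Relation.ReflTransGen.head_induction_on with
    | refl =>
        rintro ⟨τ₂, hτ₂, hsub⟩
        exact ⟨τ, hτF, hτG, τ₂, hτ₂, σ₁, hσ₁card, hσ₁sub, hsub⟩
    | head hadj hrest ih =>
        rename_i x y
        rintro ⟨τ₂, hτ₂, hsub⟩
        obtain ⟨hxY, hyY, hxc, hyc, huY, huc⟩ := hadj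
        have huF : x ∪ y ∈ F := Finset.mem_filter.2 ⟨huY, huc⟩
        by_cases huG : x ∪ y ∈ G
        · exact ih ⟨x ∪ y, huG, Finset.subset_union_right⟩
        · exact ⟨x ∪ y, huF, huG, τ₂, hτ₂, x, hxc, Finset.subset_union_left, hsub⟩
  exact main σ₀ hpath ⟨τ'', hτ'', hσ₀sub⟩

lemma buildable_facets {d : ℕ} {Y : Finset (Finset V)} (hc : IsComplex Y)
    (hsc : StronglyConnected d Y)
    {G : Finset (Finset V)} (hG : Buildable d G)
    (hGF : G ⊆ Y.filter fun ρ => ρ.card = d + 1) :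
    Buildable d (Y.filter fun ρ => ρ.card = d + 1) := by
  set F := Y.filter fun ρ => ρ.card = d + 1 with hF
  by_cases hne : G = F
  · exact hne ▸ hG
  · obtain ⟨τ, hτF, hτG, τ', hτ', σ, hσc, hσ1, hσ2⟩ :=
      exists_attach hc hsc hGF (buildable_nonempty hG) hne
    have hG' : Buildable d (insert τ G) :=
      Buildable.step G τ τ' σ hG hτ' hτG (Finset.mem_filter.1 hτF).2 hσc hσ1 hσ2
    have hsub' : insert τ G ⊆ F := Finset.insert_subset hτF hGF
    have hdec : (F \ insert τ G).card < (F \ G).card := by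
      apply Finset.card_lt_card
      constructor
      · intro x hx
        rw [Finset.mem_sdiff] at *
        exact ⟨hx.1, fun hc' => hx.2 (Finset.mem_insert_of_mem hc')⟩
      · intro hcon
        have : τ ∈ F \ G := Finset.mem_sdiff.2 ⟨hτF, hτG⟩
        have := hcon this
        rw [Finset.mem_sdiff] at this
        exact this.2 (Finset.mem_insert_self _ _)
    exact buildable_facets hc hsc hG' hsub'
termination_by ((Y.filter fun ρ => ρ.card = d + 1) \ G).card

lemma facets_generate {d : ℕ} {Y : Finset (Finset V)} (hc : IsComplex Y) (hp : IsPure d Y) :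
    Y = (Y.filter fun ρ => ρ.card = d + 1).sup Finset.powerset := by
  apply Finset.Subset.antisymm
  · intro ρ hρ
    obtain ⟨τ, hτY, hsub, hcard⟩ := hp ρ hρ
    rw [Finset.mem_sup]
    exact ⟨τ, Finset.mem_filter.2 ⟨hτY, hcard⟩, Finset.mem_powerset.2 hsub⟩
  · intro ρ hρ
    rw [Finset.mem_sup] at hρ
    obtain ⟨τ, hτ, hρτ⟩ := hρ
    exact hc τ (Finset.mem_filter.1 hτ).1 ρ (Finset.mem_powerset.1 hρτ)

/-- The key per-component counting lemma. -/
lemma scc_count {d : ℕ} {Y : Finset (Finset V)} (hne : Y.Nonempty) (hc : IsComplex Y)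
    (hp : IsPure d Y) (hsc : StronglyConnected d Y) :
    fk 0 Y ≤ fk d Y + d ∧ (fk 0 Y = fk d Y + d ↔ IsDTree d Y) := by
  set F := Y.filter fun ρ => ρ.card = d + 1 with hF
  have hFne : F.Nonempty := by
    obtain ⟨ρ, hρ⟩ := hne
    obtain ⟨τ, hτY, _, hcard⟩ := hp ρ hρ
    exact ⟨τ, Finset.mem_filter.2 ⟨hτY, hcard⟩⟩
  obtain ⟨τ₀, hτ₀⟩ := hFne
  have hbuild : Buildable d F :=
    buildable_facets hc hsc (Buildable.single τ₀ (Finset.mem_filter.1 hτ₀).2)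
      (Finset.singleton_subset_iff.2 hτ₀)
  have hgen : Y = F.sup Finset.powerset := facets_generate hc hp
  have hfk0 : fk 0 Y = (F.sup id).card := by
    rw [fk_zero_eq hc, hgen, cverts_sup_powerset]
  have hfkd : fk d Y = F.card := rfl
  obtain ⟨hle, heq⟩ := buildable_key hbuild
  refine ⟨by omega, ?_, ?_⟩
  · intro h
    rw [← hgen] at heq
    exact heq (by omega)
  · intro htree
    have := dtree_count htree
    rw [fk_zero_eq hc]
    omega

end Component
section SCC
variable {V : Type*} [DecidableEq V]

lemma powerset_props {d : ℕ} {τ : Finset V} (hcard : τ.card = d + 1) :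
    IsComplex (τ.powerset : Finset (Finset V)) ∧ IsPure d τ.powerset ∧
      StronglyConnected d τ.powerset := by
  refine ⟨?_, ?_, ?_⟩
  · intro σ hσ ρ hρ
    exact Finset.mem_powerset.2 (hρ.trans (Finset.mem_powerset.1 hσ))
  · intro σ hσ
    exact ⟨τ, Finset.mem_powerset.2 subset_rfl, Finset.mem_powerset.1 hσ, hcard⟩
  · intro σ hσ hc σ' hσ' hc'
    by_cases heq : σ = σ'
    · exact heq ▸ Relation.ReflTransGen.refl
    · apply Relation.ReflTransGen.single
      have hsub : σ ∪ σ' ⊆ τ :=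
        Finset.union_subset (Finset.mem_powerset.1 hσ) (Finset.mem_powerset.1 hσ')
      have h1 : (σ ∪ σ').card ≤ d + 1 := hcard ▸ Finset.card_le_card hsub
      have h2 : d ≤ (σ ∪ σ').card := hc ▸ Finset.card_le_card Finset.subset_union_left
      have hne : (σ ∪ σ').card ≠ d := by
        intro hd'
        have e1 : σ = σ ∪ σ' :=
          Finset.eq_of_subset_of_card_le Finset.subset_union_left (by omega)
        have e2 : σ' = σ ∪ σ' :=
          Finset.eq_of_subset_of_card_le Finset.subset_union_right (by omega)
        exact heq (e1.trans e2.symm)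
      have hu : (σ ∪ σ').card = d + 1 := by omega
      exact ⟨Finset.mem_powerset.1 hσ |> fun h => Finset.mem_powerset.2 h,
        hσ', hc, hc', Finset.mem_powerset.2 hsub, hu⟩

lemma exists_scc_containing {d : ℕ} {X : Finset (Finset V)} (hXc : IsComplex X)
    {τ : Finset V} (hτ : τ ∈ X) (hcard : τ.card = d + 1) :
    ∃ Y, IsSCComponent d X Y ∧ τ ∈ Y := by
  classical
  set S := X.powerset.filter
    (fun Z => IsComplex Z ∧ IsPure d Z ∧ StronglyConnected d Z ∧ τ ∈ Z) with hS
  have hpow : τ.powerset ∈ S := by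
    obtain ⟨h1, h2, h3⟩ := powerset_props hcard
    refine Finset.mem_filter.2 ⟨Finset.mem_powerset.2 ?_, h1, h2, h3,
      Finset.mem_powerset.2 subset_rfl⟩
    intro ρ hρ
    exact hXc τ hτ ρ (Finset.mem_powerset.1 hρ)
  obtain ⟨Y, hYS, hmax⟩ := S.exists_max_image Finset.card ⟨_, hpow⟩
  obtain ⟨hYX, hYc, hYp, hYsc, hτY⟩ := Finset.mem_filter.1 hYS
  refine ⟨Y, ⟨Finset.mem_powerset.1 hYX, hYc, hYp, hYsc, ?_⟩, hτY⟩
  intro Z hZX hZc hZp hZsc hYZ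
  have hZS : Z ∈ S :=
    Finset.mem_filter.2 ⟨Finset.mem_powerset.2 hZX, hZc, hZp, hZsc, hYZ hτY⟩
  exact (Finset.eq_of_subset_of_card_le hYZ (hmax Z hZS)).symm

lemma X_has_facet {d : ℕ} {X : Finset (Finset V)} (hXne : X.Nonempty)
    (hXpure : IsPure d X) : ∃ τ ∈ X, τ.card = d + 1 := by
  obtain ⟨σ, hσ⟩ := hXne
  obtain ⟨τ, hτ, _, hc⟩ := hXpure σ hσ
  exact ⟨τ, hτ, hc⟩

lemma scc_has_facet {d : ℕ} {X Y : Finset (Finset V)} (hXc : IsComplex X)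
    (hXne : X.Nonempty) (hXpure : IsPure d X) (hY : IsSCComponent d X Y) :
    ∃ τ ∈ Y, τ.card = d + 1 := by
  obtain ⟨hYX, hYc, hYp, hYsc, hYmax⟩ := hY
  rcases Finset.eq_empty_or_nonempty Y with rfl | hne
  · obtain ⟨τ, hτ, hc⟩ := X_has_facet hXne hXpure
    obtain ⟨h1, h2, h3⟩ := powerset_props hc
    have hsub : τ.powerset ⊆ X := fun ρ hρ => hXc τ hτ ρ (Finset.mem_powerset.1 hρ)
    have := hYmax τ.powerset hsub h1 h2 h3 (Finset.empty_subset _)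
    exact absurd (this ▸ Finset.mem_powerset.2 (subset_rfl : τ ⊆ τ))
      (Finset.notMem_empty τ)
  · obtain ⟨σ, hσ⟩ := hne
    obtain ⟨τ, hτ, _, hc⟩ := hYp σ hσ
    exact ⟨τ, hτ, hc⟩

lemma rtg_dadj_mono {d : ℕ} {Y Z : Finset (Finset V)} (h : Y ⊆ Z) {a b : Finset V}
    (hab : Relation.ReflTransGen (DAdj d Y) a b) :
    Relation.ReflTransGen (DAdj d Z) a b := by
  apply Relation.ReflTransGen.mono ?_ _ _ hab
  rintro x y ⟨h1, h2, h3, h4, h5, h6⟩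
  exact ⟨h h1, h h2, h3, h4, h h5, h6⟩

lemma sc_union {d : ℕ} {Y Z : Finset (Finset V)} (hYc : IsComplex Y) (hZc : IsComplex Z)
    (hYsc : StronglyConnected d Y) (hZsc : StronglyConnected d Z)
    {τ : Finset V} (hτY : τ ∈ Y) (hτZ : τ ∈ Z) (hcard : τ.card = d + 1) :
    StronglyConnected d (Y ∪ Z) := by
  obtain ⟨x, hx⟩ : τ.Nonempty := Finset.card_pos.1 (by omega)
  set σt := τ.erase x with hσt
  have hσtcard : σt.card = d := by rw [hσt, Finset.card_erase_of_mem hx, hcard]; omega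
  have hσtY : σt ∈ Y := hYc τ hτY σt (Finset.erase_subset x τ)
  have hσtZ : σt ∈ Z := hZc τ hτZ σt (Finset.erase_subset x τ)
  intro σ hσ hc σ' hσ' hc'
  have part1 : Relation.ReflTransGen (DAdj d (Y ∪ Z)) σ σt := by
    rcases Finset.mem_union.1 hσ with h | h
    · exact rtg_dadj_mono Finset.subset_union_left (hYsc σ h hc σt hσtY hσtcard)
    · exact rtg_dadj_mono Finset.subset_union_right (hZsc σ h hc σt hσtZ hσtcard)
  have part2 : Relation.ReflTransGen (DAdj d (Y ∪ Z)) σt σ' := by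
    rcases Finset.mem_union.1 hσ' with h | h
    · exact rtg_dadj_mono Finset.subset_union_left (hYsc σt hσtY hσtcard σ' h hc')
    · exact rtg_dadj_mono Finset.subset_union_right (hZsc σt hσtZ hσtcard σ' h hc')
  exact part1.trans part2

lemma complex_union {Y Z : Finset (Finset V)} (hY : IsComplex Y) (hZ : IsComplex Z) :
    IsComplex (Y ∪ Z) := by
  intro σ hσ ρ hρ
  rcases Finset.mem_union.1 hσ with h | h
  · exact Finset.mem_union_left _ (hY σ h ρ hρ)
  · exact Finset.mem_union_right _ (hZ σ h ρ hρ)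

lemma pure_union {d : ℕ} {Y Z : Finset (Finset V)} (hY : IsPure d Y) (hZ : IsPure d Z) :
    IsPure d (Y ∪ Z) := by
  intro σ hσ
  rcases Finset.mem_union.1 hσ with h | h
  · obtain ⟨τ, h1, h2, h3⟩ := hY σ h
    exact ⟨τ, Finset.mem_union_left _ h1, h2, h3⟩
  · obtain ⟨τ, h1, h2, h3⟩ := hZ σ h
    exact ⟨τ, Finset.mem_union_right _ h1, h2, h3⟩

lemma scc_unique {d : ℕ} {X Y Z : Finset (Finset V)}
    (hY : IsSCComponent d X Y) (hZ : IsSCComponent d X Z)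
    {τ : Finset V} (hτY : τ ∈ Y) (hτZ : τ ∈ Z) (hcard : τ.card = d + 1) : Y = Z := by
  obtain ⟨hYX, hYc, hYp, hYsc, hYmax⟩ := hY
  obtain ⟨hZX, hZc, hZp, hZsc, hZmax⟩ := hZ
  have hWsub : Y ∪ Z ⊆ X := Finset.union_subset hYX hZX
  have hWc := complex_union hYc hZc
  have hWp := pure_union hYp hZp
  have hWsc := sc_union hYc hZc hYsc hZsc hτY hτZ hcard
  have e1 := hYmax (Y ∪ Z) hWsub hWc hWp hWsc Finset.subset_union_left
  have e2 := hZmax (Y ∪ Z) hWsub hWc hWp hWsc Finset.subset_union_right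
  exact e1.symm.trans e2

lemma face_in_scc {d : ℕ} {X : Finset (Finset V)} (hXc : IsComplex X)
    (hXpure : IsPure d X) {ρ : Finset V} (hρ : ρ ∈ X) :
    ∃ Y, IsSCComponent d X Y ∧ ρ ∈ Y := by
  obtain ⟨τ, hτ, hsub, hcard⟩ := hXpure ρ hρ
  obtain ⟨Y, hY, hτY⟩ := exists_scc_containing hXc hτ hcard
  exact ⟨Y, hY, hY.2.1 τ hτY ρ hsub⟩

lemma vc_of_sc {d : ℕ} (hd : 1 ≤ d) {Y : Finset (Finset V)} (hc : IsComplex Y)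
    (hp : IsPure d Y) (hsc : StronglyConnected d Y) : VertexConnected Y := by
  have hstep : ∀ ρ ∈ Y, ∀ a ∈ ρ, ∀ b ∈ ρ,
      Relation.ReflTransGen (fun a b => ({a, b} : Finset V) ∈ Y) a b := by
    intro ρ hρ a ha b hb
    apply Relation.ReflTransGen.single
    exact hc ρ hρ {a, b} (Finset.insert_subset ha (Finset.singleton_subset_iff.2 hb))
  intro u hu v hv
  obtain ⟨τu, hτuY, huτu, hτucard⟩ := hp {u} hu
  obtain ⟨τv, hτvY, hvτv, hτvcard⟩ := hp {v} hv
  obtain ⟨σu, hσusub, hσucard⟩ := Finset.exists_subset_card_eq (show d ≤ τu.card by omega)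
  obtain ⟨σv, hσvsub, hσvcard⟩ := Finset.exists_subset_card_eq (show d ≤ τv.card by omega)
  have hσuY : σu ∈ Y := hc τu hτuY σu hσusub
  have hσvY : σv ∈ Y := hc τv hτvY σv hσvsub
  have hpath := hsc σu hσuY hσucard σv hσvY hσvcard
  -- all vertices along a DAdj-path are connected
  have claim : ∀ σ' : Finset V, Relation.ReflTransGen (DAdj d Y) σu σ' →
      ∀ x ∈ σu, ∀ y ∈ σ',
        Relation.ReflTransGen (fun a b => ({a, b} : Finset V) ∈ Y) x y := by
    intro σ' hσ'
    induction hσ' with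
    | refl => intro x hx y hy; exact hstep σu hσuY x hx y hy
    | tail hrest hadj ih =>
        rename_i b c
        intro x hx y hy
        obtain ⟨hbY, hcY, hbc, hcc, huY, huc⟩ := hadj
        obtain ⟨z, hz⟩ : b.Nonempty := Finset.card_pos.1 (by omega)
        refine (ih x hx z hz).trans ?_
        exact hstep (b ∪ c) huY z (Finset.mem_union_left _ hz) y (Finset.mem_union_right _ hy)
  obtain ⟨xu, hxu⟩ : σu.Nonempty := Finset.card_pos.1 (by omega)
  obtain ⟨xv, hxv⟩ : σv.Nonempty := Finset.card_pos.1 (by omega)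
  have h1 := hstep τu hτuY u (huτu (Finset.mem_singleton_self u)) xu (hσusub hxu)
  have h2 := claim σv hpath xu hxu xv hxv
  have h3 := hstep τv hτvY xv (hσvsub hxv) v (hvτv (Finset.mem_singleton_self v))
  exact (h1.trans h2).trans h3

end SCC
section Global
variable {V : Type*} [DecidableEq V]

lemma card_biUnion_lt_of_overlap {ι α : Type*} [DecidableEq α] [DecidableEq ι]
    {s : Finset ι} {t : ι → Finset α} {i j : ι} (hi : i ∈ s) (hj : j ∈ s) (hij : i ≠ j)
    {v : α} (hvi : v ∈ t i) (hvj : v ∈ t j) :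
    (s.biUnion t).card < ∑ k ∈ s, (t k).card := by
  set A := (s.erase j).biUnion t with hA
  have h1 : s.biUnion t = A ∪ t j := by
    ext x
    simp only [hA, Finset.mem_biUnion, Finset.mem_union, Finset.mem_erase]
    constructor
    · rintro ⟨k, hk, hx⟩
      by_cases hkj : k = j
      · exact Or.inr (hkj ▸ hx)
      · exact Or.inl ⟨k, ⟨hkj, hk⟩, hx⟩
    · rintro (⟨k, ⟨_, hk⟩, hx⟩ | hx)
      · exact ⟨k, hk, hx⟩
      · exact ⟨j, hj, hx⟩
  have h2 : (s.biUnion t).card = A.card + (t j \ A).card := by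
    rw [h1, ← Finset.union_sdiff_self_eq_union, Finset.card_union_of_disjoint Finset.disjoint_sdiff]
  have h3 : v ∈ A := Finset.mem_biUnion.2 ⟨i, Finset.mem_erase.2 ⟨hij, hi⟩, hvi⟩
  have h4 : t j \ A ⊆ (t j).erase v := by
    intro x hx
    rw [Finset.mem_sdiff] at hx
    refine Finset.mem_erase.2 ⟨?_, hx.1⟩
    rintro rfl
    exact hx.2 h3
  have h5 : (t j \ A).card ≤ (t j).card - 1 := by
    calc (t j \ A).card ≤ ((t j).erase v).card := Finset.card_le_card h4
      _ = (t j).card - 1 := Finset.card_erase_of_mem hvj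
  have h6 : A.card ≤ ∑ k ∈ s.erase j, (t k).card := Finset.card_biUnion_le
  have h7 : ∑ k ∈ s.erase j, (t k).card + (t j).card = ∑ k ∈ s, (t k).card :=
    Finset.sum_erase_add s _ hj
  have h8 : 1 ≤ (t j).card := Finset.card_pos.2 ⟨v, hvj⟩
  omega

lemma rtg_edge_mono {Y Z : Finset (Finset V)} (h : Y ⊆ Z) {a b : V}
    (hab : Relation.ReflTransGen (fun a b => ({a, b} : Finset V) ∈ Y) a b) :
    Relation.ReflTransGen (fun a b => ({a, b} : Finset V) ∈ Z) a b :=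
  Relation.ReflTransGen.mono (fun _ _ hxy => h hxy) _ _ hab

lemma vc_union {Y Z : Finset (Finset V)} (hY : VertexConnected Y) (hZ : VertexConnected Z)
    {v : V} (hvY : ({v} : Finset V) ∈ Y) (hvZ : ({v} : Finset V) ∈ Z) :
    VertexConnected (Y ∪ Z) := by
  intro u hu w hw
  have key : ∀ x, ({x} : Finset V) ∈ Y ∪ Z →
      Relation.ReflTransGen (fun a b => ({a, b} : Finset V) ∈ Y ∪ Z) x v := by
    intro x hx
    rcases Finset.mem_union.1 hx with h | h
    · exact rtg_edge_mono Finset.subset_union_left (hY x h v hvY)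
    · exact rtg_edge_mono Finset.subset_union_right (hZ x h v hvZ)
  have hsymm : Symmetric (fun a b => ({a, b} : Finset V) ∈ Y ∪ Z) := by
    intro a b hab
    rwa [Finset.pair_comm]
  exact (key u hu).trans (by haveI : Std.Symm (fun a b => ({a, b} : Finset V) ∈ Y ∪ Z) := ⟨hsymm⟩; exact Std.Symm.symm _ _ (key w hw))

end Global
/-- For a pure `d`-dimensional simplicial complex `X`,
`f₀(X) ≤ f_d(X) + d·c̄(X)`, with equality iff every strongly connected component of `X`
is a connected component of `X` that is a `d`-tree. -/
theorem stmt4 {V : Type*} [DecidableEq V] (d : ℕ) (hd : 1 ≤ d)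
    (X : Finset (Finset V)) (hXc : IsComplex X) (hXne : X.Nonempty)
    (hXpure : IsPure d X) :
    fk 0 X ≤ fk d X + d * numSCC d X ∧
    (fk 0 X = fk d X + d * numSCC d X ↔
      ∀ Y, IsSCComponent d X Y → IsConnComponent X Y ∧ IsDTree d Y) := by
  classical
  set Cf := X.powerset.filter (fun Y => IsSCComponent d X Y) with hCf
  have hmemCf : ∀ Y, Y ∈ Cf ↔ IsSCComponent d X Y := by
    intro Y
    constructor
    · intro h; exact (Finset.mem_filter.1 h).2
    · intro h; exact Finset.mem_filter.2 ⟨Finset.mem_powerset.2 h.1, h⟩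
  have hnum : numSCC d X = Cf.card := by
    have hset : {Y : Finset (Finset V) | IsSCComponent d X Y} = ↑Cf := by
      ext Y
      simp only [Set.mem_setOf_eq, Finset.coe_sort_coe, Finset.mem_coe, hmemCf]
    rw [numSCC, hset, Set.ncard_coe_finset]
  have hcount : ∀ Y ∈ Cf, fk 0 Y ≤ fk d Y + d ∧ (fk 0 Y = fk d Y + d ↔ IsDTree d Y) := by
    intro Y hY
    have hY' := (hmemCf Y).1 hY
    obtain ⟨τ, hτ, hc⟩ := scc_has_facet hXc hXne hXpure hY'
    exact scc_count ⟨τ, hτ⟩ hY'.2.1 hY'.2.2.1 hY'.2.2.2.1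
  have hfacets : X.filter (fun ρ => ρ.card = d + 1)
      = Cf.biUnion (fun Y => Y.filter (fun ρ => ρ.card = d + 1)) := by
    ext τ
    constructor
    · intro h
      obtain ⟨hτX, hc⟩ := Finset.mem_filter.1 h
      obtain ⟨Y, hY, hτY⟩ := exists_scc_containing hXc hτX hc
      exact Finset.mem_biUnion.2 ⟨Y, (hmemCf Y).2 hY, Finset.mem_filter.2 ⟨hτY, hc⟩⟩
    · intro h
      obtain ⟨Y, hY, hτ⟩ := Finset.mem_biUnion.1 h
      obtain ⟨h1, h2⟩ := Finset.mem_filter.1 hτ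
      exact Finset.mem_filter.2 ⟨((hmemCf Y).1 hY).1 h1, h2⟩
  have hdisjF : ∀ Y ∈ Cf, ∀ Z ∈ Cf, Y ≠ Z →
      Disjoint (Y.filter (fun ρ => ρ.card = d + 1)) (Z.filter (fun ρ => ρ.card = d + 1)) := by
    intro Y hY Z hZ hne
    rw [Finset.disjoint_left]
    intro τ h1 h2
    obtain ⟨h1a, h1b⟩ := Finset.mem_filter.1 h1
    obtain ⟨h2a, _⟩ := Finset.mem_filter.1 h2
    exact hne (scc_unique ((hmemCf Y).1 hY) ((hmemCf Z).1 hZ) h1a h2a h1b)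
  have hfkd : fk d X = ∑ Y ∈ Cf, fk d Y := by
    rw [fk, hfacets, Finset.card_biUnion hdisjF]
    rfl
  have hverts : cverts X = Cf.biUnion cverts := by
    ext v
    constructor
    · intro hv
      obtain ⟨ρ, hρ, hvρ⟩ := mem_cverts.1 hv
      obtain ⟨Y, hY, hρY⟩ := face_in_scc hXc hXpure hρ
      exact Finset.mem_biUnion.2 ⟨Y, (hmemCf Y).2 hY, mem_cverts.2 ⟨ρ, hρY, hvρ⟩⟩
    · intro hv
      obtain ⟨Y, hY, hvY⟩ := Finset.mem_biUnion.1 hv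
      obtain ⟨ρ, hρ, hvρ⟩ := mem_cverts.1 hvY
      exact mem_cverts.2 ⟨ρ, ((hmemCf Y).1 hY).1 hρ, hvρ⟩
  have hfk0sum : fk 0 X = (Cf.biUnion cverts).card := by
    rw [fk_zero_eq hXc, hverts]
  have hcvY : ∀ Y ∈ Cf, (cverts Y).card = fk 0 Y := by
    intro Y hY
    exact (fk_zero_eq ((hmemCf Y).1 hY).2.1).symm
  have hsum_le : ∑ Y ∈ Cf, (cverts Y).card ≤ ∑ Y ∈ Cf, (fk d Y + d) := by
    apply Finset.sum_le_sum
    intro Y hY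
    rw [hcvY Y hY]
    exact (hcount Y hY).1
  have hRHS : fk d X + d * numSCC d X = ∑ Y ∈ Cf, (fk d Y + d) := by
    rw [hfkd, hnum, Finset.sum_add_distrib, Finset.sum_const, smul_eq_mul, mul_comm]
  have hbiUle : (Cf.biUnion cverts).card ≤ ∑ Y ∈ Cf, (cverts Y).card :=
    Finset.card_biUnion_le
  have hineq : fk 0 X ≤ fk d X + d * numSCC d X := by
    rw [hfk0sum, hRHS]
    omega
  refine ⟨hineq, ?_, ?_⟩
  · -- equality → components are conn components and d-trees
    intro h
    rw [hfk0sum, hRHS] at h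
    have e1 : ∑ Y ∈ Cf, (cverts Y).card = ∑ Y ∈ Cf, (fk d Y + d) := by omega
    have e2 : (Cf.biUnion cverts).card = ∑ Y ∈ Cf, (cverts Y).card := by omega
    have hterm : ∀ Y ∈ Cf, (cverts Y).card = fk d Y + d := by
      refine (Finset.sum_eq_sum_iff_of_le ?_).1 e1
      intro Y hY
      rw [hcvY Y hY]
      exact (hcount Y hY).1
    have htree : ∀ Y ∈ Cf, IsDTree d Y := by
      intro Y hY
      exact ((hcount Y hY).2).1 (by rw [← hcvY Y hY]; exact hterm Y hY)
    have hdisjV : ∀ Y ∈ Cf, ∀ Z ∈ Cf, Y ≠ Z → Disjoint (cverts Y) (cverts Z) := by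
      intro Y hY Z hZ hne
      by_contra hcon
      obtain ⟨v, hvY, hvZ⟩ := Finset.not_disjoint_iff.1 hcon
      exact absurd e2 (Nat.ne_of_lt (card_biUnion_lt_of_overlap hY hZ hne hvY hvZ))
    intro Y hYscc
    have hYCf : Y ∈ Cf := (hmemCf Y).2 hYscc
    obtain ⟨hYX, hYc, hYp, hYsc, hYmax⟩ := hYscc
    refine ⟨⟨hYX, hYc, vc_of_sc hd hYc hYp hYsc, ?_⟩, htree Y hYCf⟩
    intro Z hZX hZc hZvc hYZ
    obtain ⟨τ₀, hτ₀Y, hτ₀c⟩ := scc_has_facet hXc hXne hXpure ⟨hYX, hYc, hYp, hYsc, hYmax⟩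
    obtain ⟨u₀, hu₀⟩ : τ₀.Nonempty := Finset.card_pos.1 (by omega)
    have hu₀Y : ({u₀} : Finset V) ∈ Y := hYc τ₀ hτ₀Y {u₀} (Finset.singleton_subset_iff.2 hu₀)
    have hvertY : ∀ w, ({w} : Finset V) ∈ Z → ({w} : Finset V) ∈ Y := by
      intro w hw
      have hpath := hZvc u₀ (hYZ hu₀Y) w hw
      clear hw
      induction hpath with
      | refl => exact hu₀Y
      | tail hrest hedge ih =>
          rename_i b c
          obtain ⟨W, hWscc, hbcW⟩ := face_in_scc hXc hXpure (hZX hedge)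
          have hWCf : W ∈ Cf := (hmemCf W).2 hWscc
          by_cases hWY : W = Y
          · subst hWY
            exact hWscc.2.1 _ hbcW {c}
              (Finset.singleton_subset_iff.2 (Finset.mem_insert_of_mem (Finset.mem_singleton_self c)))
          · exfalso
            have hbW : b ∈ cverts W :=
              mem_cverts.2 ⟨{b, c}, hbcW, Finset.mem_insert_self b {c}⟩
            have hbY : b ∈ cverts Y := (singleton_mem_iff hYc).1 ih
            exact Finset.disjoint_left.1 (hdisjV W hWCf Y hYCf hWY) hbW hbY
    have hZY : Z ⊆ Y := by
      intro ρ hρ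
      rcases Finset.eq_empty_or_nonempty ρ with rfl | ⟨a, ha⟩
      · exact hYc τ₀ hτ₀Y ∅ (Finset.empty_subset _)
      · have haZ : ({a} : Finset V) ∈ Z := hZc ρ hρ {a} (Finset.singleton_subset_iff.2 ha)
        have haY := hvertY a haZ
        obtain ⟨W, hWscc, hρW⟩ := face_in_scc hXc hXpure (hZX hρ)
        have hWCf : W ∈ Cf := (hmemCf W).2 hWscc
        by_cases hWY : W = Y
        · exact hWY ▸ hρW
        · exfalso
          have haW : a ∈ cverts W := mem_cverts.2 ⟨ρ, hρW, ha⟩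
          have haY' : a ∈ cverts Y := (singleton_mem_iff hYc).1 haY
          exact Finset.disjoint_left.1 (hdisjV W hWCf Y hYCf hWY) haW haY'
    exact Finset.Subset.antisymm hZY hYZ
  · -- components conn & trees → equality
    intro hall
    have heqY : ∀ Y ∈ Cf, (cverts Y).card = fk d Y + d := by
      intro Y hY
      have h' := (hmemCf Y).1 hY
      have := ((hcount Y hY).2).2 (hall Y h').2
      rw [hcvY Y hY]
      exact this
    have hdisjV : ∀ Y ∈ Cf, ∀ Z ∈ Cf, Y ≠ Z → Disjoint (cverts Y) (cverts Z) := by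
      intro Y hY Z hZ hne
      rw [Finset.disjoint_left]
      intro v hvY hvZ
      have hYscc := (hmemCf Y).1 hY
      have hZscc := (hmemCf Z).1 hZ
      have hvy : ({v} : Finset V) ∈ Y := (singleton_mem_iff hYscc.2.1).2 hvY
      have hvz : ({v} : Finset V) ∈ Z := (singleton_mem_iff hZscc.2.1).2 hvZ
      have hYcc := (hall Y hYscc).1
      have hZcc := (hall Z hZscc).1
      have hWvc := vc_union hYcc.2.2.1 hZcc.2.2.1 hvy hvz
      have hWc := complex_union hYcc.2.1 hZcc.2.1
      have hWsub := Finset.union_subset hYcc.1 hZcc.1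
      have e1 := hYcc.2.2.2 (Y ∪ Z) hWsub hWc hWvc Finset.subset_union_left
      have e2 := hZcc.2.2.2 (Y ∪ Z) hWsub hWc hWvc Finset.subset_union_right
      exact hne (e1.symm.trans e2)
    have hcardU : (Cf.biUnion cverts).card = ∑ Y ∈ Cf, (cverts Y).card :=
      Finset.card_biUnion hdisjV
    rw [hfk0sum, hcardU, hRHS]
    exact Finset.sum_congr rfl heqY
end

section
/- For every integer n > d ≥ 1, the (d-1)-st adjacency matrix of the complete simplicial complex on n vertices has exactly two eigenvalues: n - d with multiplicity binom(n-1, d-1), and -d with multiplicity binom(n-1, d). -/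
open Finset Polynomial

/-- For a face `σ` of `τ` with `τ \ σ = {v_i}` where `v_i` is the `i`-th smallest element
of `τ`, `sgnFace τ σ = (-1)^i`. -/
def sgnFace {V : Type*} [LinearOrder V] (τ σ : Finset V) : ℤ :=
  (-1) ^ (τ.filter fun x => ∀ y ∈ τ \ σ, x < y).card

/-- The `(d-1)`-st adjacency matrix of the complete complex on `n` vertices: rows and
columns are indexed by `(d-1)`-simplices (`d`-element subsets of `Fin n`); the
`(σ, σ')`-entry is `sgn(σ,σ') = -sgn(σ∪σ', σ)·sgn(σ∪σ', σ')` if `σ ∪ σ'` is a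
`d`-simplex, and `0` otherwise. -/
def adjComplete (n d : ℕ) :
    Matrix {σ : Finset (Fin n) // σ.card = d} {σ : Finset (Fin n) // σ.card = d} ℝ :=
  fun σ σ' =>
    if (σ.1 ∪ σ'.1).card = d + 1 then
      ((-(sgnFace (σ.1 ∪ σ'.1) σ.1 * sgnFace (σ.1 ∪ σ'.1) σ'.1) : ℤ) : ℝ)
    else 0

open Matrix

variable {m : Type*} [Fintype m] [DecidableEq m]

lemma charpoly_similar (P Q B : Matrix m m ℝ) (h1 : P * Q = 1) (h2 : Q * P = 1) :
    (P * B * Q).charpoly = B.charpoly := by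
  have hmap : ∀ (M N : Matrix m m ℝ), (M * N).map (C : ℝ →+* ℝ[X]) = M.map C * N.map C := by
    intro M N; exact Matrix.map_mul
  have hQP : (Q.map (C : ℝ →+* ℝ[X])) * (P.map C) = 1 := by
    rw [← hmap, h2, Matrix.map_one _ (map_zero C) (map_one C)]
  have hPQ : (P.map (C : ℝ →+* ℝ[X])) * (Q.map C) = 1 := by
    rw [← hmap, h1, Matrix.map_one _ (map_zero C) (map_one C)]
  have key : charmatrix (P * B * Q) = P.map C * charmatrix B * Q.map C := by
    unfold charmatrix
    rw [RingHom.mapMatrix_apply, RingHom.mapMatrix_apply, Matrix.mul_sub, Matrix.sub_mul, hmap, hmap]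
    congr 1
    rw [← (Matrix.scalar_commute (X : ℝ[X]) (fun r => Commute.all _ _) (P.map C)).eq,
      Matrix.mul_assoc, hPQ, Matrix.mul_one]
  rw [Matrix.charpoly, key, det_mul, det_mul, mul_comm, ← mul_assoc, ← det_mul, hQP,
    det_one, one_mul, Matrix.charpoly]

lemma charpoly_diag (v : m → ℝ) : (Matrix.diagonal v).charpoly = ∏ i, (X - C (v i)) := by
  have h : charmatrix (Matrix.diagonal v) = Matrix.diagonal fun i => X - C (v i) := by
    ext i j
    by_cases h : i = j
    · subst h; simp [charmatrix_apply_eq]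
    · simp [charmatrix_apply_ne _ _ _ h, Matrix.diagonal_apply_ne _ h]
  rw [Matrix.charpoly, h, det_diagonal]

lemma herm_charpoly (A : Matrix m m ℝ) (hA : A.IsHermitian) :
    A.charpoly = ∏ i, (X - C (hA.eigenvalues i)) := by
  have hs := hA.spectral_theorem
  have hU1 : (hA.eigenvectorUnitary : Matrix m m ℝ) * (star (hA.eigenvectorUnitary : Matrix m m ℝ)) = 1 :=
    (Matrix.mem_unitaryGroup_iff).mp (hA.eigenvectorUnitary).2
  have hU2 : (star (hA.eigenvectorUnitary : Matrix m m ℝ)) * (hA.eigenvectorUnitary : Matrix m m ℝ) = 1 :=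
    (Matrix.mem_unitaryGroup_iff').mp (hA.eigenvectorUnitary).2
  have h := charpoly_similar (hA.eigenvectorUnitary : Matrix m m ℝ)
    (star (hA.eigenvectorUnitary : Matrix m m ℝ))
    (Matrix.diagonal (RCLike.ofReal ∘ hA.eigenvalues)) hU1 hU2
  rw [Unitary.conjStarAlgAut_apply] at hs
  rw [← hs] at h
  rw [h, show (RCLike.ofReal ∘ hA.eigenvalues : m → ℝ) = hA.eigenvalues by ext i; simp]
  exact charpoly_diag _

variable {V : Type*} [LinearOrder V] [DecidableEq V]

lemma sgnFace_insert (σ : Finset V) {b : V} (hb : b ∉ σ) :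
    sgnFace (insert b σ) σ = (-1) ^ (σ.filter (· < b)).card := by
  unfold sgnFace
  congr 1
  congr 1
  ext x
  simp only [Finset.mem_filter, Finset.mem_insert, Finset.mem_sdiff]
  constructor
  · rintro ⟨hx, h⟩
    have hxb : x < b := h b ⟨Or.inl rfl, hb⟩
    refine ⟨?_, hxb⟩
    rcases hx with h5 | h5
    · rw [h5] at hxb; exact absurd hxb (lt_irrefl b)
    · exact h5
  · rintro ⟨hx, hxb⟩
    refine ⟨Or.inr hx, ?_⟩
    rintro y ⟨hy1, hy2⟩
    rcases hy1 with h5 | h5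
    · rw [h5]; exact hxb
    · exact absurd h5 hy2

lemma sgnFace_mul_self (τ σ : Finset V) : sgnFace τ σ * sgnFace τ σ = 1 := by
  unfold sgnFace; rw [← mul_pow]; norm_num

lemma sign_pair (ρ : Finset V) {a b : V} (hab : a ≠ b) (ha : a ∉ ρ) (hb : b ∉ ρ) :
    sgnFace (insert a (insert b ρ)) (insert a ρ) * sgnFace (insert a ρ) ρ
      = -(sgnFace (insert a (insert b ρ)) (insert b ρ) * sgnFace (insert b ρ) ρ) := by
  rcases lt_or_gt_of_ne hab with h | h
  · -- a < b
    have hba : b ∉ insert a ρ := by simp [hab.symm, hb]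
    have hab' : a ∉ insert b ρ := by simp [hab, ha]
    have e1 : insert a (insert b ρ) = insert b (insert a ρ) := Finset.insert_comm a b ρ
    have s1 : sgnFace (insert a (insert b ρ)) (insert a ρ)
        = (-1) ^ (((insert a ρ).filter (· < b)).card) := by
      rw [e1]; exact sgnFace_insert _ hba
    have s2 : sgnFace (insert a ρ) ρ = (-1) ^ ((ρ.filter (· < a)).card) := sgnFace_insert _ ha
    have s3 : sgnFace (insert a (insert b ρ)) (insert b ρ)
        = (-1) ^ (((insert b ρ).filter (· < a)).card) := sgnFace_insert _ hab'
    have s4 : sgnFace (insert b ρ) ρ = (-1) ^ ((ρ.filter (· < b)).card) := sgnFace_insert _ hb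
    have c1 : ((insert a ρ).filter (· < b)).card = (ρ.filter (· < b)).card + 1 := by
      rw [Finset.filter_insert, if_pos h, Finset.card_insert_of_notMem]
      simp [ha]
    have c3 : ((insert b ρ).filter (· < a)).card = (ρ.filter (· < a)).card := by
      rw [Finset.filter_insert, if_neg (by exact not_lt.mpr h.le)]
    rw [s1, s2, s3, s4, c1, c3]
    ring
  · -- b < a : apply symmetric reasoning
    have hba : b ∉ insert a ρ := by simp [hab.symm, hb]
    have hab' : a ∉ insert b ρ := by simp [hab, ha]
    have e1 : insert a (insert b ρ) = insert b (insert a ρ) := Finset.insert_comm a b ρ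
    have s1 : sgnFace (insert a (insert b ρ)) (insert a ρ)
        = (-1) ^ (((insert a ρ).filter (· < b)).card) := by
      rw [e1]; exact sgnFace_insert _ hba
    have s2 : sgnFace (insert a ρ) ρ = (-1) ^ ((ρ.filter (· < a)).card) := sgnFace_insert _ ha
    have s3 : sgnFace (insert a (insert b ρ)) (insert b ρ)
        = (-1) ^ (((insert b ρ).filter (· < a)).card) := sgnFace_insert _ hab'
    have s4 : sgnFace (insert b ρ) ρ = (-1) ^ ((ρ.filter (· < b)).card) := sgnFace_insert _ hb
    have c1 : ((insert a ρ).filter (· < b)).card = (ρ.filter (· < b)).card := by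
      rw [Finset.filter_insert, if_neg (by exact not_lt.mpr h.le)]
    have c3 : ((insert b ρ).filter (· < a)).card = (ρ.filter (· < a)).card + 1 := by
      rw [Finset.filter_insert, if_pos h, Finset.card_insert_of_notMem]
      simp [hb]
    rw [s1, s2, s3, s4, c1, c3]
    ring

variable {n : ℕ}

lemma sum_cofaces {k : ℕ} (σ : Finset (Fin n)) (hσ : σ.card = k) (f : Finset (Fin n) → ℝ) :
    ∑ τ : {τ : Finset (Fin n) // τ.card = k + 1}, (if σ ⊆ τ.1 then f τ.1 else 0)
      = ∑ v ∈ σᶜ, f (insert v σ) := by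
  rw [← Finset.sum_filter]
  refine (Finset.sum_bij (fun v hv => (⟨insert v σ, ?_⟩ : {τ : Finset (Fin n) // τ.card = k + 1}))
    ?_ ?_ ?_ ?_).symm
  · rw [Finset.card_insert_of_notMem (Finset.mem_compl.mp hv), hσ]
  · intro v hv
    simp only [Finset.mem_filter, Finset.mem_univ, true_and]
    exact Finset.subset_insert v σ
  · intro v hv w hw h
    have h1 : v ∈ insert w σ := by
      rw [← Subtype.mk_eq_mk.mp h]; exact Finset.mem_insert_self v σ
    rcases Finset.mem_insert.mp h1 with h2 | h2
    · exact h2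
    · exact absurd h2 (Finset.mem_compl.mp hv)
  · intro τ hτ
    have hsub : σ ⊆ τ.1 := (Finset.mem_filter.mp hτ).2
    have hc : (τ.1 \ σ).card = 1 := by
      rw [Finset.card_sdiff_of_subset hsub, τ.2, hσ]; omega
    obtain ⟨v, hv⟩ := Finset.card_eq_one.mp hc
    have hvmem : v ∈ τ.1 \ σ := by rw [hv]; exact Finset.mem_singleton_self v
    refine ⟨v, Finset.mem_compl.mpr (Finset.mem_sdiff.mp hvmem).2, ?_⟩
    apply Subtype.ext
    show insert v σ = τ.1
    rw [Finset.insert_eq, ← hv, Finset.union_comm, Finset.union_sdiff_of_subset hsub]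
  · intro v hv; rfl

lemma sum_faces {k : ℕ} (σ : Finset (Fin n)) (hσ : σ.card = k + 1) (f : Finset (Fin n) → ℝ) :
    ∑ ρ : {ρ : Finset (Fin n) // ρ.card = k}, (if ρ.1 ⊆ σ then f ρ.1 else 0)
      = ∑ v ∈ σ, f (σ.erase v) := by
  rw [← Finset.sum_filter]
  refine (Finset.sum_bij (fun v hv => (⟨σ.erase v, ?_⟩ : {ρ : Finset (Fin n) // ρ.card = k}))
    ?_ ?_ ?_ ?_).symm
  · rw [Finset.card_erase_of_mem hv, hσ]; omega
  · intro v hv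
    simp only [Finset.mem_filter, Finset.mem_univ, true_and]
    exact Finset.erase_subset v σ
  · intro v hv w hw h
    have h1 : v ∉ σ.erase w := by
      rw [← Subtype.mk_eq_mk.mp h]; exact Finset.notMem_erase v σ
    by_contra hne
    exact h1 (Finset.mem_erase.mpr ⟨hne, hv⟩)
  · intro ρ hρ
    have hsub : ρ.1 ⊆ σ := (Finset.mem_filter.mp hρ).2
    have hc : (σ \ ρ.1).card = 1 := by
      rw [Finset.card_sdiff_of_subset hsub, ρ.2, hσ]; omega
    obtain ⟨v, hv⟩ := Finset.card_eq_one.mp hc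
    have hvmem : v ∈ σ \ ρ.1 := by rw [hv]; exact Finset.mem_singleton_self v
    refine ⟨v, (Finset.mem_sdiff.mp hvmem).1, ?_⟩
    apply Subtype.ext
    show σ.erase v = ρ.1
    rw [Finset.erase_eq, ← hv, Finset.sdiff_sdiff_self_left]
    exact Finset.inter_eq_right.mpr hsub
  · intro v hv; rfl

lemma sum_middle {k : ℕ} (ρ τ : Finset (Fin n)) (hρ : ρ.card = k) (hsub : ρ ⊆ τ)
    (f : Finset (Fin n) → ℝ) :
    ∑ σ : {σ : Finset (Fin n) // σ.card = k + 1}, (if ρ ⊆ σ.1 ∧ σ.1 ⊆ τ then f σ.1 else 0)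
      = ∑ v ∈ τ \ ρ, f (insert v ρ) := by
  rw [← Finset.sum_filter]
  refine (Finset.sum_bij (fun v hv => (⟨insert v ρ, ?_⟩ : {σ : Finset (Fin n) // σ.card = k + 1}))
    ?_ ?_ ?_ ?_).symm
  · rw [Finset.card_insert_of_notMem (Finset.mem_sdiff.mp hv).2, hρ]
  · intro v hv
    simp only [Finset.mem_filter, Finset.mem_univ, true_and]
    exact ⟨Finset.subset_insert v ρ,
      Finset.insert_subset (Finset.mem_sdiff.mp hv).1 hsub⟩
  · intro v hv w hw h
    have h1 : v ∈ insert w ρ := by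
      rw [← Subtype.mk_eq_mk.mp h]; exact Finset.mem_insert_self v ρ
    rcases Finset.mem_insert.mp h1 with h2 | h2
    · exact h2
    · exact absurd h2 (Finset.mem_sdiff.mp hv).2
  · intro s hs
    obtain ⟨hs1, hs2⟩ := (Finset.mem_filter.mp hs).2
    have hc : (s.1 \ ρ).card = 1 := by
      rw [Finset.card_sdiff_of_subset hs1, s.2, hρ]; omega
    obtain ⟨v, hv⟩ := Finset.card_eq_one.mp hc
    have hvmem : v ∈ s.1 \ ρ := by rw [hv]; exact Finset.mem_singleton_self v
    have hv1 := Finset.mem_sdiff.mp hvmem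
    refine ⟨v, Finset.mem_sdiff.mpr ⟨hs2 hv1.1, hv1.2⟩, ?_⟩
    apply Subtype.ext
    show insert v ρ = s.1
    rw [Finset.insert_eq, ← hv, Finset.union_comm, Finset.union_sdiff_of_subset hs1]
  · intro v hv; rfl

def bdryM (n k : ℕ) :
    Matrix {σ : Finset (Fin n) // σ.card = k} {τ : Finset (Fin n) // τ.card = k + 1} ℝ :=
  fun σ τ => if σ.1 ⊆ τ.1 then ((sgnFace τ.1 σ.1 : ℤ) : ℝ) else 0

lemma my_ite_mul_ite (P Q : Prop) [Decidable P] [Decidable Q] (a b : ℝ) :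
    (if P then a else 0) * (if Q then b else 0) = if P ∧ Q then a * b else 0 := by
  split_ifs with h1 h2 h3 <;> simp_all

lemma adj_eq_M (n e : ℕ) :
    adjComplete n (e + 1)
      = ((n : ℝ) - (e + 1)) • (1 : Matrix _ _ ℝ) - bdryM n (e + 1) * (bdryM n (e + 1))ᵀ := by
  ext σ σ'
  have hmul : (bdryM n (e + 1) * (bdryM n (e + 1))ᵀ) σ σ'
      = ∑ τ : {τ : Finset (Fin n) // τ.card = e + 1 + 1},
          (if σ.1 ⊆ τ.1 ∧ σ'.1 ⊆ τ.1 then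
            ((sgnFace τ.1 σ.1 * sgnFace τ.1 σ'.1 : ℤ) : ℝ) else 0) := by
    rw [Matrix.mul_apply]
    refine Finset.sum_congr rfl fun τ _ => ?_
    rw [Matrix.transpose_apply]
    unfold bdryM
    rw [my_ite_mul_ite]
    congr 1
    push_cast
    ring
  by_cases heq : σ = σ'
  · subst heq
    have hA : adjComplete n (e + 1) σ σ = 0 := by
      unfold adjComplete
      rw [if_neg]
      rw [Finset.union_self, σ.2]
      omega
    rw [hA, Matrix.sub_apply, Matrix.smul_apply, Matrix.one_apply_eq, hmul]
    have : ∀ τ : {τ : Finset (Fin n) // τ.card = e + 1 + 1},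
        (if σ.1 ⊆ τ.1 ∧ σ.1 ⊆ τ.1 then ((sgnFace τ.1 σ.1 * sgnFace τ.1 σ.1 : ℤ) : ℝ) else 0)
          = (if σ.1 ⊆ τ.1 then (1 : ℝ) else 0) := by
      intro τ
      by_cases h : σ.1 ⊆ τ.1
      · rw [if_pos ⟨h, h⟩, if_pos h, sgnFace_mul_self]; norm_num
      · rw [if_neg (fun hc => h hc.1), if_neg h]
    rw [Finset.sum_congr rfl (fun τ _ => this τ), sum_cofaces σ.1 σ.2 (fun _ => (1 : ℝ)),
      Finset.sum_const, Finset.card_compl, σ.2]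
    simp only [Fintype.card_fin, nsmul_eq_mul, mul_one, smul_eq_mul, mul_one]
    have hn : e + 1 ≤ n := by
      have := Finset.card_le_univ σ.1
      simpa [σ.2] using this
    rw [Nat.cast_sub hn]
    push_cast
    ring
  · have hne : σ.1 ≠ σ'.1 := fun h => heq (Subtype.ext h)
    have hunion : e + 1 + 1 ≤ (σ.1 ∪ σ'.1).card := by
      by_contra hlt
      push_neg at hlt
      have h1 : σ.1 ⊆ σ.1 ∪ σ'.1 := Finset.subset_union_left
      have h2 : σ'.1 ⊆ σ.1 ∪ σ'.1 := Finset.subset_union_right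
      have hc1 : (σ.1 ∪ σ'.1).card ≤ e + 1 := by omega
      have e1 : σ.1 = σ.1 ∪ σ'.1 := Finset.eq_of_subset_of_card_le h1 (by rw [σ.2]; omega)
      have e2 : σ'.1 = σ.1 ∪ σ'.1 := Finset.eq_of_subset_of_card_le h2 (by rw [σ'.2]; omega)
      exact hne (e1.trans e2.symm)
    rw [Matrix.sub_apply, Matrix.smul_apply, Matrix.one_apply_ne heq, smul_zero, hmul]
    by_cases hadj : (σ.1 ∪ σ'.1).card = e + 1 + 1
    · have hT : ∀ τ : {τ : Finset (Fin n) // τ.card = e + 1 + 1},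
          τ ≠ ⟨σ.1 ∪ σ'.1, hadj⟩ →
          (if σ.1 ⊆ τ.1 ∧ σ'.1 ⊆ τ.1 then
            ((sgnFace τ.1 σ.1 * sgnFace τ.1 σ'.1 : ℤ) : ℝ) else 0) = 0 := by
        intro τ hτ
        rw [if_neg]
        rintro ⟨h1, h2⟩
        have hsub : σ.1 ∪ σ'.1 ⊆ τ.1 := Finset.union_subset h1 h2
        have : σ.1 ∪ σ'.1 = τ.1 := Finset.eq_of_subset_of_card_le hsub (by rw [τ.2, hadj])
        exact hτ (Subtype.ext this.symm)
      rw [Finset.sum_eq_single_of_mem (⟨σ.1 ∪ σ'.1, hadj⟩ : {τ : Finset (Fin n) // τ.card = e + 1 + 1})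
        (Finset.mem_univ _) (fun τ _ hτ => hT τ hτ)]
      rw [if_pos ⟨Finset.subset_union_left, Finset.subset_union_right⟩]
      unfold adjComplete
      rw [if_pos hadj]
      push_cast
      ring
    · unfold adjComplete
      rw [if_neg hadj]
      have hz : (∑ τ : {τ : Finset (Fin n) // τ.card = e + 1 + 1},
          (if σ.1 ⊆ τ.1 ∧ σ'.1 ⊆ τ.1 then
            ((sgnFace τ.1 σ.1 * sgnFace τ.1 σ'.1 : ℤ) : ℝ) else 0)) = 0 := by
        refine Finset.sum_eq_zero fun τ _ => ?_
        rw [if_neg]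
        rintro ⟨h1, h2⟩
        have hsub : σ.1 ∪ σ'.1 ⊆ τ.1 := Finset.union_subset h1 h2
        have hle := Finset.card_le_card hsub
        rw [τ.2] at hle
        exact hadj (by omega)
      rw [hz]
      norm_num

lemma adj_eq_N (n e : ℕ) :
    adjComplete n (e + 1)
      = (bdryM n e)ᵀ * bdryM n e - (((e : ℝ) + 1)) • (1 : Matrix _ _ ℝ) := by
  ext σ σ'
  have hmul : ((bdryM n e)ᵀ * bdryM n e) σ σ'
      = ∑ ρ : {ρ : Finset (Fin n) // ρ.card = e},
          (if ρ.1 ⊆ σ.1 ∧ ρ.1 ⊆ σ'.1 then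
            ((sgnFace σ.1 ρ.1 * sgnFace σ'.1 ρ.1 : ℤ) : ℝ) else 0) := by
    rw [Matrix.mul_apply]
    refine Finset.sum_congr rfl fun ρ _ => ?_
    rw [Matrix.transpose_apply]
    unfold bdryM
    rw [my_ite_mul_ite]
    congr 1
    push_cast
    ring
  by_cases heq : σ = σ'
  · subst heq
    have hA : adjComplete n (e + 1) σ σ = 0 := by
      unfold adjComplete
      rw [if_neg]
      rw [Finset.union_self, σ.2]
      omega
    rw [hA, Matrix.sub_apply, Matrix.smul_apply, Matrix.one_apply_eq, hmul]
    have hptw : ∀ ρ : {ρ : Finset (Fin n) // ρ.card = e},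
        (if ρ.1 ⊆ σ.1 ∧ ρ.1 ⊆ σ.1 then ((sgnFace σ.1 ρ.1 * sgnFace σ.1 ρ.1 : ℤ) : ℝ) else 0)
          = (if ρ.1 ⊆ σ.1 then (1 : ℝ) else 0) := by
      intro ρ
      by_cases h : ρ.1 ⊆ σ.1
      · rw [if_pos ⟨h, h⟩, if_pos h, sgnFace_mul_self]; norm_num
      · rw [if_neg (fun hc => h hc.1), if_neg h]
    rw [Finset.sum_congr rfl (fun ρ _ => hptw ρ), sum_faces σ.1 σ.2 (fun _ => (1 : ℝ)),
      Finset.sum_const, σ.2]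
    simp only [nsmul_eq_mul, mul_one, smul_eq_mul, mul_one]
    push_cast
    ring
  · have hne : σ.1 ≠ σ'.1 := fun h => heq (Subtype.ext h)
    rw [Matrix.sub_apply, Matrix.smul_apply, Matrix.one_apply_ne heq, smul_zero, sub_zero, hmul]
    by_cases hadj : (σ.1 ∪ σ'.1).card = e + 1 + 1
    · -- adjacent case
      have hint : (σ.1 ∩ σ'.1).card = e := by
        have := Finset.card_union_add_card_inter σ.1 σ'.1
        rw [σ.2, σ'.2, hadj] at this
        omega
      set ρ₀ : Finset (Fin n) := σ.1 ∩ σ'.1 with hρ₀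
      -- extract a and b
      have hca : (σ.1 \ σ'.1).card = 1 := by
        have := Finset.card_inter_add_card_sdiff σ.1 σ'.1
        rw [σ.2, ← hρ₀, hint] at this
        omega
      have hcb : (σ'.1 \ σ.1).card = 1 := by
        have := Finset.card_inter_add_card_sdiff σ'.1 σ.1
        rw [σ'.2, Finset.inter_comm, ← hρ₀, hint] at this
        omega
      obtain ⟨a, hha⟩ := Finset.card_eq_one.mp hca
      obtain ⟨b, hhb⟩ := Finset.card_eq_one.mp hcb
      have hamem : a ∈ σ.1 \ σ'.1 := by rw [hha]; exact Finset.mem_singleton_self a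
      have hbmem : b ∈ σ'.1 \ σ.1 := by rw [hhb]; exact Finset.mem_singleton_self b
      have ha1 := Finset.mem_sdiff.mp hamem
      have hb1 := Finset.mem_sdiff.mp hbmem
      have hab : a ≠ b := fun h => ha1.2 (h ▸ hb1.1)
      have haρ : a ∉ ρ₀ := fun h => ha1.2 (Finset.mem_inter.mp h).2
      have hbρ : b ∉ ρ₀ := fun h => hb1.2 (Finset.mem_inter.mp h).1
      have hσa : σ.1 = insert a ρ₀ := by
        ext x
        simp only [Finset.mem_insert, hρ₀, Finset.mem_inter]
        constructor
        · intro hx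
          by_cases hx' : x ∈ σ'.1
          · exact Or.inr ⟨hx, hx'⟩
          · left
            have hm : x ∈ σ.1 \ σ'.1 := Finset.mem_sdiff.mpr ⟨hx, hx'⟩
            rw [hha] at hm
            exact Finset.mem_singleton.mp hm
        · rintro (h1 | ⟨h1, h2⟩)
          · rw [h1]; exact ha1.1
          · exact h1
      have hσ'b : σ'.1 = insert b ρ₀ := by
        ext x
        simp only [Finset.mem_insert, hρ₀, Finset.mem_inter]
        constructor
        · intro hx
          by_cases hx' : x ∈ σ.1
          · exact Or.inr ⟨hx', hx⟩
          · left
            have hm : x ∈ σ'.1 \ σ.1 := Finset.mem_sdiff.mpr ⟨hx, hx'⟩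
            rw [hhb] at hm
            exact Finset.mem_singleton.mp hm
        · rintro (h1 | ⟨h1, h2⟩)
          · rw [h1]; exact hb1.1
          · exact h2
      have hτ : σ.1 ∪ σ'.1 = insert a (insert b ρ₀) := by
        rw [hσa, hσ'b, Finset.insert_union, Finset.union_insert, Finset.union_self]
      have hρmem : ρ₀ ⊆ σ.1 ∧ ρ₀ ⊆ σ'.1 :=
        ⟨Finset.inter_subset_left, Finset.inter_subset_right⟩
      rw [Finset.sum_eq_single_of_mem (⟨ρ₀, hint⟩ : {ρ : Finset (Fin n) // ρ.card = e})
        (Finset.mem_univ _) ?_]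
      · rw [if_pos hρmem]
        unfold adjComplete
        rw [if_pos hadj]
        have hpair := sign_pair ρ₀ hab haρ hbρ
        rw [← hτ, ← hσa, ← hσ'b] at hpair
        have q1 : sgnFace (σ.1 ∪ σ'.1) σ.1 * sgnFace (σ.1 ∪ σ'.1) σ.1 = 1 := sgnFace_mul_self _ _
        have q4 : sgnFace σ'.1 ρ₀ * sgnFace σ'.1 ρ₀ = 1 := sgnFace_mul_self _ _
        have key : (-(sgnFace (σ.1 ∪ σ'.1) σ.1 * sgnFace (σ.1 ∪ σ'.1) σ'.1) : ℤ)
            = sgnFace σ.1 ρ₀ * sgnFace σ'.1 ρ₀ := by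
          linear_combination (-(sgnFace (σ.1 ∪ σ'.1) σ.1 * sgnFace σ'.1 ρ₀)) * hpair
            + (sgnFace σ.1 ρ₀ * sgnFace σ'.1 ρ₀) * q1
            + (sgnFace (σ.1 ∪ σ'.1) σ.1 * sgnFace (σ.1 ∪ σ'.1) σ'.1) * q4
        exact_mod_cast congrArg (Int.cast : ℤ → ℝ) key
      · intro ρ _ hρne
        rw [if_neg]
        rintro ⟨h1, h2⟩
        have hsub : ρ.1 ⊆ ρ₀ := Finset.subset_inter h1 h2
        have : ρ.1 = ρ₀ := Finset.eq_of_subset_of_card_le hsub (by rw [ρ.2, hint])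
        exact hρne (Subtype.ext this)
    · -- non-adjacent case
      have hunion : e + 1 + 1 ≤ (σ.1 ∪ σ'.1).card := by
        by_contra hlt
        push_neg at hlt
        have h1 : σ.1 ⊆ σ.1 ∪ σ'.1 := Finset.subset_union_left
        have h2 : σ'.1 ⊆ σ.1 ∪ σ'.1 := Finset.subset_union_right
        have e1 : σ.1 = σ.1 ∪ σ'.1 := Finset.eq_of_subset_of_card_le h1 (by rw [σ.2]; omega)
        have e2 : σ'.1 = σ.1 ∪ σ'.1 := Finset.eq_of_subset_of_card_le h2 (by rw [σ'.2]; omega)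
        exact hne (e1.trans e2.symm)
      have hint : (σ.1 ∩ σ'.1).card < e := by
        have := Finset.card_union_add_card_inter σ.1 σ'.1
        rw [σ.2, σ'.2] at this
        omega
      unfold adjComplete
      rw [if_neg hadj]
      symm
      refine Finset.sum_eq_zero fun ρ _ => ?_
      rw [if_neg]
      rintro ⟨h1, h2⟩
      have hsub : ρ.1 ⊆ σ.1 ∩ σ'.1 := Finset.subset_inter h1 h2
      have := Finset.card_le_card hsub
      rw [ρ.2] at this
      omega

lemma NM_zero (n e : ℕ) : bdryM n e * bdryM n (e + 1) = 0 := by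
  ext ρ τ
  rw [Matrix.mul_apply, Matrix.zero_apply]
  have hmul : ∀ σ : {σ : Finset (Fin n) // σ.card = e + 1},
      bdryM n e ρ σ * bdryM n (e + 1) σ τ
        = (if ρ.1 ⊆ σ.1 ∧ σ.1 ⊆ τ.1 then
            ((sgnFace σ.1 ρ.1 * sgnFace τ.1 σ.1 : ℤ) : ℝ) else 0) := by
    intro σ
    unfold bdryM
    rw [my_ite_mul_ite]
    congr 1
    push_cast
    ring
  rw [Finset.sum_congr rfl (fun σ _ => hmul σ)]
  by_cases hsub : ρ.1 ⊆ τ.1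
  · rw [sum_middle ρ.1 τ.1 ρ.2 hsub
      (fun s => ((sgnFace s ρ.1 * sgnFace τ.1 s : ℤ) : ℝ))]
    have hc2 : (τ.1 \ ρ.1).card = 2 := by
      rw [Finset.card_sdiff_of_subset hsub, τ.2, ρ.2]; omega
    obtain ⟨a, b, hab, hab2⟩ := Finset.card_eq_two.mp hc2
    rw [hab2, Finset.sum_pair hab]
    have hamem : a ∈ τ.1 \ ρ.1 := by rw [hab2]; simp
    have hbmem : b ∈ τ.1 \ ρ.1 := by rw [hab2]; simp
    have ha1 := Finset.mem_sdiff.mp hamem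
    have hb1 := Finset.mem_sdiff.mp hbmem
    have hτ : τ.1 = insert a (insert b ρ.1) := by
      have : τ.1 = ρ.1 ∪ (τ.1 \ ρ.1) := by
        rw [Finset.union_sdiff_of_subset hsub]
      rw [this, hab2]
      ext x
      simp only [Finset.mem_union, Finset.mem_insert, Finset.mem_singleton]
      tauto
    have hpair := sign_pair ρ.1 hab ha1.2 hb1.2
    rw [← hτ] at hpair
    have hz : (sgnFace (insert a ρ.1) ρ.1 * sgnFace τ.1 (insert a ρ.1)
        + sgnFace (insert b ρ.1) ρ.1 * sgnFace τ.1 (insert b ρ.1) : ℤ) = 0 := by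
      linear_combination hpair
    push_cast
    exact_mod_cast hz
  · refine Finset.sum_eq_zero fun σ _ => ?_
    rw [if_neg]
    rintro ⟨h1, h2⟩
    exact hsub (h1.trans h2)

lemma quad_zero (n e : ℕ) :
    (adjComplete n (e + 1) - ((n : ℝ) - (e + 1)) • 1)
      * (adjComplete n (e + 1) + ((e : ℝ) + 1) • 1) = 0 := by
  have h1 : adjComplete n (e + 1) - ((n : ℝ) - (e + 1)) • 1
      = -(bdryM n (e + 1) * (bdryM n (e + 1))ᵀ) := by
    rw [adj_eq_M n e]; abel
  have h2 : adjComplete n (e + 1) + ((e : ℝ) + 1) • 1 = (bdryM n e)ᵀ * bdryM n e := by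
    rw [adj_eq_N n e]; abel
  rw [h1, h2, neg_mul, neg_eq_zero, Matrix.mul_assoc, ← Matrix.mul_assoc (bdryM n (e + 1))ᵀ,
    ← Matrix.transpose_mul, NM_zero, Matrix.transpose_zero, Matrix.zero_mul, Matrix.mul_zero]

lemma adj_herm (n k : ℕ) : (adjComplete n k).IsHermitian := by
  rw [Matrix.IsHermitian]
  ext σ σ'
  rw [Matrix.conjTranspose_apply, star_trivial]
  unfold adjComplete
  rw [Finset.union_comm σ'.1 σ.1]
  split_ifs with h
  · push_cast; ring
  · rfl

lemma adj_diag_zero (n k : ℕ) (σ : {σ : Finset (Fin n) // σ.card = k}) :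
    adjComplete n k σ σ = 0 := by
  unfold adjComplete
  rw [if_neg]
  rw [Finset.union_self, σ.2]
  omega

lemma eig_mem (n e : ℕ) (hA : (adjComplete n (e + 1)).IsHermitian)
    (i : {σ : Finset (Fin n) // σ.card = e + 1}) :
    hA.eigenvalues i = (n : ℝ) - (e + 1)
      ∨ hA.eigenvalues i = -((e : ℝ) + 1) := by
  set μ := hA.eigenvalues i with hμ
  set v : {σ : Finset (Fin n) // σ.card = e + 1} → ℝ := ⇑(hA.eigenvectorBasis i) with hv
  have hvec : adjComplete n (e + 1) *ᵥ v = μ • v := hA.mulVec_eigenvectorBasis i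
  have hvne : v ≠ 0 := by
    intro h
    apply hA.eigenvectorBasis.orthonormal.ne_zero i
    ext j
    exact congrFun h j
  have happ : ((adjComplete n (e + 1) - ((n : ℝ) - (e + 1)) • 1)
      * (adjComplete n (e + 1) + ((e : ℝ) + 1) • 1)) *ᵥ v = 0 := by
    rw [quad_zero, Matrix.zero_mulVec]
  rw [← Matrix.mulVec_mulVec] at happ
  have h2 : (adjComplete n (e + 1) + ((e : ℝ) + 1) • 1) *ᵥ v = (μ + ((e : ℝ) + 1)) • v := by
    rw [Matrix.add_mulVec, hvec, Matrix.smul_mulVec, Matrix.one_mulVec, ← add_smul]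
  rw [h2, Matrix.mulVec_smul, Matrix.sub_mulVec, hvec, Matrix.smul_mulVec,
    Matrix.one_mulVec, ← sub_smul, smul_smul] at happ
  rcases smul_eq_zero.mp happ with h | h
  · rcases mul_eq_zero.mp h with h' | h'
    · right; linarith [h']
    · left; linarith [sub_eq_zero.mp h']
  · exact absurd h hvne

lemma trace_eq (n k : ℕ) (A : Matrix {σ : Finset (Fin n) // σ.card = k}
    {σ : Finset (Fin n) // σ.card = k} ℝ) (hA : A.IsHermitian) :
    A.trace = ∑ i, hA.eigenvalues i := by
  conv_lhs => rw [hA.spectral_theorem, Unitary.conjStarAlgAut_apply]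
  rw [Matrix.trace_mul_cycle,
    (Matrix.mem_unitaryGroup_iff').mp (hA.eigenvectorUnitary).2, Matrix.one_mul,
    Matrix.trace_diagonal]
  rfl

set_option maxHeartbeats 2000000 in
/-- The `(d-1)`-st adjacency matrix of the complete complex on `n > d ≥ 1` vertices has
exactly the two eigenvalues `n - d`, with multiplicity `binom(n-1, d-1)`, and `-d`, with
multiplicity `binom(n-1, d)`: its characteristic polynomial is
`(X - (n-d))^binom(n-1,d-1) · (X + d)^binom(n-1,d)`. -/
theorem stmt7 (n d : ℕ) (hd : 1 ≤ d) (hdn : d < n) :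
    (adjComplete n d).charpoly =
      (X - C ((n : ℝ) - d)) ^ Nat.choose (n - 1) (d - 1) *
        (X + C (d : ℝ)) ^ Nat.choose (n - 1) d := by
  obtain ⟨e, rfl⟩ : ∃ e, d = e + 1 := ⟨d - 1, by omega⟩
  obtain ⟨m, rfl⟩ : ∃ m, n = m + 1 := ⟨n - 1, by omega⟩
  classical
  have hA := adj_herm (m + 1) (e + 1)
  have hch := herm_charpoly (adjComplete (m + 1) (e + 1)) hA
  set p : {σ : Finset (Fin (m + 1)) // σ.card = e + 1} → Prop :=
    fun i => hA.eigenvalues i = ((m + 1 : ℕ) : ℝ) - ((e : ℝ) + 1) with hp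
  set a := (Finset.univ.filter p).card with ha
  set b := (Finset.univ.filter (fun i => ¬ p i)).card with hb
  have hmempos : ∀ i, p i → hA.eigenvalues i = ((m + 1 : ℕ) : ℝ) - ((e : ℝ) + 1) := by
    intro i hi
    rw [hp] at hi
    exact hi
  have hmemneg : ∀ i, ¬ p i → hA.eigenvalues i = -((e : ℝ) + 1) := by
    intro i hi
    rw [hp] at hi
    rcases eig_mem (m + 1) e hA i with h | h
    · exact absurd h hi
    · exact h
  have hsplit : (adjComplete (m + 1) (e + 1)).charpoly
      = (X - C (((m + 1 : ℕ) : ℝ) - ((e : ℝ) + 1))) ^ a * (X - C (-((e : ℝ) + 1))) ^ b := by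
    rw [hch, ← Finset.prod_filter_mul_prod_filter_not Finset.univ p]
    congr 1
    · rw [Finset.prod_congr rfl
        (fun i hi => by rw [hmempos i (Finset.mem_filter.mp hi).2]), Finset.prod_const]
    · rw [Finset.prod_congr rfl
        (fun i hi => by rw [hmemneg i (Finset.mem_filter.mp hi).2]), Finset.prod_const]
  have hab : a + b = Nat.choose (m + 1) (e + 1) := by
    rw [ha, hb, Finset.card_filter_add_card_filter_not, Finset.card_univ,
      Fintype.card_finset_len, Fintype.card_fin]
  have htr0 : (adjComplete (m + 1) (e + 1)).trace = 0 := by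
    rw [Matrix.trace]
    exact Finset.sum_eq_zero fun i _ => adj_diag_zero (m + 1) (e + 1) i
  have htr := trace_eq (m + 1) (e + 1) (adjComplete (m + 1) (e + 1)) hA
  rw [htr0] at htr
  have hsum : (0 : ℝ) = (a : ℝ) * (((m + 1 : ℕ) : ℝ) - ((e : ℝ) + 1))
      + (b : ℝ) * (-((e : ℝ) + 1)) := by
    rw [htr, ← Finset.sum_filter_add_sum_filter_not Finset.univ p]
    congr 1
    · rw [Finset.sum_congr rfl (fun i hi => hmempos i (Finset.mem_filter.mp hi).2),
        Finset.sum_const, nsmul_eq_mul]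
    · rw [Finset.sum_congr rfl (fun i hi => hmemneg i (Finset.mem_filter.mp hi).2),
        Finset.sum_const, nsmul_eq_mul]
  have hcount : a * (m + 1) = Nat.choose (m + 1) (e + 1) * (e + 1) := by
    have hreal : (a : ℝ) * ((m : ℝ) + 1) = ((a + b : ℕ) : ℝ) * ((e : ℝ) + 1) := by
      push_cast
      push_cast at hsum
      linear_combination -hsum
    rw [hab] at hreal
    exact_mod_cast hreal
  have hid : (m + 1) * Nat.choose m e = Nat.choose (m + 1) (e + 1) * (e + 1) := by
    simpa using Nat.add_one_mul_choose_eq m e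
  have haval : a = Nat.choose m e := by
    have h : a * (m + 1) = Nat.choose m e * (m + 1) := by rw [hcount, ← hid]; ring
    exact Nat.eq_of_mul_eq_mul_right (by omega) h
  have hbval : b = Nat.choose m (e + 1) := by
    have hpascal : Nat.choose (m + 1) (e + 1) = Nat.choose m e + Nat.choose m (e + 1) :=
      Nat.choose_succ_succ m e
    omega
  rw [hsplit, haval, hbval]
  have hm1 : m + 1 - 1 = m := by omega
  have he1 : e + 1 - 1 = e := by omega
  rw [hm1, he1]
  congr 2
  · push_cast; ring
  · rw [map_neg, sub_neg_eq_add]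
    congr 1
    push_cast; ring
end

section
/- Let X be a d-tree and let τ = {w_0, w_1, …, w_d} be a set of d+1 distinct vertices of X with τ ∉ X. Then there exist two d-element subsets σ, σ' of τ such that every simplex of X that is a subset of τ is contained in σ or in σ'. -/
lemma IsDTree.downClosed {V : Type*} [DecidableEq V] {d : ℕ} {X : Finset (Finset V)}
    (h : IsDTree d X) : ∀ ρ ∈ X, ∀ s ⊆ ρ, s ∈ X := by
  induction h with
  | trivial σ h =>
    intro ρ hρ s hs
    exact Finset.mem_powerset.2 (hs.trans (Finset.mem_powerset.1 hρ))
  | step X σ v hX hσ hcard hv ih =>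
    intro ρ hρ s hs
    rcases Finset.mem_union.1 hρ with h | h
    · exact Finset.mem_union_left _ (ih ρ h s hs)
    · exact Finset.mem_union_right _ (Finset.mem_powerset.2 (hs.trans (Finset.mem_powerset.1 h)))

/-- Lemma: if `X` is a `d`-tree and `τ` is a set of `d+1` distinct vertices of `X` that is
not a face of `X`, then there are two `d`-element subsets `σ, σ'` of `τ` such that every
face of `X` contained in `τ` is contained in `σ` or in `σ'`. -/
theorem stmt8 {V : Type*} [DecidableEq V] (d : ℕ) (hd : 1 ≤ d)
    (X : Finset (Finset V)) (hX : IsDTree d X)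
    (τ : Finset V) (hτcard : τ.card = d + 1)
    (hτv : ∀ w ∈ τ, ({w} : Finset V) ∈ X) (hτ : τ ∉ X) :
    ∃ σ ⊆ τ, ∃ σ' ⊆ τ, σ.card = d ∧ σ'.card = d ∧
      ∀ ρ ∈ X, ρ ⊆ τ → ρ ⊆ σ ∨ ρ ⊆ σ' := by
  revert hτv hτ
  induction hX with
  | trivial σ₀ h =>
    intro hτv hτ
    exfalso
    have hsub : τ ⊆ σ₀ := by
      intro w hw
      have := Finset.mem_powerset.1 (hτv w hw)
      simpa using this
    have := Finset.card_le_card hsub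
    omega
  | step X σ v hX hσ hcard hv ih =>
    intro hτv hτ
    by_cases hvτ : v ∈ τ
    · -- v ∈ τ
      have hστ : insert v (σ ∩ τ) ⊆ τ :=
        Finset.insert_subset hvτ (Finset.inter_subset_right)
      have hcard' : (insert v (σ ∩ τ)).card ≤ d := by
        by_contra hc
        push_neg at hc
        have hle : τ.card ≤ (insert v (σ ∩ τ)).card := by omega
        have heq : insert v (σ ∩ τ) = τ :=
          Finset.eq_of_subset_of_card_le hστ hle
        have : τ ⊆ insert v σ := by
          rw [← heq]
          exact Finset.insert_subset_insert _ Finset.inter_subset_left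
        exact hτ (Finset.mem_union_right _ (Finset.mem_powerset.2 this))
      obtain ⟨σ₁, hs₁, hs₂, hs₃⟩ :=
        Finset.exists_subsuperset_card_eq hστ hcard' (by omega)
      refine ⟨σ₁, hs₂, τ.erase v, Finset.erase_subset _ _, hs₃,
        by rw [Finset.card_erase_of_mem hvτ, hτcard]; omega, ?_⟩
      intro ρ hρ hρτ
      rcases Finset.mem_union.1 hρ with h | h
      · right
        exact Finset.subset_erase.2 ⟨hρτ, hv ρ h⟩
      · left
        refine subset_trans ?_ hs₁
        intro x hx
        have hx1 := Finset.mem_powerset.1 h hx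
        rcases Finset.mem_insert.1 hx1 with rfl | hxσ
        · exact Finset.mem_insert_self _ _
        · exact Finset.mem_insert_of_mem (Finset.mem_inter.2 ⟨hxσ, hρτ hx⟩)
    · -- v ∉ τ
      have hτv' : ∀ w ∈ τ, ({w} : Finset V) ∈ X := by
        intro w hw
        rcases Finset.mem_union.1 (hτv w hw) with h | h
        · exact h
        · have hwv : w ∈ insert v σ := Finset.mem_powerset.1 h (Finset.mem_singleton_self w)
          rcases Finset.mem_insert.1 hwv with rfl | hwσ
          · exact absurd hw hvτ
          · exact hX.downClosed σ hσ {w} (Finset.singleton_subset_iff.2 hwσ)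
      have hτ' : τ ∉ X := fun h => hτ (Finset.mem_union_left _ h)
      obtain ⟨σ₁, h₁, σ₂, h₂, hc₁, hc₂, hcov⟩ := ih hτv' hτ'
      refine ⟨σ₁, h₁, σ₂, h₂, hc₁, hc₂, ?_⟩
      intro ρ hρ hρτ
      rcases Finset.mem_union.1 hρ with h | h
      · exact hcov ρ h hρτ
      · have hvρ : v ∉ ρ := fun hvρ => hvτ (hρτ hvρ)
        have hρσ : ρ ⊆ σ := by
          intro x hx
          rcases Finset.mem_insert.1 (Finset.mem_powerset.1 h hx) with rfl | hxσ
          · exact absurd hx hvρ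
          · exact hxσ
        exact hcov ρ (hX.downClosed σ hσ ρ hρσ) hρτ
end

section
/- Let k ≥ 2 and d+1 ≤ s ≤ ⌊k/2⌋ + d. Then the number of equivalence classes of closed (n,d)-words of length k+1 whose vertex support has s vertices and in which every d-simplex of the support is traversed at least twice is at most d!·(⌊k/2⌋+1)^{dk}. -/
open Finset

/-- An `(n,d)`-word of length `k+1`: a sequence of `(d-1)`-simplices (`d`-element subsets
of `Fin n`) such that consecutive unions are `d`-simplices, together with an ordering of
the vertices of the initial simplex. -/
structure NDWord (n d k : ℕ) where
  seq : Fin (k + 1) → Finset (Fin n)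
  init : Fin d → Fin n
  card_seq : ∀ i, (seq i).card = d
  adj : ∀ i : Fin k, (seq i.castSucc ∪ seq i.succ).card = d + 1
  init_inj : Function.Injective init
  init_image : Finset.image init Finset.univ = seq 0

namespace NDWord

variable {n d k : ℕ}

/-- A word is closed if its first and last simplices coincide. -/
def Closed (w : NDWord n d k) : Prop := w.seq 0 = w.seq (Fin.last k)

/-- The vertex support of a word. -/
def vSupp (w : NDWord n d k) : Finset (Fin n) := Finset.univ.biUnion w.seq

/-- The `d`-simplex support of a word. -/
def dSupp (w : NDWord n d k) : Finset (Finset (Fin n)) :=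
  Finset.univ.image fun i : Fin k => w.seq i.castSucc ∪ w.seq i.succ

/-- The number of times a word traverses the `d`-simplex `τ`. -/
def traversals (w : NDWord n d k) (τ : Finset (Fin n)) : ℕ :=
  (Finset.univ.filter fun i : Fin k => w.seq i.castSucc ∪ w.seq i.succ = τ).card

/-- Two `(n,d)`-words are equivalent if a bijection of `{1,…,n}` maps one to the other,
preserving the ordering of the initial simplex. -/
def Equiv (w x : NDWord n d k) : Prop :=
  ∃ π : _root_.Equiv.Perm (Fin n),
    (∀ i, (w.seq i).image π = x.seq i) ∧ ∀ j, π (w.init j) = x.init j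

end NDWord

namespace NDP

variable {n d k : ℕ}

def ftF (w : NDWord n d k) (v : Fin n) : Finset (Fin (k+1)) :=
  Finset.univ.filter (fun i => v ∈ w.seq i)

def ft (w : NDWord n d k) (v : Fin n) : ℕ :=
  if h : (ftF w v).Nonempty then ((ftF w v).min' h).val else 0

lemma mem_vSupp {w : NDWord n d k} {v : Fin n} : v ∈ w.vSupp ↔ ∃ i, v ∈ w.seq i := by
  simp [NDWord.vSupp]

lemma seq_subset_vSupp (w : NDWord n d k) (i : Fin (k+1)) : w.seq i ⊆ w.vSupp :=
  fun v hv => mem_vSupp.2 ⟨i, hv⟩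

lemma ftF_nonempty {w : NDWord n d k} {v : Fin n} (hv : v ∈ w.vSupp) : (ftF w v).Nonempty := by
  obtain ⟨i, hi⟩ := mem_vSupp.1 hv
  exact ⟨i, Finset.mem_filter.2 ⟨Finset.mem_univ i, hi⟩⟩

lemma ft_eq {w : NDWord n d k} {v : Fin n} (h : (ftF w v).Nonempty) :
    ft w v = ((ftF w v).min' h).val := by
  unfold ft; rw [dif_pos h]

lemma ft_lt {w : NDWord n d k} {v : Fin n} : ft w v < k + 1 := by
  unfold ft
  split
  next h => exact Fin.isLt _
  next h => omega

lemma ft_mem {w : NDWord n d k} {v : Fin n} (hv : v ∈ w.vSupp) :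
    v ∈ w.seq ⟨ft w v, ft_lt⟩ := by
  have h := ftF_nonempty hv
  have e : (⟨ft w v, ft_lt⟩ : Fin (k+1)) = (ftF w v).min' h := Fin.ext (ft_eq h)
  rw [e]
  exact (Finset.mem_filter.1 (Finset.min'_mem _ h)).2

lemma ft_le {w : NDWord n d k} {v : Fin n} {i : Fin (k+1)} (hi : v ∈ w.seq i) :
    ft w v ≤ i.val := by
  have h : (ftF w v).Nonempty := ⟨i, Finset.mem_filter.2 ⟨Finset.mem_univ i, hi⟩⟩
  rw [ft_eq h]
  exact Fin.le_def.mp (Finset.min'_le _ _ (Finset.mem_filter.2 ⟨Finset.mem_univ i, hi⟩))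

lemma ft_pos {w : NDWord n d k} {v : Fin n} (hv : v ∈ w.vSupp) (h0 : v ∉ w.seq 0) :
    1 ≤ ft w v := by
  by_contra h
  have h1 : ft w v = 0 := by omega
  have hm := ft_mem hv
  have e : (⟨ft w v, ft_lt⟩ : Fin (k+1)) = 0 := Fin.ext (by simpa using h1)
  rw [e] at hm
  exact h0 hm

def idxF (w : NDWord n d k) (v : Fin n) : Finset (Fin d) :=
  Finset.univ.filter (fun j => w.init j = v)

def idx (w : NDWord n d k) (v : Fin n) : ℕ :=
  if h : (idxF w v).Nonempty then ((idxF w v).min' h).val else 0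

lemma idxF_nonempty {w : NDWord n d k} {v : Fin n} (hv : v ∈ w.seq 0) : (idxF w v).Nonempty := by
  rw [← w.init_image] at hv
  obtain ⟨j, _, hj⟩ := Finset.mem_image.1 hv
  exact ⟨j, Finset.mem_filter.2 ⟨Finset.mem_univ j, hj⟩⟩

lemma idx_eq {w : NDWord n d k} {v : Fin n} (h : (idxF w v).Nonempty) :
    idx w v = ((idxF w v).min' h).val := by
  unfold idx; rw [dif_pos h]

lemma idx_lt {w : NDWord n d k} {v : Fin n} (hv : v ∈ w.seq 0) : idx w v < d := by
  rw [idx_eq (idxF_nonempty hv)]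
  exact Fin.isLt _

lemma init_idx {w : NDWord n d k} {v : Fin n} (hv : v ∈ w.seq 0) :
    w.init ⟨idx w v, idx_lt hv⟩ = v := by
  have h := idxF_nonempty hv
  have e : (⟨idx w v, idx_lt hv⟩ : Fin d) = (idxF w v).min' h := Fin.ext (idx_eq h)
  rw [e]
  exact (Finset.mem_filter.1 (Finset.min'_mem _ h)).2

lemma mem_seq_zero_init {w : NDWord n d k} (j : Fin d) : w.init j ∈ w.seq 0 := by
  rw [← w.init_image]; exact Finset.mem_image_of_mem _ (Finset.mem_univ j)

lemma idx_init {w : NDWord n d k} (j : Fin d) : idx w (w.init j) = j.val := by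
  have hv := mem_seq_zero_init (w := w) j
  have h2 := w.init_inj (init_idx hv)
  exact congrArg Fin.val h2

def key (w : NDWord n d k) (v : Fin n) : ℕ :=
  if v ∈ w.seq 0 then idx w v else d - 1 + ft w v

lemma key_init {w : NDWord n d k} (j : Fin d) : key w (w.init j) = j.val := by
  rw [key, if_pos (mem_seq_zero_init j), idx_init]

lemma key_ge_d {w : NDWord n d k} {v : Fin n} (hd : 1 ≤ d) (hv : v ∈ w.vSupp)
    (h0 : v ∉ w.seq 0) : d ≤ key w v := by
  rw [key, if_neg h0]
  have := ft_pos hv h0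
  omega

lemma key_lt_d {w : NDWord n d k} {v : Fin n} (hv : v ∈ w.seq 0) : key w v < d := by
  rw [key, if_pos hv]; exact idx_lt hv

end NDP

namespace NDP
variable {n d k : ℕ}

lemma new_vertex_unique {w : NDWord n d k} {i : Fin k} {u v : Fin n}
    (hu : u ∈ w.seq i.succ) (hv : v ∈ w.seq i.succ)
    (hu' : u ∉ w.seq i.castSucc) (hv' : v ∉ w.seq i.castSucc) : u = v := by
  have hsub : w.seq i.castSucc ⊆ w.seq i.castSucc ∪ w.seq i.succ := Finset.subset_union_left
  have hcard : ((w.seq i.castSucc ∪ w.seq i.succ) \ w.seq i.castSucc).card = 1 := by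
    rw [Finset.card_sdiff_of_subset hsub, w.adj i, w.card_seq]
    omega
  have hu2 : u ∈ (w.seq i.castSucc ∪ w.seq i.succ) \ w.seq i.castSucc :=
    Finset.mem_sdiff.2 ⟨Finset.mem_union_right _ hu, hu'⟩
  have hv2 : v ∈ (w.seq i.castSucc ∪ w.seq i.succ) \ w.seq i.castSucc :=
    Finset.mem_sdiff.2 ⟨Finset.mem_union_right _ hv, hv'⟩
  exact Finset.card_le_one.1 (le_of_eq hcard) _ hu2 _ hv2

lemma key_injOn (hd : 1 ≤ d) (w : NDWord n d k) :
    Set.InjOn (key w) (w.vSupp : Set (Fin n)) := by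
  intro u hu v hv h
  simp only [Finset.mem_coe] at hu hv
  by_cases h0u : u ∈ w.seq 0 <;> by_cases h0v : v ∈ w.seq 0
  · have e : (⟨idx w u, idx_lt h0u⟩ : Fin d) = ⟨idx w v, idx_lt h0v⟩ := by
      apply Fin.ext
      simpa [key, if_pos h0u, if_pos h0v] using h
    rw [← init_idx h0u, ← init_idx h0v, e]
  · exact absurd h (by have := key_lt_d h0u; have := key_ge_d hd hv h0v; omega)
  · exact absurd h (by have := key_lt_d h0v; have := key_ge_d hd hu h0u; omega)
  · have hft : ft w u = ft w v := by
      rw [key, if_neg h0u] at h; rw [key, if_neg h0v] at h; omega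
    have h1u := ft_pos hu h0u
    have hlt : ft w u - 1 < k := by have := ft_lt (w := w) (v := u); omega
    set i : Fin k := ⟨ft w u - 1, hlt⟩ with hi
    have hsucc : (i.succ : Fin (k+1)) = ⟨ft w u, ft_lt⟩ := by
      apply Fin.ext; simp [hi]; omega
    have hcs : (i.castSucc : Fin (k+1)) = ⟨ft w u - 1, by omega⟩ := by
      apply Fin.ext; simp [hi]
    have hu1 : u ∈ w.seq i.succ := by rw [hsucc]; exact ft_mem hu
    have hv1 : v ∈ w.seq i.succ := by
      rw [hsucc]
      have : (⟨ft w u, ft_lt⟩ : Fin (k+1)) = ⟨ft w v, ft_lt⟩ := Fin.ext (by simp [hft])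
      rw [this]; exact ft_mem hv
    have hu2 : u ∉ w.seq i.castSucc := by
      intro hmem
      have := ft_le hmem
      rw [hcs] at this
      simp at this; omega
    have hv2 : v ∉ w.seq i.castSucc := by
      intro hmem
      have := ft_le hmem
      rw [hcs] at this
      simp at this; omega
    exact new_vertex_unique hu1 hv1 hu2 hv2

def rank (w : NDWord n d k) (v : Fin n) : ℕ :=
  (w.vSupp.filter (fun u => key w u < key w v)).card

lemma rank_lt_rank {w : NDWord n d k} {u v : Fin n} (hu : u ∈ w.vSupp)
    (h : key w u < key w v) : rank w u < rank w v := by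
  apply Finset.card_lt_card
  constructor
  · intro x hx
    simp only [Finset.mem_filter] at hx ⊢
    exact ⟨hx.1, hx.2.trans h⟩
  · intro hsub
    have : u ∈ w.vSupp.filter (fun x => key w x < key w u) :=
      hsub (Finset.mem_filter.2 ⟨hu, h⟩)
    simp at this

lemma rank_injOn (hd : 1 ≤ d) (w : NDWord n d k) :
    Set.InjOn (rank w) (w.vSupp : Set (Fin n)) := by
  intro u hu v hv h
  rcases lt_trichotomy (key w u) (key w v) with hlt | heq | hgt
  · exact absurd h (Nat.ne_of_lt (rank_lt_rank hu hlt))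
  · exact key_injOn hd w hu hv heq
  · exact absurd h.symm (Nat.ne_of_lt (rank_lt_rank hv hgt))

lemma rank_init (hd : 1 ≤ d) {w : NDWord n d k} (j : Fin d) : rank w (w.init j) = j.val := by
  have hA : w.vSupp.filter (fun u => key w u < key w (w.init j))
      = (Finset.univ.filter (fun i : Fin d => i < j)).image w.init := by
    ext u
    simp only [Finset.mem_filter, Finset.mem_image, key_init]
    constructor
    · rintro ⟨hu, hku⟩
      by_cases h0 : u ∈ w.seq 0
      · refine ⟨⟨idx w u, idx_lt h0⟩, ⟨Finset.mem_univ _, ?_⟩, init_idx h0⟩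
        rw [Fin.lt_def]
        simpa [key, if_pos h0] using hku
      · exact absurd hku (by have := key_ge_d hd hu h0; omega)
    · rintro ⟨i, ⟨_, hij⟩, rfl⟩
      exact ⟨seq_subset_vSupp w 0 (mem_seq_zero_init i), by rw [key_init]; exact hij⟩
  rw [rank, hA, Finset.card_image_of_injective _ w.init_inj,
    show (Finset.univ.filter fun i : Fin d => i < j) = Finset.Iio j from by ext i; simp,
    Fin.card_Iio]

lemma rank_lt_card {w : NDWord n d k} {v : Fin n} (hv : v ∈ w.vSupp) :
    rank w v < w.vSupp.card := by
  apply Finset.card_lt_card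
  constructor
  · exact Finset.filter_subset _ _
  · intro hsub
    have := hsub hv
    simp at this

end NDP

namespace NDP
variable {n d k : ℕ}

def enc (w : NDWord n d k) (i : Fin (k+1)) : Finset ℕ := (w.seq i).image (rank w)

section Invariance

variable {w x : NDWord n d k} {π : _root_.Equiv.Perm (Fin n)}
  (hseq : ∀ i, (w.seq i).image π = x.seq i)

include hseq

lemma mem_iff_pi {v : Fin n} {i : Fin (k+1)} : v ∈ w.seq i ↔ π v ∈ x.seq i := by
  rw [← hseq i]
  constructor
  · exact fun h => Finset.mem_image_of_mem _ h
  · intro h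
    obtain ⟨u, hu, he⟩ := Finset.mem_image.1 h
    rwa [← π.injective he]

lemma vSupp_eq_image : x.vSupp = w.vSupp.image π := by
  ext v
  simp only [mem_vSupp, Finset.mem_image]
  constructor
  · rintro ⟨i, hi⟩
    refine ⟨π.symm v, ⟨i, ?_⟩, by simp⟩
    rw [mem_iff_pi hseq]; simpa using hi
  · rintro ⟨u, ⟨i, hi⟩, rfl⟩
    exact ⟨i, (mem_iff_pi hseq).1 hi⟩

lemma ft_pi (v : Fin n) : ft x (π v) = ft w v := by
  have hF : ftF x (π v) = ftF w v := by
    ext i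
    simp only [ftF, Finset.mem_filter, Finset.mem_univ, true_and]
    exact (mem_iff_pi hseq).symm
  unfold ft
  rw [hF]

lemma key_pi (hinit : ∀ j, π (w.init j) = x.init j) (v : Fin n) :
    key x (π v) = key w v := by
  have hF : idxF x (π v) = idxF w v := by
    ext j
    simp only [idxF, Finset.mem_filter, Finset.mem_univ, true_and]
    rw [← hinit j]
    exact ⟨fun h => π.injective h, fun h => congrArg π h⟩
  have h0 : π v ∈ x.seq 0 ↔ v ∈ w.seq 0 := (mem_iff_pi hseq).symm
  unfold key idx
  rw [hF, ft_pi hseq]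
  by_cases hv : v ∈ w.seq 0
  · rw [if_pos (h0.2 hv), if_pos hv]
  · rw [if_neg (fun h => hv (h0.1 h)), if_neg hv]

lemma rank_pi (hinit : ∀ j, π (w.init j) = x.init j) (v : Fin n) :
    rank x (π v) = rank w v := by
  unfold rank
  rw [vSupp_eq_image hseq, key_pi hseq hinit]
  rw [Finset.filter_image]
  rw [Finset.card_image_of_injective _ π.injective]
  congr 1
  ext u
  simp only [Finset.mem_filter, Function.comp, key_pi hseq hinit]

lemma enc_eq_of_equiv (hinit : ∀ j, π (w.init j) = x.init j) : enc w = enc x := by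
  funext i
  unfold enc
  rw [← hseq i, Finset.image_image]
  apply Finset.image_congr
  intro v _
  exact (rank_pi hseq hinit v).symm

end Invariance

lemma equiv_refl (w : NDWord n d k) : NDWord.Equiv w w :=
  ⟨_root_.Equiv.refl _, fun i => Finset.image_id, fun _ => rfl⟩

lemma equiv_symm {w x : NDWord n d k} (h : NDWord.Equiv w x) : NDWord.Equiv x w := by
  obtain ⟨π, hseq, hinit⟩ := h
  refine ⟨π.symm, fun i => ?_, fun j => ?_⟩
  · rw [← hseq i, Finset.image_image]
    simp
  · rw [← hinit j]; simp

lemma equiv_trans {w x y : NDWord n d k} (h1 : NDWord.Equiv w x) (h2 : NDWord.Equiv x y) :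
    NDWord.Equiv w y := by
  obtain ⟨π1, hs1, hi1⟩ := h1
  obtain ⟨π2, hs2, hi2⟩ := h2
  refine ⟨π1.trans π2, fun i => ?_, fun j => ?_⟩
  · rw [← hs2 i, ← hs1 i, Finset.image_image]; rfl
  · rw [← hi2 j, ← hi1 j]; rfl

lemma class_eq_of_equiv {w x : NDWord n d k} (h : NDWord.Equiv w x) :
    {y : NDWord n d k | NDWord.Equiv w y} = {y : NDWord n d k | NDWord.Equiv x y} := by
  ext y
  exact ⟨fun hy => equiv_trans (equiv_symm h) hy, fun hy => equiv_trans h hy⟩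

lemma equiv_of_class_eq {w x : NDWord n d k}
    (h : {y : NDWord n d k | NDWord.Equiv w y} = {y : NDWord n d k | NDWord.Equiv x y}) :
    NDWord.Equiv w x := by
  have : x ∈ {y : NDWord n d k | NDWord.Equiv x y} := equiv_refl x
  rw [← h] at this
  exact this

lemma enc_eq_of_equiv' {w x : NDWord n d k} (h : NDWord.Equiv w x) : enc w = enc x := by
  obtain ⟨π, hseq, hinit⟩ := h
  exact enc_eq_of_equiv hseq hinit

end NDP

namespace NDP
variable {n d k : ℕ}

lemma image_val_univ_eq_range (d : ℕ) :
    Finset.univ.image (fun i : Fin d => (i : ℕ)) = Finset.range d := by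
  ext a
  simp only [Finset.mem_image, Finset.mem_univ, true_and, Finset.mem_range]
  exact ⟨fun ⟨i, h⟩ => h ▸ i.isLt, fun h => ⟨⟨a, h⟩, rfl⟩⟩

lemma exists_perm_of_injOn {α : Type*} [Fintype α] [DecidableEq α] {s t : Finset α}
    {f : α → α} (hcard : s.card = t.card) (hmaps : ∀ v ∈ s, f v ∈ t)
    (hinj : Set.InjOn f (s : Set α)) :
    ∃ π : _root_.Equiv.Perm α, ∀ v ∈ s, π v = f v := by
  classical
  let g : {v // v ∈ s} → {v // v ∈ t} := fun v => ⟨f v.1, hmaps v.1 v.2⟩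
  have hginj : Function.Injective g := by
    rintro ⟨u, hu⟩ ⟨v, hv⟩ h
    have : f u = f v := congrArg Subtype.val h
    exact Subtype.ext (hinj hu hv this)
  have hgbij : Function.Bijective g :=
    (Fintype.bijective_iff_injective_and_card g).2 ⟨hginj, by simp [hcard]⟩
  let e1 : {v // v ∈ s} ≃ {v // v ∈ t} := _root_.Equiv.ofBijective g hgbij
  have hcardc : Fintype.card ↥((s : Set α)ᶜ) = Fintype.card ↥((t : Set α)ᶜ) := by
    rw [Fintype.card_compl_set, Fintype.card_compl_set]
    simp [hcard]
  let e2 : ↥((s : Set α)ᶜ) ≃ ↥((t : Set α)ᶜ) := Fintype.equivOfCardEq hcardc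
  let e1' : ↥(s : Set α) ≃ ↥(t : Set α) := e1
  let π : _root_.Equiv.Perm α :=
    ((_root_.Equiv.Set.sumCompl (s : Set α)).symm.trans
      ((e1'.sumCongr e2).trans (_root_.Equiv.Set.sumCompl (t : Set α))))
  refine ⟨π, fun v hv => ?_⟩
  have hv' : v ∈ (s : Set α) := hv
  show (_root_.Equiv.Set.sumCompl (t : Set α))
      ((e1'.sumCongr e2) ((_root_.Equiv.Set.sumCompl (s : Set α)).symm v)) = f v
  have h1 : (_root_.Equiv.Set.sumCompl (s : Set α)).symm v = Sum.inl ⟨v, hv'⟩ :=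
    _root_.Equiv.Set.sumCompl_symm_apply (x := ⟨v, hv'⟩)
  rw [h1]
  simp only [Equiv.trans_apply, Equiv.sumCongr_apply, Sum.map_inl,
    Equiv.Set.sumCompl_apply_inl]
  rfl

lemma image_cancel_of_injOn {α β : Type*} [DecidableEq α] [DecidableEq β] {f : α → β}
    {s A B : Finset α} (hinj : Set.InjOn f (s : Set α)) (hA : A ⊆ s) (hB : B ⊆ s)
    (h : A.image f = B.image f) : A = B := by
  have sub : ∀ {A B : Finset α}, A ⊆ s → B ⊆ s → A.image f = B.image f → A ⊆ B := by
    intro A B hA hB h a ha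
    have : f a ∈ B.image f := h ▸ Finset.mem_image_of_mem f ha
    obtain ⟨b, hb, hba⟩ := Finset.mem_image.1 this
    rwa [← hinj (hB hb) (hA ha) hba]
  exact Finset.Subset.antisymm (sub hA hB h) (sub hB hA h.symm)

lemma vSupp_image_rank (w : NDWord n d k) :
    w.vSupp.image (rank w) = Finset.univ.biUnion (enc w) := by
  ext r
  simp only [enc, Finset.mem_image, Finset.mem_biUnion, Finset.mem_univ, true_and, mem_vSupp]
  constructor
  · rintro ⟨v, ⟨i, hi⟩, rfl⟩
    exact ⟨i, v, hi, rfl⟩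
  · rintro ⟨i, v, hv, rfl⟩
    exact ⟨v, ⟨i, hv⟩, rfl⟩

lemma equiv_of_enc_eq (hd : 1 ≤ d) {w x : NDWord n d k}
    (hcard : w.vSupp.card = x.vSupp.card) (henc : enc w = enc x) :
    NDWord.Equiv w x := by
  classical
  have himg : ∀ i, (w.seq i).image (rank w) = (x.seq i).image (rank x) := by
    intro i; exact congrFun henc i
  have hsupp : w.vSupp.image (rank w) = x.vSupp.image (rank x) := by
    rw [vSupp_image_rank, vSupp_image_rank, henc]
  -- for each v in supp w there is a unique u in supp x of the same rank
  have hEU : ∀ v ∈ w.vSupp, ∃! u, u ∈ x.vSupp ∧ rank x u = rank w v := by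
    intro v hv
    have : rank w v ∈ x.vSupp.image (rank x) := hsupp ▸ Finset.mem_image_of_mem _ hv
    obtain ⟨u, hu, hru⟩ := Finset.mem_image.1 this
    exact ⟨u, ⟨hu, hru⟩, fun y hy => rank_injOn hd x hy.1 hu (hy.2.trans hru.symm)⟩
  set f : Fin n → Fin n := fun v =>
    if hv : v ∈ w.vSupp then Finset.choose _ _ (hEU v hv) else v with hf
  have hfmem : ∀ v ∈ w.vSupp, f v ∈ x.vSupp := by
    intro v hv
    rw [hf]; simp only [dif_pos hv]
    exact Finset.choose_mem _ _ _
  have hfrank : ∀ v ∈ w.vSupp, rank x (f v) = rank w v := by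
    intro v hv
    rw [hf]; simp only [dif_pos hv]
    exact Finset.choose_property _ _ (hEU v hv)
  have hfinj : Set.InjOn f (w.vSupp : Set (Fin n)) := by
    intro u hu v hv h
    have hu' : u ∈ w.vSupp := hu
    have hv' : v ∈ w.vSupp := hv
    apply rank_injOn hd w hu hv
    rw [← hfrank u hu', ← hfrank v hv', h]
  obtain ⟨π, hπ⟩ := exists_perm_of_injOn hcard hfmem hfinj
  have hseq : ∀ i, (w.seq i).image π = x.seq i := by
    intro i
    have h1 : (w.seq i).image π = (w.seq i).image f :=
      Finset.image_congr (fun v hv => hπ v (seq_subset_vSupp w i hv))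
    have hsub : (w.seq i).image f ⊆ x.vSupp := by
      intro u hu
      obtain ⟨v, hv, rfl⟩ := Finset.mem_image.1 hu
      exact hfmem v (seq_subset_vSupp w i hv)
    have h2 : ((w.seq i).image f).image (rank x) = (x.seq i).image (rank x) := by
      rw [Finset.image_image]
      rw [← himg i]
      apply Finset.image_congr
      intro v hv
      exact hfrank v (seq_subset_vSupp w i hv)
    rw [h1]
    exact image_cancel_of_injOn (rank_injOn hd x) hsub (seq_subset_vSupp x i) h2
  refine ⟨π, hseq, fun j => ?_⟩
  have hmem : w.init j ∈ w.vSupp := seq_subset_vSupp w 0 (mem_seq_zero_init j)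
  have hmx : x.init j ∈ x.vSupp := seq_subset_vSupp x 0 (mem_seq_zero_init j)
  have h1 : rank x (f (w.init j)) = rank x (x.init j) := by
    rw [hfrank _ hmem, rank_init hd, rank_init hd]
  rw [hπ _ hmem]
  exact rank_injOn hd x (hfmem _ hmem) hmx h1

lemma enc_zero (hd : 1 ≤ d) (w : NDWord n d k) : enc w 0 = Finset.range d := by
  unfold enc
  rw [← w.init_image, Finset.image_image]
  rw [show (rank w ∘ w.init) = (fun j : Fin d => (j : ℕ)) from funext (fun j => rank_init hd j)]
  exact image_val_univ_eq_range d

end NDP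

namespace NDP
variable {n d k : ℕ}

lemma choose_le_pow (d m : ℕ) : (m + d).choose d ≤ (m + 1) ^ d := by
  induction d with
  | zero => simp
  | succ d ih =>
    have h0 : m + (d + 1) = (m + d) + 1 := by ring
    rw [h0, Nat.choose_succ_succ']
    have h1 : (m + d).choose (d + 1) ≤ (m + d).choose d * m := by
      have h2 := Nat.choose_succ_right_eq (m + d) d
      have h3 : (m + d).choose (d + 1) ≤ (m + d).choose (d + 1) * (d + 1) :=
        Nat.le_mul_of_pos_right _ (by omega)
      rw [h2] at h3
      simpa using h3
    calc (m + d).choose d + (m + d).choose (d + 1)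
        ≤ (m + 1) ^ d + (m + 1) ^ d * m := by
          have h4 : (m + d).choose d * m ≤ (m + 1) ^ d * m := Nat.mul_le_mul_right m ih
          omega
      _ = (m + 1) ^ (d + 1) := by ring

lemma enc_card (hd : 1 ≤ d) (w : NDWord n d k) (i : Fin (k + 1)) : (enc w i).card = d := by
  unfold enc
  rw [Finset.card_image_of_injOn
    ((rank_injOn hd w).mono (Finset.coe_subset.2 (seq_subset_vSupp w i)))]
  exact w.card_seq i

lemma enc_subset_range {w : NDWord n d k} {N : ℕ} (hN : w.vSupp.card ≤ N) (i : Fin (k + 1)) :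
    enc w i ⊆ Finset.range N := by
  intro r hr
  obtain ⟨v, hv, rfl⟩ := Finset.mem_image.1 hr
  have := rank_lt_card (seq_subset_vSupp w i hv)
  rw [Finset.mem_range]
  omega

end NDP

/-- For `k ≥ 2` and `d+1 ≤ s ≤ ⌊k/2⌋ + d`, the number of equivalence classes of closed
`(n,d)`-words of length `k+1` whose vertex support has `s` vertices and all of whose
support `d`-simplices are traversed at least twice is at most `d!·(⌊k/2⌋+1)^(dk)`. -/
theorem stmt10 (n d k s : ℕ) (hd : 1 ≤ d) (hk : 2 ≤ k)
    (hs1 : d + 1 ≤ s) (hs2 : s ≤ k / 2 + d) :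
    Set.ncard ((fun w : NDWord n d k => {x : NDWord n d k | NDWord.Equiv w x}) ''
        {w : NDWord n d k | w.Closed ∧ w.vSupp.card = s ∧
          ∀ τ ∈ w.dSupp, 2 ≤ w.traversals τ}) ≤
      Nat.factorial d * (k / 2 + 1) ^ (d * k) := by
  classical
  set m := k / 2 with hm
  set S : Set (NDWord n d k) := {w : NDWord n d k | w.Closed ∧ w.vSupp.card = s ∧
          ∀ τ ∈ w.dSupp, 2 ≤ w.traversals τ} with hS
  set F : NDWord n d k → Set (NDWord n d k) :=
    fun w => {x : NDWord n d k | NDWord.Equiv w x} with hF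
  -- encoding target
  set T : Finset (Fin (k + 1) → Finset ℕ) :=
    Fintype.piFinset (fun i => if i = 0 then {Finset.range d}
      else (Finset.range (m + d)).powersetCard d) with hT
  set Φ : Set (NDWord n d k) → (Fin (k + 1) → Finset ℕ) :=
    fun c => if h : ∃ w, w ∈ S ∧ F w = c then NDP.enc h.choose else fun _ => ∅ with hΦdef
  have hΦ : ∀ w ∈ S, Φ (F w) = NDP.enc w := by
    intro w hw
    have h : ∃ w', w' ∈ S ∧ F w' = F w := ⟨w, hw, rfl⟩
    rw [hΦdef]
    simp only [dif_pos h]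
    exact NDP.enc_eq_of_equiv' (NDP.equiv_of_class_eq h.choose_spec.2)
  have hmem : ∀ w ∈ S, NDP.enc w ∈ T := by
    intro w hw
    obtain ⟨_, hcard, _⟩ := hw
    rw [hT, Fintype.mem_piFinset]
    intro i
    by_cases hi : i = 0
    · subst hi
      rw [if_pos rfl, NDP.enc_zero hd w]
      exact Finset.mem_singleton_self _
    · rw [if_neg hi, Finset.mem_powersetCard]
      exact ⟨NDP.enc_subset_range (by omega) i, NDP.enc_card hd w i⟩
  have hmaps : ∀ c ∈ F '' S, Φ c ∈ (T : Set (Fin (k + 1) → Finset ℕ)) := by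
    rintro c ⟨w, hw, rfl⟩
    rw [hΦ w hw]
    exact hmem w hw
  have hinj : Set.InjOn Φ (F '' S) := by
    rintro c1 ⟨w1, hw1, rfl⟩ c2 ⟨w2, hw2, rfl⟩ h
    rw [hΦ w1 hw1, hΦ w2 hw2] at h
    have hc : w1.vSupp.card = w2.vSupp.card := by
      rw [hw1.2.1, hw2.2.1]
    exact NDP.class_eq_of_equiv (NDP.equiv_of_enc_eq hd hc h)
  have h1 : Set.ncard (F '' S) ≤ Set.ncard (T : Set (Fin (k + 1) → Finset ℕ)) :=
    Set.ncard_le_ncard_of_injOn Φ hmaps hinj (T.finite_toSet)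
  rw [Set.ncard_coe_finset] at h1
  have h2 : T.card ≤ (m + 1) ^ (d * k) := by
    rw [hT, Fintype.card_piFinset]
    have hcards : ∀ i : Fin (k + 1),
        ((if i = 0 then {Finset.range d}
          else (Finset.range (m + d)).powersetCard d) : Finset (Finset ℕ)).card
        = if i = 0 then 1 else (m + d).choose d := by
      intro i
      by_cases hi : i = 0
      · simp [hi]
      · rw [if_neg hi, if_neg hi, Finset.card_powersetCard, Finset.card_range]
    calc (∏ i : Fin (k + 1), ((if i = 0 then {Finset.range d}
            else (Finset.range (m + d)).powersetCard d) : Finset (Finset ℕ)).card)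
        = ∏ i : Fin (k + 1), (if i = 0 then 1 else (m + d).choose d) := by
          exact Finset.prod_congr rfl (fun i _ => hcards i)
      _ = (m + d).choose d ^ k := by
          rw [Fin.prod_univ_succ]
          simp only [eq_self_iff_true, if_true, one_mul]
          rw [Finset.prod_congr rfl (fun (i : Fin k) _ => if_neg (Fin.succ_ne_zero i))]
          rw [Finset.prod_const, Finset.card_univ, Fintype.card_fin]
      _ ≤ ((m + 1) ^ d) ^ k := Nat.pow_le_pow_left (NDP.choose_le_pow d m) k
      _ = (m + 1) ^ (d * k) := by rw [← pow_mul]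
  calc Set.ncard (F '' S) ≤ T.card := h1
    _ ≤ (m + 1) ^ (d * k) := h2
    _ ≤ Nat.factorial d * (m + 1) ^ (d * k) :=
        Nat.le_mul_of_pos_left _ (Nat.factorial_pos d)
end

section
/- Let k, l ≥ 2 and suppose a = (w¹, w²) is a pair of closed (n,d)-words of lengths k+1 and l+1 whose d-simplex supports intersect, such that every d-simplex of the combined support is traversed at least twice (counting traversals by both words). Then the number of vertices in the combined vertex support is at most ⌊(k+l)/2⌋ + d - 1. -/
open Finset

/-- The `d`-simplex support of a word `w` of length `k+1`: the set of unions of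
consecutive simplices. -/
def wordDSupp {n : ℕ} (k : ℕ) (w : Fin (k + 1) → Finset (Fin n)) :
    Finset (Finset (Fin n)) :=
  Finset.univ.image fun i : Fin k => w i.castSucc ∪ w i.succ

/-- The number of times the word `w` traverses the `d`-simplex `τ`. -/
def wordN {n : ℕ} (k : ℕ) (w : Fin (k + 1) → Finset (Fin n))
    (τ : Finset (Fin n)) : ℕ :=
  (Finset.univ.filter fun i : Fin k => w i.castSucc ∪ w i.succ = τ).card

section Aux


lemma periodic_eq_mod {β : Type*} {k : ℕ} (hk : 0 < k) (H : ℕ → β)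
    (hp : ∀ i, H (i + k) = H i) : ∀ i, H i = H (i % k) := by
  intro i
  induction i using Nat.strong_induction_on with
  | _ i ih =>
    rcases lt_or_ge i k with h | h
    · rw [Nat.mod_eq_of_lt h]
    · have h1 : i - k + k = i := by omega
      have h2 := hp (i - k)
      rw [h1] at h2
      rw [h2, ih (i - k) (by omega)]
      congr 1
      conv_rhs => rw [← h1]
      rw [Nat.add_mod_right]

lemma image_shift {β : Type*} [DecidableEq β] {k : ℕ} (hk : 0 < k) (H : ℕ → β)
    (hp : ∀ i, H (i + k) = H i) (r : ℕ) :
    (range k).image (fun i => H (r + i)) = (range k).image H := by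
  ext a
  simp only [mem_image, mem_range]
  constructor
  · rintro ⟨i, hi, rfl⟩
    exact ⟨(r + i) % k, Nat.mod_lt _ hk, (periodic_eq_mod hk H hp (r + i)).symm⟩
  · rintro ⟨i, hi, rfl⟩
    refine ⟨(i + k - r % k) % k, Nat.mod_lt _ hk, ?_⟩
    have hm : (r + (i + k - r % k) % k) % k = i := by
      rw [Nat.add_mod, Nat.mod_mod_of_dvd _ (dvd_refl k), ← Nat.add_mod]
      have hdm := Nat.div_add_mod r k
      have hlt := Nat.mod_lt r hk
      have h3 : r + (i + k - r % k) = i + k * (r / k) + k := by omega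
      rw [h3, Nat.add_mod_right, Nat.add_mul_mod_self_left,
        Nat.mod_eq_of_lt hi]
    rw [periodic_eq_mod hk H hp, hm]


variable {α : Type*} [DecidableEq α]

lemma accum {d : ℕ} (F : ℕ → Finset α)
    (hcard : ∀ i, (F i).card = d)
    (hadj : ∀ i, (F i ∪ F (i + 1)).card = d + 1)
    (B : Finset α) (T : Finset (Finset α))
    (hB : F 0 ⊆ B) (hT : ∀ τ ∈ T, τ ⊆ B) (m : ℕ) :
    F m ⊆ B ∪ (range m).biUnion (fun i => F i ∪ F (i + 1)) ∧
    (B ∪ (range m).biUnion (fun i => F i ∪ F (i + 1))).card ≤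
      B.card + ((range m).image (fun i => F i ∪ F (i + 1)) \ T).card := by
  induction m with
  | zero => simpa using hB
  | succ m ih =>
    have hrs : range (m + 1) = insert m (range m) := Finset.range_add_one
    have hA : B ∪ (range (m + 1)).biUnion (fun i => F i ∪ F (i + 1)) =
        (B ∪ (range m).biUnion (fun i => F i ∪ F (i + 1))) ∪ (F m ∪ F (m + 1)) := by
      rw [hrs, Finset.biUnion_insert]
      ac_rfl
    constructor
    · intro a ha
      rw [hA]
      exact mem_union_right _ (mem_union_right _ ha)
    · by_cases hseen : (F m ∪ F (m + 1)) ∈ T ∨ (F m ∪ F (m + 1)) ∈ (range m).image (fun i => F i ∪ F (i + 1))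
      · have hsub : F m ∪ F (m + 1) ⊆ B ∪ (range m).biUnion (fun i => F i ∪ F (i + 1)) := by
          rcases hseen with h | h
          · exact (hT _ h).trans subset_union_left
          · obtain ⟨j, hj, hje⟩ := mem_image.mp h
            rw [← hje]
            exact (Finset.subset_biUnion_of_mem (fun i => F i ∪ F (i + 1)) hj).trans subset_union_right
        rw [hA, union_eq_left.mpr hsub]
        refine ih.2.trans (Nat.add_le_add_left (card_le_card ?_) _)
        exact sdiff_subset_sdiff (image_subset_image (by rw [hrs]; exact subset_insert _ _)) le_rfl
      · push_neg at hseen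
        have hFm : F m ⊆ B ∪ (range m).biUnion (fun i => F i ∪ F (i + 1)) := ih.1
        have hsub2 : B ∪ (range (m + 1)).biUnion (fun i => F i ∪ F (i + 1)) ⊆
            (B ∪ (range m).biUnion (fun i => F i ∪ F (i + 1))) ∪ ((F m ∪ F (m + 1)) \ F m) := by
          rw [hA]
          intro a ha
          rcases mem_union.mp ha with h | h
          · exact mem_union_left _ h
          · by_cases haF : a ∈ F m
            · exact mem_union_left _ (hFm haF)
            · exact mem_union_right _ (mem_sdiff.mpr ⟨h, haF⟩)
        have hc1 : ((F m ∪ F (m + 1)) \ F m).card = 1 := by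
          rw [card_sdiff_of_subset subset_union_left, hadj m, hcard m]; omega
        have himg : (range (m + 1)).image (fun i => F i ∪ F (i + 1)) \ T =
            insert (F m ∪ F (m + 1)) ((range m).image (fun i => F i ∪ F (i + 1)) \ T) := by
          rw [hrs, image_insert, insert_sdiff_of_notMem _ hseen.1]
        have hnotmem : (F m ∪ F (m + 1)) ∉ (range m).image (fun i => F i ∪ F (i + 1)) \ T :=
          fun h => hseen.2 (mem_sdiff.mp h).1
        calc (B ∪ (range (m + 1)).biUnion (fun i => F i ∪ F (i + 1))).card
            ≤ (B ∪ (range m).biUnion (fun i => F i ∪ F (i + 1))).card + 1 := by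
              refine (card_le_card hsub2).trans ?_
              refine (card_union_le _ _).trans ?_
              rw [hc1]
          _ ≤ B.card + ((range (m + 1)).image (fun i => F i ∪ F (i + 1)) \ T).card := by
              rw [himg, card_insert_of_notMem hnotmem]
              have := ih.2
              omega
              

lemma stepUnion (F : ℕ → Finset α) (k : ℕ) :
    (range k).biUnion (fun i => F i ∪ F (i + 1)) =
      ((range k).image (fun i => F i ∪ F (i + 1))).biUnion id := by
  ext a
  simp only [mem_biUnion, mem_image, mem_range, id]
  constructor
  · rintro ⟨i, hi, ha⟩
    exact ⟨F i ∪ F (i + 1), ⟨i, hi, rfl⟩, ha⟩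
  · rintro ⟨τ, ⟨i, hi, rfl⟩, ha⟩
    exact ⟨i, hi, ha⟩

lemma word_bound_basic {d k : ℕ} (F : ℕ → Finset α)
    (hcard : ∀ i, (F i).card = d)
    (hadj : ∀ i, (F i ∪ F (i + 1)).card = d + 1)
    (B : Finset α) (T : Finset (Finset α))
    (hB : F 0 ⊆ B) (hT : ∀ τ ∈ T, τ ⊆ B) :
    (B ∪ ((range k).image (fun i => F i ∪ F (i + 1))).biUnion id).card ≤
      B.card + ((range k).image (fun i => F i ∪ F (i + 1)) \ T).card := by
  rw [← stepUnion]
  exact (accum F hcard hadj B T hB hT k).2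

lemma word_bound_saved {d k : ℕ} (hk : 0 < k) (F : ℕ → Finset α)
    (hcard : ∀ i, (F i).card = d)
    (hadj : ∀ i, (F i ∪ F (i + 1)).card = d + 1)
    (hper : ∀ i, F (i + k) = F i)
    (B : Finset α) (T : Finset (Finset α))
    (hB : F 0 ⊆ B) (hT : ∀ τ ∈ T, τ ⊆ B)
    (hnew : ∀ i < k - 1, F i ∪ F (i + 1) ≠ F (k - 1) ∪ F k)
    (hTnew : F (k - 1) ∪ F k ∉ T) :
    (B ∪ ((range k).image (fun i => F i ∪ F (i + 1))).biUnion id).card + 1 ≤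
      B.card + ((range k).image (fun i => F i ∪ F (i + 1)) \ T).card := by
  obtain ⟨k', rfl⟩ : ∃ k', k = k' + 1 := ⟨k - 1, by omega⟩
  simp only [Nat.add_sub_cancel] at hnew hTnew
  rw [← stepUnion]
  obtain ⟨hsub, hcd⟩ := accum F hcard hadj B T hB hT k'
  have hFk : F (k' + 1) = F 0 := by simpa using hper 0
  have hstep_sub : F k' ∪ F (k' + 1) ⊆ B ∪ (range k').biUnion (fun i => F i ∪ F (i + 1)) :=
    union_subset hsub (by rw [hFk]; exact hB.trans subset_union_left)
  have hAk : B ∪ (range (k' + 1)).biUnion (fun i => F i ∪ F (i + 1)) =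
      B ∪ (range k').biUnion (fun i => F i ∪ F (i + 1)) := by
    rw [Finset.range_add_one, Finset.biUnion_insert]
    apply subset_antisymm
    · intro a ha
      rcases mem_union.mp ha with h | h
      · exact mem_union_left _ h
      · rcases mem_union.mp h with h2 | h2
        · exact hstep_sub h2
        · exact mem_union_right _ h2
    · intro a ha
      rcases mem_union.mp ha with h | h
      · exact mem_union_left _ h
      · exact mem_union_right _ (mem_union_right _ h)
  have hnotimg : F k' ∪ F (k' + 1) ∉ (range k').image (fun i => F i ∪ F (i + 1)) := by
    intro h
    obtain ⟨i, hi, hie⟩ := mem_image.mp h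
    exact hnew i (mem_range.mp hi) hie
  have himg : (range (k' + 1)).image (fun i => F i ∪ F (i + 1)) \ T =
      insert (F k' ∪ F (k' + 1)) ((range k').image (fun i => F i ∪ F (i + 1)) \ T) := by
    rw [Finset.range_add_one, image_insert, insert_sdiff_of_notMem _ hTnew]
  rw [hAk, himg, card_insert_of_notMem (fun h => hnotimg (mem_sdiff.mp h).1)]
  omega

lemma step_per {k : ℕ} (G : ℕ → Finset α) (hGp : ∀ i, G (i + k) = G i) :
    ∀ i, G (i + k) ∪ G (i + k + 1) = G i ∪ G (i + 1) := by
  intro i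
  rw [hGp i, show i + k + 1 = (i + 1) + k by omega, hGp (i + 1)]

lemma attach_second {d l : ℕ} (hl : 0 < l) (G : ℕ → Finset α)
    (hGc : ∀ i, (G i).card = d)
    (hGa : ∀ i, (G i ∪ G (i + 1)).card = d + 1)
    (hGp : ∀ i, G (i + l) = G i)
    (SF : Finset (Finset α))
    (hτ : ∃ j0 < l, G j0 ∪ G (j0 + 1) ∈ SF) :
    (SF.biUnion id ∪ ((range l).image (fun i => G i ∪ G (i + 1))).biUnion id).card ≤
      (SF.biUnion id).card + ((range l).image (fun i => G i ∪ G (i + 1)) \ SF).card := by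
  obtain ⟨j0, hj0, hmem⟩ := hτ
  have himg : (range l).image (fun i => G (j0 + i) ∪ G (j0 + i + 1)) =
      (range l).image (fun i => G i ∪ G (i + 1)) :=
    image_shift hl (fun i => G i ∪ G (i + 1)) (step_per G hGp) j0
  have h : (SF.biUnion id ∪
        ((range l).image (fun i => G (j0 + i) ∪ G (j0 + i + 1))).biUnion id).card ≤
      (SF.biUnion id).card +
        ((range l).image (fun i => G (j0 + i) ∪ G (j0 + i + 1)) \ SF).card :=
    word_bound_basic (k := l) (fun i => G (j0 + i))
      (fun i => hGc _) (fun i => hGa (j0 + i)) (SF.biUnion id) SF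
      (by
        show G (j0 + 0) ⊆ SF.biUnion id
        refine subset_trans ?_ (subset_biUnion_of_mem id hmem)
        exact subset_union_left)
      (fun τ hτ' => subset_biUnion_of_mem id hτ')
  rw [himg] at h
  exact h

lemma first_basic {d k : ℕ} (hk : 0 < k) (F : ℕ → Finset α)
    (hFc : ∀ i, (F i).card = d)
    (hFa : ∀ i, (F i ∪ F (i + 1)).card = d + 1) :
    (((range k).image (fun i => F i ∪ F (i + 1))).biUnion id).card ≤
      d + ((range k).image (fun i => F i ∪ F (i + 1))).card := by
  have habs : F 0 ∪ ((range k).image (fun i => F i ∪ F (i + 1))).biUnion id =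
      ((range k).image (fun i => F i ∪ F (i + 1))).biUnion id := by
    apply union_eq_right.mpr
    refine subset_trans subset_union_left
      (subset_biUnion_of_mem id (mem_image_of_mem _ (mem_range.mpr hk)))
  have h := word_bound_basic (k := k) F hFc hFa (F 0) ∅ subset_rfl (by simp)
  rw [habs, sdiff_empty, hFc 0] at h
  exact h

lemma first_saved {d k : ℕ} (hk : 0 < k) (F : ℕ → Finset α)
    (hFc : ∀ i, (F i).card = d)
    (hFa : ∀ i, (F i ∪ F (i + 1)).card = d + 1)
    (hFp : ∀ i, F (i + k) = F i)
    (huniq : ∃ j < k, ∀ i < k, F i ∪ F (i + 1) = F j ∪ F (j + 1) → i = j) :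
    (((range k).image (fun i => F i ∪ F (i + 1))).biUnion id).card + 1 ≤
      d + ((range k).image (fun i => F i ∪ F (i + 1))).card := by
  obtain ⟨j, hj, huj⟩ := huniq
  set F' : ℕ → Finset α := fun i => F (j + 1 + i) with hF'
  have hstep' : ∀ i, F' i ∪ F' (i + 1) = F (j + 1 + i) ∪ F ((j + 1 + i) + 1) := fun i => rfl
  have hper' : ∀ i, F' (i + k) = F' i := by
    intro i
    show F (j + 1 + (i + k)) = F (j + 1 + i)
    rw [show j + 1 + (i + k) = (j + 1 + i) + k by omega, hFp]
  have hlast : F' (k - 1) ∪ F' k = F j ∪ F (j + 1) := by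
    obtain ⟨k', rfl⟩ : ∃ k', k = k' + 1 := ⟨k - 1, by omega⟩
    show F (j + 1 + k') ∪ F (j + 1 + k' + 1) = _
    rw [show j + 1 + k' = j + (k' + 1) by omega]
    exact step_per F hFp j
  have hnew : ∀ i < k - 1, F' i ∪ F' (i + 1) ≠ F' (k - 1) ∪ F' k := by
    intro i hi hcontra
    rw [hlast, hstep'] at hcontra
    have hmod := periodic_eq_mod hk (fun i => F i ∪ F (i + 1)) (step_per F hFp) (j + 1 + i)
    rw [hmod] at hcontra
    have h1 : (j + 1 + i) % k < k := Nat.mod_lt _ hk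
    have h2 := huj _ h1 hcontra
    rcases lt_or_ge (j + 1 + i) k with h3 | h3
    · rw [Nat.mod_eq_of_lt h3] at h2; omega
    · have h4 : j + 1 + i < 2 * k := by omega
      rw [Nat.mod_eq_sub_mod h3, Nat.mod_eq_of_lt (by omega)] at h2
      omega
  have himg : (range k).image (fun i => F' i ∪ F' (i + 1)) =
      (range k).image (fun i => F i ∪ F (i + 1)) :=
    image_shift hk (fun i => F i ∪ F (i + 1)) (step_per F hFp) (j + 1)
  have habs : F' 0 ∪ ((range k).image (fun i => F' i ∪ F' (i + 1))).biUnion id =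
      ((range k).image (fun i => F' i ∪ F' (i + 1))).biUnion id := by
    apply union_eq_right.mpr
    refine subset_trans subset_union_left
      (subset_biUnion_of_mem id (mem_image_of_mem _ (mem_range.mpr hk)))
  have h : (F' 0 ∪ ((range k).image (fun i => F' i ∪ F' (i + 1))).biUnion id).card + 1 ≤
      (F' 0).card + ((range k).image (fun i => F' i ∪ F' (i + 1)) \ ∅).card :=
    word_bound_saved hk F' (fun i => hFc _) (fun i => hFa _) hper'
      (F' 0) ∅ subset_rfl (by simp) hnew (by simp)
  rw [habs, sdiff_empty, hFc, himg] at h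
  exact h

lemma bridge {n k d : ℕ} (hk : 2 ≤ k) (w : Fin (k + 1) → Finset (Fin n))
    (hcard : ∀ i, (w i).card = d)
    (hadj : ∀ i : Fin k, (w i.castSucc ∪ w i.succ).card = d + 1)
    (hclosed : w 0 = w (Fin.last k)) :
    ∃ W : ℕ → Finset (Fin n),
      (∀ i, (W i).card = d) ∧ (∀ i, (W i ∪ W (i + 1)).card = d + 1) ∧
      (∀ i, W (i + k) = W i) ∧
      (range k).image (fun i => W i ∪ W (i + 1)) = wordDSupp k w ∧
      (∀ τ, wordN k w τ = ((range k).filter (fun i => W i ∪ W (i + 1) = τ)).card) ∧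
      Finset.univ.biUnion w = ((range k).image (fun i => W i ∪ W (i + 1))).biUnion id := by
  have hk0 : 0 < k := by omega
  set W : ℕ → Finset (Fin n) :=
    fun i => w ⟨i % k, lt_trans (Nat.mod_lt i hk0) (Nat.lt_succ_self k)⟩ with hWdef
  have hWval : ∀ i (h : i < k + 1), i % k = i % k → W i = w ⟨i % k, lt_trans (Nat.mod_lt i hk0) (Nat.lt_succ_self k)⟩ := fun _ _ _ => rfl
  have hstep : ∀ i : Fin k, W i.val ∪ W (i.val + 1) = w i.castSucc ∪ w i.succ := by
    intro i
    have h1 : W i.val = w i.castSucc := by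
      show w _ = w _
      congr 1
      exact Fin.ext (by simp [Nat.mod_eq_of_lt i.isLt])
    have h2 : W (i.val + 1) = w i.succ := by
      show w _ = w _
      rcases eq_or_lt_of_le (Nat.succ_le_of_lt i.isLt) with h | h
      · have hik1 : i.val + 1 = k := by omega
        have hmod : (i.val + 1) % k = 0 := by rw [hik1, Nat.mod_self]
        have hsucc : i.succ = Fin.last k := Fin.ext (by simp [Fin.val_succ, hik1])
        rw [hsucc, ← hclosed]
        congr 1
        exact Fin.ext (by simp [hmod])
      · congr 1
        exact Fin.ext (by simp [Nat.mod_eq_of_lt h])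
    rw [h1, h2]
  have hper : ∀ i, W (i + k) = W i := by
    intro i
    show w _ = w _
    congr 1
    exact Fin.ext (by simp [Nat.add_mod_right])
  have hstepmod : ∀ i, W i ∪ W (i + 1) = W (i % k) ∪ W ((i % k) + 1) := by
    intro i
    have e1 : W i = W (i % k) := by
      show w _ = w _
      congr 1
      exact Fin.ext (by simp [Nat.mod_mod_of_dvd i (dvd_refl k)])
    have e2 : W (i + 1) = W ((i % k) + 1) := by
      show w _ = w _
      congr 1
      refine Fin.ext ?_
      show (i + 1) % k = (i % k + 1) % k
      conv_lhs => rw [Nat.add_mod]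
      rw [Nat.mod_eq_of_lt (show 1 < k by omega)]
    rw [e1, e2]
  have hadjN : ∀ i, (W i ∪ W (i + 1)).card = d + 1 := by
    intro i
    rw [hstepmod i]
    have := hstep ⟨i % k, Nat.mod_lt i hk0⟩
    simp only at this
    rw [this]
    exact hadj _
  refine ⟨W, fun i => hcard _, hadjN, hper, ?_, ?_, ?_⟩
  · ext τ
    unfold wordDSupp
    simp only [mem_image, mem_range, mem_univ, true_and]
    constructor
    · rintro ⟨i, hi, hτ⟩
      exact ⟨⟨i, hi⟩, by rw [← hstep ⟨i, hi⟩]; exact hτ⟩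
    · rintro ⟨i, hτ⟩
      exact ⟨i.val, i.isLt, by rw [hstep i]; exact hτ⟩
  · intro τ
    unfold wordN
    apply Finset.card_bij (fun (i : Fin k) _ => i.val)
    · intro a ha
      simp only [mem_filter, mem_range]
      exact ⟨a.isLt, by rw [hstep a]; exact (mem_filter.mp ha).2⟩
    · intro a _ b _ h
      exact Fin.ext h
    · intro b hb
      obtain ⟨hb1, hb2⟩ := mem_filter.mp hb
      have hblt := mem_range.mp hb1
      exact ⟨⟨b, hblt⟩, mem_filter.mpr ⟨mem_univ _, by rw [← hstep ⟨b, hblt⟩]; exact hb2⟩, rfl⟩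
  · ext v
    simp only [mem_biUnion, mem_univ, true_and, mem_image, mem_range, id]
    constructor
    · rintro ⟨i, hv⟩
      by_cases hik : i.val < k
      · refine ⟨W i.val ∪ W (i.val + 1), ⟨i.val, hik, rfl⟩, ?_⟩
        rw [hstep ⟨i.val, hik⟩]
        apply mem_union_left
        have : Fin.castSucc ⟨i.val, hik⟩ = i := Fin.ext rfl
        rw [this]
        exact hv
      · have hik2 : i = Fin.last k := Fin.ext (by
          have := i.isLt
          simp only [Fin.val_last]
          omega)
        refine ⟨W 0 ∪ W 1, ⟨0, hk0, rfl⟩, ?_⟩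
        rw [hstep ⟨0, hk0⟩]
        apply mem_union_left
        have h0 : Fin.castSucc (⟨0, hk0⟩ : Fin k) = (0 : Fin (k + 1)) := Fin.ext rfl
        rw [h0, hclosed, ← hik2]
        exact hv
    · rintro ⟨τ, ⟨i, hik, rfl⟩, hv⟩
      rw [hstep ⟨i, hik⟩] at hv
      rcases mem_union.mp hv with h | h
      · exact ⟨_, h⟩
      · exact ⟨_, h⟩

end Aux

/-- Let `a = (w¹, w²)` be a pair of closed `(n,d)`-words of lengths `k+1` and `l+1`
(`k, l ≥ 2`) whose `d`-simplex supports intersect and such that every `d`-simplex of the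
combined support is traversed at least twice (counting both words). Then the combined
vertex support has at most `⌊(k+l)/2⌋ + d - 1` vertices. -/
theorem stmt11 (n d k l : ℕ) (hd : 1 ≤ d) (hk : 2 ≤ k) (hl : 2 ≤ l)
    (w1 : Fin (k + 1) → Finset (Fin n)) (w2 : Fin (l + 1) → Finset (Fin n))
    (h1card : ∀ i, (w1 i).card = d) (h2card : ∀ i, (w2 i).card = d)
    (h1adj : ∀ i : Fin k, (w1 i.castSucc ∪ w1 i.succ).card = d + 1)
    (h2adj : ∀ i : Fin l, (w2 i.castSucc ∪ w2 i.succ).card = d + 1)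
    (h1closed : w1 0 = w1 (Fin.last k)) (h2closed : w2 0 = w2 (Fin.last l))
    (hint : (wordDSupp k w1 ∩ wordDSupp l w2).Nonempty)
    (hN : ∀ τ ∈ wordDSupp k w1 ∪ wordDSupp l w2,
      2 ≤ wordN k w1 τ + wordN l w2 τ) :
    (Finset.univ.biUnion w1 ∪ Finset.univ.biUnion w2).card ≤ (k + l) / 2 + d - 1 := by
  have hk0 : 0 < k := by omega
  have hl0 : 0 < l := by omega
  obtain ⟨W1, hc1, ha1, hp1, hS1, hNb1, hV1⟩ := bridge hk w1 h1card h1adj h1closed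
  obtain ⟨W2, hc2, ha2, hp2, hS2, hNb2, hV2⟩ := bridge hl w2 h2card h2adj h2closed
  rw [hV1, hV2]
  -- abbreviations (not `set`, to keep syntactic forms)
  obtain ⟨τs, hτs⟩ := hint
  rw [mem_inter] at hτs
  have hτs1 : τs ∈ (range k).image (fun i => W1 i ∪ W1 (i + 1)) := by rw [hS1]; exact hτs.1
  have hτs2 : τs ∈ (range l).image (fun i => W2 i ∪ W2 (i + 1)) := by rw [hS2]; exact hτs.2
  have hτ2 : ∃ j0 < l, W2 j0 ∪ W2 (j0 + 1) ∈ (range k).image (fun i => W1 i ∪ W1 (i + 1)) := by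
    obtain ⟨j0, hj0, hje⟩ := mem_image.mp hτs2
    exact ⟨j0, mem_range.mp hj0, by rw [hje]; exact hτs1⟩
  have hτ1 : ∃ j0 < k, W1 j0 ∪ W1 (j0 + 1) ∈ (range l).image (fun i => W2 i ∪ W2 (i + 1)) := by
    obtain ⟨j0, hj0, hje⟩ := mem_image.mp hτs1
    exact ⟨j0, mem_range.mp hj0, by rw [hje]; exact hτs2⟩
  -- total traversal count
  have hsum1 : ∑ τ ∈ (range k).image (fun i => W1 i ∪ W1 (i + 1)) ∪
      (range l).image (fun i => W2 i ∪ W2 (i + 1)),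
      ((range k).filter (fun i => W1 i ∪ W1 (i + 1) = τ)).card = k := by
    have h := Finset.card_eq_sum_card_fiberwise (s := range k)
      (f := fun i => W1 i ∪ W1 (i + 1))
      (t := (range k).image (fun i => W1 i ∪ W1 (i + 1)) ∪
        (range l).image (fun i => W2 i ∪ W2 (i + 1)))
      (fun i hi => mem_union_left _ (mem_image_of_mem _ hi))
    rw [card_range] at h
    exact h.symm
  have hsum2 : ∑ τ ∈ (range k).image (fun i => W1 i ∪ W1 (i + 1)) ∪
      (range l).image (fun i => W2 i ∪ W2 (i + 1)),
      ((range l).filter (fun i => W2 i ∪ W2 (i + 1) = τ)).card = l := by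
    have h := Finset.card_eq_sum_card_fiberwise (s := range l)
      (f := fun i => W2 i ∪ W2 (i + 1))
      (t := (range k).image (fun i => W1 i ∪ W1 (i + 1)) ∪
        (range l).image (fun i => W2 i ∪ W2 (i + 1)))
      (fun i hi => mem_union_right _ (mem_image_of_mem _ hi))
    rw [card_range] at h
    exact h.symm
  have hcardS : 2 * ((range k).image (fun i => W1 i ∪ W1 (i + 1)) ∪
      (range l).image (fun i => W2 i ∪ W2 (i + 1))).card ≤ k + l := by
    have h2le : ∀ τ ∈ (range k).image (fun i => W1 i ∪ W1 (i + 1)) ∪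
        (range l).image (fun i => W2 i ∪ W2 (i + 1)),
        2 ≤ ((range k).filter (fun i => W1 i ∪ W1 (i + 1) = τ)).card +
          ((range l).filter (fun i => W2 i ∪ W2 (i + 1) = τ)).card := by
      intro τ hτ
      have hmem : τ ∈ wordDSupp k w1 ∪ wordDSupp l w2 := by
        rw [← hS1, ← hS2]; exact hτ
      have := hN τ hmem
      rwa [hNb1 τ, hNb2 τ] at this
    calc 2 * ((range k).image (fun i => W1 i ∪ W1 (i + 1)) ∪
          (range l).image (fun i => W2 i ∪ W2 (i + 1))).card
        = ∑ _τ ∈ (range k).image (fun i => W1 i ∪ W1 (i + 1)) ∪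
          (range l).image (fun i => W2 i ∪ W2 (i + 1)), 2 := by
          rw [sum_const, smul_eq_mul, mul_comm]
      _ ≤ ∑ τ ∈ (range k).image (fun i => W1 i ∪ W1 (i + 1)) ∪
          (range l).image (fun i => W2 i ∪ W2 (i + 1)),
          (((range k).filter (fun i => W1 i ∪ W1 (i + 1) = τ)).card +
            ((range l).filter (fun i => W2 i ∪ W2 (i + 1) = τ)).card) := sum_le_sum h2le
      _ = k + l := by rw [sum_add_distrib, hsum1, hsum2]
  by_cases hA : ∃ τ ∈ wordDSupp k w1, wordN k w1 τ = 1
  · -- w1 traverses some simplex exactly once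
    obtain ⟨τ0, hτ0mem, hτ0one⟩ := hA
    have hτ0S1 : τ0 ∈ (range k).image (fun i => W1 i ∪ W1 (i + 1)) := by
      rw [hS1]; exact hτ0mem
    obtain ⟨j, hjr, hje⟩ := mem_image.mp hτ0S1
    have hj := mem_range.mp hjr
    have huniq : ∀ i < k, W1 i ∪ W1 (i + 1) = W1 j ∪ W1 (j + 1) → i = j := by
      intro i hi he
      have h1 : ((range k).filter (fun i => W1 i ∪ W1 (i + 1) = τ0)).card = 1 := by
        rw [← hNb1 τ0]; exact hτ0one
      obtain ⟨a, ha⟩ := card_eq_one.mp h1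
      have hjmem : j ∈ (range k).filter (fun i => W1 i ∪ W1 (i + 1) = τ0) :=
        mem_filter.mpr ⟨hjr, hje⟩
      have himem : i ∈ (range k).filter (fun i => W1 i ∪ W1 (i + 1) = τ0) :=
        mem_filter.mpr ⟨mem_range.mpr hi, by rw [he, hje]⟩
      rw [ha, mem_singleton] at hjmem himem
      rw [himem, hjmem]
    have hfirst := first_saved (d := d) hk0 W1 hc1 ha1 hp1 ⟨j, hj, huniq⟩
    have hsecond := attach_second (d := d) hl0 W2 hc2 ha2 hp2
      ((range k).image (fun i => W1 i ∪ W1 (i + 1))) hτ2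
    have hsplit : ((range l).image (fun i => W2 i ∪ W2 (i + 1)) \
          (range k).image (fun i => W1 i ∪ W1 (i + 1))).card +
        ((range k).image (fun i => W1 i ∪ W1 (i + 1))).card =
        ((range l).image (fun i => W2 i ∪ W2 (i + 1)) ∪
          (range k).image (fun i => W1 i ∪ W1 (i + 1))).card := card_sdiff_add_card _ _
    rw [union_comm] at hsplit
    omega
  by_cases hB : ∃ τ ∈ wordDSupp l w2, wordN l w2 τ = 1
  · -- w2 traverses some simplex exactly once
    obtain ⟨τ0, hτ0mem, hτ0one⟩ := hB
    have hτ0S2 : τ0 ∈ (range l).image (fun i => W2 i ∪ W2 (i + 1)) := by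
      rw [hS2]; exact hτ0mem
    obtain ⟨j, hjr, hje⟩ := mem_image.mp hτ0S2
    have hj := mem_range.mp hjr
    have huniq : ∀ i < l, W2 i ∪ W2 (i + 1) = W2 j ∪ W2 (j + 1) → i = j := by
      intro i hi he
      have h1 : ((range l).filter (fun i => W2 i ∪ W2 (i + 1) = τ0)).card = 1 := by
        rw [← hNb2 τ0]; exact hτ0one
      obtain ⟨a, ha⟩ := card_eq_one.mp h1
      have hjmem : j ∈ (range l).filter (fun i => W2 i ∪ W2 (i + 1) = τ0) :=
        mem_filter.mpr ⟨hjr, hje⟩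
      have himem : i ∈ (range l).filter (fun i => W2 i ∪ W2 (i + 1) = τ0) :=
        mem_filter.mpr ⟨mem_range.mpr hi, by rw [he, hje]⟩
      rw [ha, mem_singleton] at hjmem himem
      rw [himem, hjmem]
    have hfirst := first_saved (d := d) hl0 W2 hc2 ha2 hp2 ⟨j, hj, huniq⟩
    have hsecond := attach_second (d := d) hk0 W1 hc1 ha1 hp1
      ((range l).image (fun i => W2 i ∪ W2 (i + 1))) hτ1
    have hsplit : ((range k).image (fun i => W1 i ∪ W1 (i + 1)) \
          (range l).image (fun i => W2 i ∪ W2 (i + 1))).card +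
        ((range l).image (fun i => W2 i ∪ W2 (i + 1))).card =
        ((range k).image (fun i => W1 i ∪ W1 (i + 1)) ∪
          (range l).image (fun i => W2 i ∪ W2 (i + 1))).card := card_sdiff_add_card _ _
    have hgoal : (((range k).image (fun i => W1 i ∪ W1 (i + 1))).biUnion id ∪
        ((range l).image (fun i => W2 i ∪ W2 (i + 1))).biUnion id).card =
        (((range l).image (fun i => W2 i ∪ W2 (i + 1))).biUnion id ∪
        ((range k).image (fun i => W1 i ∪ W1 (i + 1))).biUnion id).card := by
      rw [union_comm]
    omega
  · -- every simplex is traversed at least twice by the word containing it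
    push_neg at hA hB
    have h2S1 : ∀ τ ∈ (range k).image (fun i => W1 i ∪ W1 (i + 1)),
        2 ≤ ((range k).filter (fun i => W1 i ∪ W1 (i + 1) = τ)).card := by
      intro τ hτ
      have hne := hA τ (by rw [← hS1]; exact hτ)
      rw [hNb1 τ] at hne
      obtain ⟨j, hjr, hje⟩ := mem_image.mp hτ
      have hpos : 0 < ((range k).filter (fun i => W1 i ∪ W1 (i + 1) = τ)).card :=
        card_pos.mpr ⟨j, mem_filter.mpr ⟨hjr, hje⟩⟩
      omega
    have h2S2 : ∀ τ ∈ (range l).image (fun i => W2 i ∪ W2 (i + 1)),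
        2 ≤ ((range l).filter (fun i => W2 i ∪ W2 (i + 1) = τ)).card := by
      intro τ hτ
      have hne := hB τ (by rw [← hS2]; exact hτ)
      rw [hNb2 τ] at hne
      obtain ⟨j, hjr, hje⟩ := mem_image.mp hτ
      have hpos : 0 < ((range l).filter (fun i => W2 i ∪ W2 (i + 1) = τ)).card :=
        card_pos.mpr ⟨j, mem_filter.mpr ⟨hjr, hje⟩⟩
      omega
    have hhalf1 : 2 * ((range k).image (fun i => W1 i ∪ W1 (i + 1))).card ≤ k := by
      have hfib : ((range k).card : ℕ) = ∑ τ ∈ (range k).image (fun i => W1 i ∪ W1 (i + 1)),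
          ((range k).filter (fun i => W1 i ∪ W1 (i + 1) = τ)).card :=
        Finset.card_eq_sum_card_fiberwise (fun i hi => mem_image_of_mem _ hi)
      calc 2 * ((range k).image (fun i => W1 i ∪ W1 (i + 1))).card
          = ∑ _τ ∈ (range k).image (fun i => W1 i ∪ W1 (i + 1)), 2 := by
            rw [sum_const, smul_eq_mul, mul_comm]
        _ ≤ ∑ τ ∈ (range k).image (fun i => W1 i ∪ W1 (i + 1)),
            ((range k).filter (fun i => W1 i ∪ W1 (i + 1) = τ)).card := sum_le_sum h2S1
        _ = k := by rw [← hfib, card_range]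
    have hhalf2 : 2 * ((range l).image (fun i => W2 i ∪ W2 (i + 1))).card ≤ l := by
      have hfib : ((range l).card : ℕ) = ∑ τ ∈ (range l).image (fun i => W2 i ∪ W2 (i + 1)),
          ((range l).filter (fun i => W2 i ∪ W2 (i + 1) = τ)).card :=
        Finset.card_eq_sum_card_fiberwise (fun i hi => mem_image_of_mem _ hi)
      calc 2 * ((range l).image (fun i => W2 i ∪ W2 (i + 1))).card
          = ∑ _τ ∈ (range l).image (fun i => W2 i ∪ W2 (i + 1)), 2 := by
            rw [sum_const, smul_eq_mul, mul_comm]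
        _ ≤ ∑ τ ∈ (range l).image (fun i => W2 i ∪ W2 (i + 1)),
            ((range l).filter (fun i => W2 i ∪ W2 (i + 1) = τ)).card := sum_le_sum h2S2
        _ = l := by rw [← hfib, card_range]
    have hfirst := first_basic (d := d) hk0 W1 hc1 ha1
    have hsecond := attach_second (d := d) hl0 W2 hc2 ha2 hp2
      ((range k).image (fun i => W1 i ∪ W1 (i + 1))) hτ2
    have hssub : ((range l).image (fun i => W2 i ∪ W2 (i + 1)) \
        (range k).image (fun i => W1 i ∪ W1 (i + 1))).card + 1 ≤
        ((range l).image (fun i => W2 i ∪ W2 (i + 1))).card := by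
      have hss : (range l).image (fun i => W2 i ∪ W2 (i + 1)) \
          (range k).image (fun i => W1 i ∪ W1 (i + 1)) ⊂
          (range l).image (fun i => W2 i ∪ W2 (i + 1)) := by
        refine ⟨sdiff_subset, fun hsub => ?_⟩
        exact (mem_sdiff.mp (hsub hτs2)).2 hτs1
      exact card_lt_card hss
    omega
end

section
/- Let a < b and let f : ℝ → ℝ be twice continuously differentiable on an open neighborhood of [a,b]. Then there exists a sequence (P_m) of real polynomial functions such that sup_{x∈[a,b]} |f'(x) - P_m'(x)| → 0 as m → ∞ and, for each m, the function f - P_m is strictly convex on [a,b]. -/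
open Filter

open Polynomial in
/-- Antiderivative of a real polynomial. -/
noncomputable def pint (p : ℝ[X]) : ℝ[X] := p.sum fun n c => C (c / (n + 1)) * X ^ (n + 1)

open Polynomial in
lemma pint_derivative (p : ℝ[X]) : (pint p).derivative = p := by
  conv_rhs => rw [← p.sum_C_mul_X_pow_eq]
  rw [pint, Polynomial.sum, map_sum, Polynomial.sum]
  refine Finset.sum_congr rfl fun n _ => ?_
  rw [derivative_C_mul, derivative_X_pow, ← mul_assoc, ← C_mul, add_tsub_cancel_right]
  congr 1
  push_cast
  rw [div_mul_cancel₀]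
  positivity

/-- For `f` of class `C²` on an open neighborhood of `[a,b]` there is a sequence of
polynomials `P_m` with `P_m' → f'` uniformly on `[a,b]` and `f - P_m` strictly convex
on `[a,b]` for each `m`. -/
theorem stmt13 (a b : ℝ) (hab : a < b) (f : ℝ → ℝ) (U : Set ℝ) (hU : IsOpen U)
    (hUab : Set.Icc a b ⊆ U) (hf : ContDiffOn ℝ 2 f U) :
    ∃ P : ℕ → Polynomial ℝ,
      Tendsto (fun m => ⨆ x : Set.Icc a b, |deriv f x - (P m).derivative.eval (x : ℝ)|)
        atTop (nhds 0) ∧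
      ∀ m, StrictConvexOn ℝ (Set.Icc a b) (fun x => f x - (P m).eval x) := by
  have hf1 : ContDiffOn ℝ 1 (deriv f) U := hf.deriv_of_isOpen hU (by norm_num)
  have hcont2 : ContinuousOn (deriv (deriv f)) U :=
    (hf1.deriv_of_isOpen (m := 0) hU (by norm_num)).continuousOn
  have hfdiff : ∀ x ∈ U, DifferentiableAt ℝ f x := fun x hx =>
    (hf.differentiableOn (by norm_num) x hx).differentiableAt (hU.mem_nhds hx)
  have hf'diff : ∀ x ∈ U, DifferentiableAt ℝ (deriv f) x := fun x hx =>
    (hf1.differentiableOn (by norm_num) x hx).differentiableAt (hU.mem_nhds hx)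
  have key : ∀ m : ℕ, ∃ P : Polynomial ℝ,
      (∀ x ∈ Set.Icc a b, |deriv f x - P.derivative.eval x| ≤ 2 * (b - a) / (m + 1)) ∧
      StrictConvexOn ℝ (Set.Icc a b) (fun x => f x - P.eval x) := by
    intro m
    set ε : ℝ := 1 / (m + 1) with hεdef
    have hε : 0 < ε := by positivity
    obtain ⟨q, hq⟩ := exists_polynomial_near_of_continuousOn a b (deriv (deriv f))
      (hcont2.mono hUab) ε hε
    set R : Polynomial ℝ := q - Polynomial.C ε with hRdef
    have hRe : ∀ x : ℝ, R.eval x = q.eval x - ε := by simp [hRdef]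
    have hpos : ∀ x ∈ Set.Icc a b, 0 < deriv (deriv f) x - R.eval x := by
      intro x hx
      have := abs_lt.1 (hq x hx)
      rw [hRe]; linarith [this.2]
    have hbd : ∀ x ∈ Set.Icc a b, deriv (deriv f) x - R.eval x ≤ 2 * ε := by
      intro x hx
      have := abs_lt.1 (hq x hx)
      rw [hRe]; linarith [this.1]
    set P : Polynomial ℝ :=
      pint (Polynomial.C (deriv f a - (pint R).eval a) + pint R) with hPdef
    have hPd : P.derivative = Polynomial.C (deriv f a - (pint R).eval a) + pint R :=
      pint_derivative _
    have hPdd : P.derivative.derivative = R := by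
      rw [hPd, Polynomial.derivative_add, Polynomial.derivative_C, pint_derivative, zero_add]
    have hPa : P.derivative.eval a = deriv f a := by
      rw [hPd]; simp
    refine ⟨P, ?_, ?_⟩
    · -- uniform bound on f' - P'
      have hg : ∀ x ∈ Set.Icc a b,
          HasDerivWithinAt (fun y => deriv f y - P.derivative.eval y)
            (deriv (deriv f) x - R.eval x) (Set.Icc a b) x := by
        intro x hx
        have h1 : HasDerivAt (deriv f) (deriv (deriv f) x) x :=
          (hf'diff x (hUab hx)).hasDerivAt
        have h2 : HasDerivAt (fun y => P.derivative.eval y) (R.eval x) x := by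
          have := Polynomial.hasDerivAt P.derivative x
          rwa [hPdd] at this
        exact (h1.sub h2).hasDerivWithinAt
      have hbound : ∀ x ∈ Set.Ico a b,
          ‖deriv (deriv f) x - R.eval x‖ ≤ 2 * ε := by
        intro x hx
        have hx' : x ∈ Set.Icc a b := Set.Ico_subset_Icc_self hx
        rw [Real.norm_eq_abs, abs_of_pos (hpos x hx')]
        exact hbd x hx'
      have hmv := norm_image_sub_le_of_norm_deriv_le_segment' hg hbound
      intro x hx
      have := hmv x hx
      rw [hPa, sub_self, sub_zero, Real.norm_eq_abs] at this
      calc |deriv f x - P.derivative.eval x| ≤ 2 * ε * (x - a) := this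
        _ ≤ 2 * ε * (b - a) := by
            apply mul_le_mul_of_nonneg_left (by linarith [hx.2]) (by positivity)
        _ = 2 * (b - a) / (m + 1) := by rw [hεdef]; ring
    · -- strict convexity
      apply strictConvexOn_of_deriv2_pos (convex_Icc a b)
      · exact ((hf.continuousOn.mono hUab).sub P.continuousOn_aeval)
      · intro x hx
        rw [interior_Icc] at hx
        have hxU : x ∈ U := hUab (Set.Ioo_subset_Icc_self hx)
        have heq : (fun y => deriv (fun z => f z - P.eval z) y)
            =ᶠ[nhds x] fun y => deriv f y - P.derivative.eval y := by
          filter_upwards [hU.mem_nhds hxU] with y hy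
          rw [deriv_fun_sub (hfdiff y hy) (P.differentiableAt)]
          simp [Polynomial.deriv]
        have hstep : deriv^[2] (fun z => f z - P.eval z) x
            = deriv (deriv f) x - R.eval x := by
          show deriv (deriv (fun z => f z - P.eval z)) x = _
          rw [heq.deriv_eq]
          rw [deriv_fun_sub (hf'diff x hxU) (P.derivative.differentiableAt)]
          congr 1
          rw [Polynomial.deriv, hPdd]
        rw [hstep]
        exact hpos x (Set.Ioo_subset_Icc_self hx)
  choose P hP1 hP2 using key
  refine ⟨P, ?_, hP2⟩
  have hne : (Set.Icc a b).Nonempty := Set.nonempty_Icc.2 hab.le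
  haveI : Nonempty (Set.Icc a b) := hne.to_subtype
  apply squeeze_zero (g := fun m : ℕ => 2 * (b - a) / (m + 1))
  · intro m
    exact Real.iSup_nonneg fun x => abs_nonneg _
  · intro m
    exact ciSup_le fun x => hP1 m x x.2
  · have := tendsto_one_div_add_atTop_nhds_zero_nat.const_mul (2 * (b - a))
    simpa [mul_one_div, div_eq_mul_inv] using this
end

section
/- Let g : ℝ → ℝ be a Lipschitz function and N a positive integer. The function F : Sym(N, ℝ) → ℝ defined by F(H) = (1/N) Σ_{i=1}^N g(λ_i(H)), where λ_1(H) ≥ … ≥ λ_N(H) are the eigenvalues of H, is Lipschitz with Lip(F) ≤ Lip(g)/√N with respect to the Frobenius norm on symmetric matrices. -/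
open Matrix Finset

private lemma perm_min_step {N : ℕ} (S : Matrix (Fin N) (Fin N) ℝ)
    (hS : S ∈ doublyStochastic ℝ (Fin N)) (c : Fin N → Fin N → ℝ) :
    ∃ σ : Equiv.Perm (Fin N), ∑ i, c i (σ i) ≤ ∑ i, ∑ j, S i j * c i j := by
  obtain ⟨w, hw0, hw1, hwS⟩ := exists_eq_sum_perm_of_mem_doublyStochastic hS
  have hSentry : ∀ i j, S i j = ∑ σ : Equiv.Perm (Fin N), w σ * (σ.permMatrix ℝ) i j := by
    intro i j
    rw [← hwS]
    simp [Matrix.sum_apply]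
  have hperm : ∀ (σ : Equiv.Perm (Fin N)) (i : Fin N),
      ∑ j, (σ.permMatrix ℝ) i j * c i j = c i (σ i) := by
    intro σ i
    simp [Equiv.Perm.permMatrix, PEquiv.toMatrix_apply, Equiv.toPEquiv_apply, ite_mul,
      Option.mem_def]
  have hRHS : ∑ i, ∑ j, S i j * c i j = ∑ σ : Equiv.Perm (Fin N), w σ * ∑ i, c i (σ i) := by
    calc ∑ i, ∑ j, S i j * c i j
        = ∑ i, ∑ σ : Equiv.Perm (Fin N), ∑ j, w σ * ((σ.permMatrix ℝ) i j * c i j) := by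
          refine Finset.sum_congr rfl fun i _ => ?_
          rw [Finset.sum_comm]
          refine Finset.sum_congr rfl fun j _ => ?_
          rw [hSentry i j, Finset.sum_mul]
          exact Finset.sum_congr rfl fun σ _ => by ring
      _ = ∑ σ : Equiv.Perm (Fin N), w σ * ∑ i, c i (σ i) := by
          rw [Finset.sum_comm]
          refine Finset.sum_congr rfl fun σ _ => ?_
          rw [Finset.mul_sum]
          exact Finset.sum_congr rfl fun i _ => by rw [← Finset.mul_sum, hperm]
  obtain ⟨σ, -, hσ⟩ := Finset.exists_min_image (Finset.univ : Finset (Equiv.Perm (Fin N)))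
    (fun σ => ∑ i, c i (σ i)) ⟨1, Finset.mem_univ 1⟩
  refine ⟨σ, ?_⟩
  rw [hRHS]
  calc ∑ i, c i (σ i) = ∑ τ : Equiv.Perm (Fin N), w τ * ∑ i, c i (σ i) := by
        rw [← Finset.sum_mul, hw1, one_mul]
    _ ≤ ∑ τ : Equiv.Perm (Fin N), w τ * ∑ i, c i (τ i) :=
        Finset.sum_le_sum fun τ _ => mul_le_mul_of_nonneg_left (hσ τ (Finset.mem_univ τ)) (hw0 τ)

private lemma spectral_real {N : ℕ} (A : Matrix (Fin N) (Fin N) ℝ) (hA : A.IsHermitian) :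
    A = (hA.eigenvectorUnitary : Matrix (Fin N) (Fin N) ℝ) * diagonal hA.eigenvalues
      * star (hA.eigenvectorUnitary : Matrix (Fin N) (Fin N) ℝ) := by
  have := hA.spectral_theorem
  simpa using this

private lemma row_sq_sum {N : ℕ} (W : Matrix (Fin N) (Fin N) ℝ)
    (hW : W ∈ unitaryGroup (Fin N) ℝ) (i : Fin N) : ∑ j, (W i j) ^ 2 = 1 := by
  have h := Matrix.mem_unitaryGroup_iff.mp hW
  have := congrFun (congrFun h i) i
  simp [mul_apply, star_apply, sq] at this ⊢
  simpa using this

private lemma col_sq_sum {N : ℕ} (W : Matrix (Fin N) (Fin N) ℝ)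
    (hW : W ∈ unitaryGroup (Fin N) ℝ) (j : Fin N) : ∑ i, (W i j) ^ 2 = 1 := by
  have h := Matrix.mem_unitaryGroup_iff'.mp hW
  have := congrFun (congrFun h j) j
  simp [mul_apply, star_apply, sq] at this ⊢
  simpa using this

private lemma cross_sum {N : ℕ} (A B : Matrix (Fin N) (Fin N) ℝ)
    (hA : A.IsHermitian) (hB : B.IsHermitian) :
    ∑ i, ∑ j, A i j * B i j =
      ∑ i, ∑ j, ((star (hA.eigenvectorUnitary : Matrix (Fin N) (Fin N) ℝ) *
        (hB.eigenvectorUnitary : Matrix (Fin N) (Fin N) ℝ)) i j) ^ 2 *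
        (hA.eigenvalues i * hB.eigenvalues j) := by
  set U := (hA.eigenvectorUnitary : Matrix (Fin N) (Fin N) ℝ) with hUdef
  set V := (hB.eigenvectorUnitary : Matrix (Fin N) (Fin N) ℝ) with hVdef
  have hU : U ∈ unitaryGroup (Fin N) ℝ := hA.eigenvectorUnitary.2
  have e1 : ∑ i, ∑ j, A i j * B i j = trace (A * B) := by
    simp only [trace, diag_apply, mul_apply]
    refine Finset.sum_congr rfl fun i _ => Finset.sum_congr rfl fun j _ => ?_
    rw [show B j i = B i j from by conv_lhs => rw [← hB]; simp [conjTranspose_apply]]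
  have e2 : trace (A * B) = trace (star U * (A * B) * U) := by
    rw [trace_mul_cycle, ← Matrix.mul_assoc, mem_unitaryGroup_iff.mp hU, one_mul]
  have e3 : star U * (A * B) * U
      = diagonal hA.eigenvalues * (star U * V) * diagonal hB.eigenvalues
        * star (star U * V) := by
    conv_lhs => rw [spectral_real A hA, spectral_real B hB]
    simp only [Matrix.star_mul, star_star, ← hUdef, ← hVdef, ← Matrix.mul_assoc]
    rw [mem_unitaryGroup_iff'.mp hU, one_mul]
  have e4 : trace (diagonal hA.eigenvalues * (star U * V) * diagonal hB.eigenvalues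
        * star (star U * V))
      = ∑ i, ∑ j, ((star U * V) i j) ^ 2 * (hA.eigenvalues i * hB.eigenvalues j) := by
    set W := star U * V
    have h : diagonal hA.eigenvalues * W * diagonal hB.eigenvalues
        = Matrix.of fun i j => hA.eigenvalues i * W i j * hB.eigenvalues j := by
      ext i j; simp [mul_diagonal, diagonal_mul]
    rw [h]
    simp only [trace, diag_apply, mul_apply, star_apply, star_trivial, of_apply]
    refine Finset.sum_congr rfl fun i _ => Finset.sum_congr rfl fun j _ => ?_
    ring
  rw [e1, e2, e3, e4]

private lemma hoffman_wielandt {N : ℕ} (A B : Matrix (Fin N) (Fin N) ℝ)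
    (hA : A.IsHermitian) (hB : B.IsHermitian) :
    ∃ σ : Equiv.Perm (Fin N),
      ∑ i, (hA.eigenvalues i - hB.eigenvalues (σ i)) ^ 2
        ≤ ∑ i, ∑ j, (A i j - B i j) ^ 2 := by
  set U := (hA.eigenvectorUnitary : Matrix (Fin N) (Fin N) ℝ)
  set V := (hB.eigenvectorUnitary : Matrix (Fin N) (Fin N) ℝ)
  have hU : U ∈ unitaryGroup (Fin N) ℝ := hA.eigenvectorUnitary.2
  have hV : V ∈ unitaryGroup (Fin N) ℝ := hB.eigenvectorUnitary.2
  set W := star U * V with hWdef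
  have hW : W ∈ unitaryGroup (Fin N) ℝ := mul_mem (Unitary.star_mem hU) hV
  set lam := hA.eigenvalues
  set mu := hB.eigenvalues
  set S : Matrix (Fin N) (Fin N) ℝ := Matrix.of fun i j => (W i j) ^ 2 with hSdef
  have hSrow : ∀ i, ∑ j, S i j = 1 := fun i => row_sq_sum W hW i
  have hScol : ∀ j, ∑ i, S i j = 1 := fun j => col_sq_sum W hW j
  have hS : S ∈ doublyStochastic ℝ (Fin N) := by
    rw [mem_doublyStochastic_iff_sum]
    exact ⟨fun i j => sq_nonneg _, hSrow, hScol⟩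
  have hAA : ∑ i, ∑ j, A i j * A i j = ∑ i, lam i ^ 2 := by
    rw [cross_sum A A hA hA]
    have h1 : star U * U = 1 := mem_unitaryGroup_iff'.mp hU
    rw [h1]
    simp [one_apply, sq, ite_mul]
    rfl
  have hBB : ∑ i, ∑ j, B i j * B i j = ∑ i, mu i ^ 2 := by
    rw [cross_sum B B hB hB]
    have h1 : star V * V = 1 := mem_unitaryGroup_iff'.mp hV
    rw [h1]
    simp [one_apply, sq, ite_mul]
    rfl
  have hAB : ∑ i, ∑ j, A i j * B i j = ∑ i, ∑ j, S i j * (lam i * mu j) :=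
    cross_sum A B hA hB
  have htotal : ∑ i, ∑ j, (A i j - B i j) ^ 2 = ∑ i, ∑ j, S i j * (lam i - mu j) ^ 2 := by
    have lhs : ∑ i, ∑ j, (A i j - B i j) ^ 2
        = (∑ i, ∑ j, A i j * A i j) - 2 * (∑ i, ∑ j, A i j * B i j)
          + ∑ i, ∑ j, B i j * B i j := by
      simp only [← Finset.sum_add_distrib, ← Finset.sum_sub_distrib, Finset.mul_sum]
      exact Finset.sum_congr rfl fun i _ => Finset.sum_congr rfl fun j _ => by ring
    have rhs : ∑ i, ∑ j, S i j * (lam i - mu j) ^ 2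
        = (∑ i, ∑ j, S i j * lam i ^ 2) - 2 * (∑ i, ∑ j, S i j * (lam i * mu j))
          + ∑ i, ∑ j, S i j * mu j ^ 2 := by
      simp only [← Finset.sum_add_distrib, ← Finset.sum_sub_distrib, Finset.mul_sum]
      exact Finset.sum_congr rfl fun i _ => Finset.sum_congr rfl fun j _ => by ring
    have r1 : ∑ i, ∑ j, S i j * lam i ^ 2 = ∑ i, lam i ^ 2 := by
      refine Finset.sum_congr rfl fun i _ => ?_
      rw [← Finset.sum_mul, hSrow i, one_mul]
    have r2 : ∑ i, ∑ j, S i j * mu j ^ 2 = ∑ j, mu j ^ 2 := by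
      rw [Finset.sum_comm]
      refine Finset.sum_congr rfl fun j _ => ?_
      rw [← Finset.sum_mul, hScol j, one_mul]
    rw [lhs, rhs, hAA, hBB, hAB, r1, r2]
  obtain ⟨σ, hσ⟩ := perm_min_step S hS (fun i j => (lam i - mu j) ^ 2)
  exact ⟨σ, by rw [htotal]; exact hσ⟩

/-- For a Lipschitz `g : ℝ → ℝ`, the map `H ↦ (1/N) Σᵢ g(λᵢ(H))` on `N×N` real symmetric
matrices is Lipschitz with constant `Lip(g)/√N` with respect to the Frobenius norm. -/
theorem stmt16 (N : ℕ) (hN : 0 < N) (g : ℝ → ℝ) (L : NNReal) (hg : LipschitzWith L g)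
    (A B : Matrix (Fin N) (Fin N) ℝ) (hA : A.IsHermitian) (hB : B.IsHermitian) :
    |(1 / N : ℝ) * ∑ i, g (hA.eigenvalues i)
        - (1 / N : ℝ) * ∑ i, g (hB.eigenvalues i)| ≤
      ((L : ℝ) / Real.sqrt N) * Real.sqrt (∑ i, ∑ j, (A i j - B i j) ^ 2) := by
  obtain ⟨σ, hσ⟩ := hoffman_wielandt A B hA hB
  set lam := hA.eigenvalues
  set mu := hB.eigenvalues
  have hreindex : ∑ i, g (mu i) = ∑ i, g (mu (σ i)) :=
    (Equiv.sum_comp σ fun i => g (mu i)).symm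
  have sqrtN_pos : (0:ℝ) < Real.sqrt N := Real.sqrt_pos.mpr (by exact_mod_cast hN)
  have hT : (0:ℝ) ≤ ∑ i, ∑ j, (A i j - B i j) ^ 2 :=
    Finset.sum_nonneg fun i _ => Finset.sum_nonneg fun j _ => sq_nonneg _
  have step1 : |(1 / N : ℝ) * ∑ i, g (lam i) - (1 / N : ℝ) * ∑ i, g (mu i)|
      ≤ (1 / N : ℝ) * ∑ i, (L : ℝ) * |lam i - mu (σ i)| := by
    rw [hreindex, ← mul_sub, abs_mul, abs_of_nonneg (by positivity : (0:ℝ) ≤ (1/N:ℝ)),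
      ← Finset.sum_sub_distrib]
    refine mul_le_mul_of_nonneg_left ?_ (by positivity)
    refine (Finset.abs_sum_le_sum_abs _ _).trans (Finset.sum_le_sum fun i _ => ?_)
    have := hg.dist_le_mul (lam i) (mu (σ i))
    simpa [Real.dist_eq] using this
  have step2 : ∑ i, |lam i - mu (σ i)|
      ≤ Real.sqrt N * Real.sqrt (∑ i, (lam i - mu (σ i)) ^ 2) := by
    have h1 : (∑ i, |lam i - mu (σ i)|) ^ 2 ≤ (N : ℝ) * ∑ i, (lam i - mu (σ i)) ^ 2 := by
      have := sq_sum_le_card_mul_sum_sq (s := (Finset.univ : Finset (Fin N)))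
        (f := fun i => |lam i - mu (σ i)|)
      simpa [sq_abs] using this
    have h2 : ∑ i, |lam i - mu (σ i)| = Real.sqrt ((∑ i, |lam i - mu (σ i)|) ^ 2) :=
      (Real.sqrt_sq (Finset.sum_nonneg fun i _ => abs_nonneg _)).symm
    rw [h2, ← Real.sqrt_mul (by positivity) ]
    exact Real.sqrt_le_sqrt h1
  have step3 : Real.sqrt (∑ i, (lam i - mu (σ i)) ^ 2)
      ≤ Real.sqrt (∑ i, ∑ j, (A i j - B i j) ^ 2) := Real.sqrt_le_sqrt hσ
  calc |(1 / N : ℝ) * ∑ i, g (lam i) - (1 / N : ℝ) * ∑ i, g (mu i)|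
      ≤ (1 / N : ℝ) * ∑ i, (L : ℝ) * |lam i - mu (σ i)| := step1
    _ = (1 / N : ℝ) * ((L : ℝ) * ∑ i, |lam i - mu (σ i)|) := by rw [← Finset.mul_sum]
    _ ≤ (1 / N : ℝ) * ((L : ℝ) * (Real.sqrt N * Real.sqrt (∑ i, (lam i - mu (σ i)) ^ 2))) := by
        refine mul_le_mul_of_nonneg_left (mul_le_mul_of_nonneg_left step2 L.coe_nonneg)
          (by positivity)
    _ ≤ (1 / N : ℝ) * ((L : ℝ) * (Real.sqrt N * Real.sqrt (∑ i, ∑ j, (A i j - B i j) ^ 2))) := by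
        refine mul_le_mul_of_nonneg_left (mul_le_mul_of_nonneg_left
          (mul_le_mul_of_nonneg_left step3 sqrtN_pos.le) L.coe_nonneg) (by positivity)
    _ = ((L : ℝ) / Real.sqrt N) * Real.sqrt (∑ i, ∑ j, (A i j - B i j) ^ 2) := by
        have key : Real.sqrt N * Real.sqrt N = (N : ℝ) := Real.mul_self_sqrt (Nat.cast_nonneg N)
        have hNne : (N : ℝ) ≠ 0 := by positivity
        generalize Real.sqrt (∑ i, ∑ j, (A i j - B i j) ^ 2) = x
        field_simp
        linear_combination (↑L * x) * key
end

section
/- Let g : ℝ → ℝ be convex. Then the function H ↦ Σ_{i=1}^N g(λ_i(H)) on N×N real symmetric matrices is convex, where λ_1(H), …, λ_N(H) are the eigenvalues of H. -/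
open Matrix Finset

lemma herm_comb {N : ℕ} {x y : Matrix (Fin N) (Fin N) ℝ} (hx : x.IsHermitian)
    (hy : y.IsHermitian) (a b : ℝ) : (a • x + b • y).IsHermitian := by
  have hx' : xᴴ = x := hx
  have hy' : yᴴ = y := hy
  show (a • x + b • y)ᴴ = a • x + b • y
  rw [Matrix.conjTranspose_add, Matrix.conjTranspose_smul, Matrix.conjTranspose_smul, hx', hy']
  simp

lemma peierls (N : ℕ) (g : ℝ → ℝ) (hg : ConvexOn ℝ Set.univ g)
    (A : Matrix (Fin N) (Fin N) ℝ) (hA : A.IsHermitian)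
    (U : Matrix (Fin N) (Fin N) ℝ) (hU : U ∈ Matrix.unitaryGroup (Fin N) ℝ) :
    ∑ i, g ((star U * A * U) i i) ≤ ∑ j, g (hA.eigenvalues j) := by
  set W : Matrix (Fin N) (Fin N) ℝ := (hA.eigenvectorUnitary : Matrix (Fin N) (Fin N) ℝ) with hW
  have hWu : W ∈ Matrix.unitaryGroup (Fin N) ℝ := hA.eigenvectorUnitary.2
  set M := star U * W with hM
  set μ := hA.eigenvalues with hμ
  have hspec : A = W * Matrix.diagonal μ * star W := by
    have := hA.spectral_theorem
    simpa using this
  have key : star U * A * U = M * Matrix.diagonal μ * star M := by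
    rw [hspec, hM]
    simp only [Matrix.star_mul, star_star]
    noncomm_ring
  have hMu : M ∈ Matrix.unitaryGroup (Fin N) ℝ := mul_mem (Unitary.star_mem hU) hWu
  have hrow : ∀ i, ∑ j, (M i j)^2 = 1 := by
    intro i
    have h1 : M * star M = 1 := (Matrix.mem_unitaryGroup_iff).mp hMu
    have := congrFun (congrFun h1 i) i
    rw [Matrix.mul_apply] at this
    simpa [Matrix.star_apply, sq, Matrix.one_apply] using this
  have hcol : ∀ j, ∑ i, (M i j)^2 = 1 := by
    intro j
    have h1 : star M * M = 1 := (Matrix.mem_unitaryGroup_iff').mp hMu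
    have := congrFun (congrFun h1 j) j
    rw [Matrix.mul_apply] at this
    simpa [Matrix.star_apply, sq, Matrix.one_apply] using this
  have hdiag : ∀ i, (star U * A * U) i i = ∑ j, (M i j)^2 • μ j := by
    intro i
    rw [key, Matrix.mul_apply]
    congr 1; ext j
    rw [Matrix.mul_apply, Finset.sum_mul]
    rw [Finset.sum_eq_single j]
    · simp [Matrix.diagonal_apply_eq, Matrix.star_apply, sq]; ring
    · intro k _ hk; simp [Matrix.diagonal_apply_ne _ hk]
    · simp
  calc ∑ i, g ((star U * A * U) i i)
      ≤ ∑ i, ∑ j, (M i j)^2 * g (μ j) := by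
        apply Finset.sum_le_sum
        intro i _
        rw [hdiag i]
        exact hg.map_sum_le (fun j _ => sq_nonneg _) (hrow i) (fun j _ => Set.mem_univ _)
    _ = ∑ j, g (μ j) := by
        rw [Finset.sum_comm]
        refine Finset.sum_congr rfl fun j _ => ?_
        rw [← Finset.sum_mul, hcol, one_mul]

/-- Klein's lemma: for convex `g : ℝ → ℝ`, the function `H ↦ Σᵢ g(λᵢ(H))` is convex on
the set of `N×N` real symmetric matrices. -/
theorem stmt17 (N : ℕ) (g : ℝ → ℝ) (hg : ConvexOn ℝ Set.univ g) :
    ConvexOn ℝ {A : Matrix (Fin N) (Fin N) ℝ | A.IsHermitian}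
      (fun A => if h : A.IsHermitian then ∑ i, g (h.eigenvalues i) else 0) := by
  constructor
  · intro x hx y hy a b ha hb hab
    exact herm_comb hx hy a b
  · intro x hx y hy a b ha hb hab
    have hx' : x.IsHermitian := hx
    have hy' : y.IsHermitian := hy
    have hC : (a • x + b • y).IsHermitian := herm_comb hx' hy' a b
    simp only [dif_pos hx', dif_pos hy', dif_pos hC]
    set U : Matrix (Fin N) (Fin N) ℝ := (hC.eigenvectorUnitary : Matrix (Fin N) (Fin N) ℝ) with hU
    have hUu : U ∈ Matrix.unitaryGroup (Fin N) ℝ := hC.eigenvectorUnitary.2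
    have hdiag : ∀ i, hC.eigenvalues i = (star U * (a • x + b • y) * U) i i := by
      intro i
      have hspec : (a • x + b • y) = U * Matrix.diagonal hC.eigenvalues * star U := by
        have := hC.spectral_theorem
        simpa using this
      have h3 : star U * U = 1 := (Matrix.mem_unitaryGroup_iff').mp hUu
      have h2 : star U * (a • x + b • y) * U = Matrix.diagonal hC.eigenvalues := by
        conv_lhs => rw [hspec]
        calc star U * (U * Matrix.diagonal hC.eigenvalues * star U) * U
            = (star U * U) * Matrix.diagonal hC.eigenvalues * (star U * U) := by noncomm_ring
          _ = Matrix.diagonal hC.eigenvalues := by rw [h3]; simp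
      rw [h2, Matrix.diagonal_apply_eq]
    calc ∑ i, g (hC.eigenvalues i)
        ≤ ∑ i, (a * g ((star U * x * U) i i) + b * g ((star U * y * U) i i)) := by
          apply Finset.sum_le_sum
          intro i _
          rw [hdiag i]
          have heq : (star U * (a • x + b • y) * U) i i
              = a • ((star U * x * U) i i) + b • ((star U * y * U) i i) := by
            simp [Matrix.mul_add, Matrix.add_mul, Matrix.mul_smul, Matrix.smul_mul,
              Matrix.add_apply, Matrix.smul_apply]
          rw [heq]
          exact hg.2 (Set.mem_univ _) (Set.mem_univ _) ha hb hab
      _ = a * ∑ i, g ((star U * x * U) i i) + b * ∑ i, g ((star U * y * U) i i) := by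
          rw [Finset.sum_add_distrib, Finset.mul_sum, Finset.mul_sum]
      _ ≤ a * ∑ i, g (hx'.eigenvalues i) + b * ∑ i, g (hy'.eigenvalues i) := by
          refine add_le_add ?_ ?_
          · exact mul_le_mul_of_nonneg_left (peierls N g hg x hx' U hUu) ha
          · exact mul_le_mul_of_nonneg_left (peierls N g hg y hy' U hUu) hb
      _ = a • ∑ i, g (hx'.eigenvalues i) + b • ∑ i, g (hy'.eigenvalues i) := by simp
end
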